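/- arXiv:2207.13335 — 12 statements merged into one kernel-verified Lean document; each statement's English description precedes it below -/
import Mathlib

section
/- Let m be an even positive integer, s an integer, and U = {x ∈ F_{2^{2m}} : x^{2^m+1} = 1}. Then for every x ∈ U, x^{2s} + x^s + 1 ≠ 0. -/
theorem stmt_1 (m : ℕ) (hm : 0 < m) (hme : Even m) (s : ℤ)
    (x : GaloisField 2 (2 * m)) (hx : x ^ (2 ^ m + 1) = 1) :
    x ^ (2 * s) + x ^ s + 1 ≠ 0 := by
  intro h
  have hx0 : x ≠ 0 := by
    intro h0
    rw [h0, zero_pow (by positivity)] at hx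
    exact zero_ne_one hx
  set y := x ^ s with hy
  have hy2 : y * y + y + 1 = 0 := by
    have hxx : x ^ (2 * s) = y * y := by rw [hy, ← zpow_add₀ hx0, two_mul s]
    rw [hxx] at h; exact h
  have hy3 : y ^ 3 = 1 := by linear_combination (y - 1) * hy2
  have hyu : y ^ (2 ^ m + 1) = 1 := by
    rw [hy, ← zpow_natCast (x ^ s), ← zpow_mul, mul_comm s ((2 ^ m + 1 : ℕ) : ℤ), zpow_mul, zpow_natCast, hx, one_zpow]
  have h3 : ¬ ((3 : ℕ) ∣ 2 ^ m + 1) := by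
    obtain ⟨k, hk⟩ := hme
    intro hd
    have h4 : 2 ^ m % 3 = 1 := by
      rw [hk, pow_add, ← mul_pow]
      norm_num [Nat.pow_mod]
    omega
  have hcop : Nat.Coprime 3 (2 ^ m + 1) :=
    (Nat.Prime.coprime_iff_not_dvd (by norm_num)).mpr h3
  have hdvd : orderOf y ∣ Nat.gcd 3 (2 ^ m + 1) :=
    Nat.dvd_gcd (orderOf_dvd_of_pow_eq_one hy3) (orderOf_dvd_of_pow_eq_one hyu)
  rw [Nat.Coprime] at hcop
  rw [hcop, Nat.dvd_one, orderOf_eq_one_iff] at hdvd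
  rw [hdvd] at hy2
  have h2 : (2 : GaloisField 2 (2 * m)) = 0 := by
    exact_mod_cast CharP.cast_eq_zero (GaloisField 2 (2 * m)) 2
  have : (1 : GaloisField 2 (2 * m)) = 0 := by linear_combination hy2 - h2
  exact one_ne_zero this
end

section
/- Let q be a prime power, and let d, r be positive integers with d dividing q-1. Let h be a polynomial over F_q. Then f(x) = x^r · h(x^{(q-1)/d}) is a permutation of F_q if and only if gcd(r, (q-1)/d) = 1 and the map x ↦ x^r · h(x)^{(q-1)/d} permutes the set μ_d = {x ∈ F_q : x^d = 1}. -/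
open Set

private lemma aux_surj_pow {F : Type*} [Field F] [Fintype F] [DecidableEq F] {n d s : ℕ}
    (hcard : Fintype.card Fˣ = n) (hds : d * s = n) (hd : 0 < d)
    {u : F} (hu : u ^ d = 1) : ∃ x : F, x ≠ 0 ∧ x ^ s = u := by
  have hu0 : u ≠ 0 := by
    intro h0; rw [h0, zero_pow hd.ne'] at hu; exact zero_ne_one hu
  obtain ⟨g, hg⟩ := IsCyclic.exists_generator (α := Fˣ)
  have hog : orderOf g = n := by
    rw [← hcard, Fintype.card_eq_nat_card]; exact orderOf_eq_card_of_forall_mem_zpowers hg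
  set U : Fˣ := Units.mk0 u hu0 with hU
  obtain ⟨k, hk0⟩ : U ∈ Submonoid.powers g := mem_powers_iff_mem_zpowers.mpr (hg U)
  have hk : g ^ k = U := hk0
  have hUd : U ^ d = 1 := by
    ext; push_cast [hU]; exact hu
  have hdvd : n ∣ k * d := by
    rw [← hog]
    apply orderOf_dvd_of_pow_eq_one
    rw [pow_mul, hk, hUd]
  have hsk : s ∣ k := by
    have : d * s ∣ d * k := by
      rw [hds]; rwa [mul_comm k d] at hdvd
    exact (mul_dvd_mul_iff_left hd.ne').mp this
  refine ⟨(g ^ (k / s) : Fˣ), Units.ne_zero _, ?_⟩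
  have hpow : (g ^ (k / s)) ^ s = U := by
    rw [← pow_mul, Nat.div_mul_cancel hsk, hk]
  calc ((g ^ (k / s) : Fˣ) : F) ^ s = (((g ^ (k / s)) ^ s : Fˣ) : F) := by push_cast; ring
    _ = u := by rw [hpow]; rfl

private lemma aux_eq_of_pows {F : Type*} [Field F] {r s : ℕ} (hgcd : Nat.gcd r s = 1)
    {x y : F} (hx : x ≠ 0) (hy : y ≠ 0) (hxr : x ^ r = y ^ r) (hxs : x ^ s = y ^ s) :
    x = y := by
  set A := Nat.gcdA r s
  set B := Nat.gcdB r s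
  have hbez : (1 : ℤ) = r * A + s * B := by
    have := Nat.gcd_eq_gcd_ab r s
    rw [hgcd] at this; exact_mod_cast this
  have key : ∀ z : F, z ≠ 0 → z = (z ^ r) ^ A * (z ^ s) ^ B := by
    intro z hz
    calc z = z ^ (1 : ℤ) := (zpow_one z).symm
      _ = z ^ ((r : ℤ) * A + s * B) := by rw [← hbez]
      _ = (z ^ r) ^ A * (z ^ s) ^ B := by
          rw [zpow_add₀ hz, zpow_mul, zpow_mul, zpow_natCast, zpow_natCast]
  rw [key x hx, key y hy, hxr, hxs]

private lemma aux_root {F : Type*} [Field F] {r s : ℕ} (hgcd : Nat.gcd r s = 1)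
    {ω : F} (hω : ω ≠ 0) (hωs : ω ^ s = 1) : ∃ ζ : F, ζ ^ s = 1 ∧ ζ ^ r = ω := by
  set A := Nat.gcdA r s
  set B := Nat.gcdB r s
  have hbez : (1 : ℤ) = r * A + s * B := by
    have := Nat.gcd_eq_gcd_ab r s
    rw [hgcd] at this; exact_mod_cast this
  refine ⟨ω ^ A, ?_, ?_⟩
  · rw [← zpow_natCast (ω ^ A) s, ← zpow_mul, mul_comm A (s : ℤ), zpow_mul, zpow_natCast,
      hωs, one_zpow]
  · have hh : A * (r : ℤ) = 1 - s * B := by linarith [hbez]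
    rw [← zpow_natCast (ω ^ A) r, ← zpow_mul, hh, zpow_sub₀ hω, zpow_one, zpow_mul,
      zpow_natCast, hωs, one_zpow, div_one]

theorem stmt_3 (F : Type*) [Field F] [Fintype F] (q : ℕ) (hq : Fintype.card F = q)
    (d r : ℕ) (hd : 0 < d) (hr : 0 < r) (hdvd : d ∣ q - 1) (h : Polynomial F) :
    Function.Bijective (fun x : F => x ^ r * h.eval (x ^ ((q - 1) / d))) ↔
      (Nat.gcd r ((q - 1) / d) = 1 ∧
        Set.BijOn (fun x : F => x ^ r * (h.eval x) ^ ((q - 1) / d))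
          {x : F | x ^ d = 1} {x : F | x ^ d = 1}) := by
  classical
  set s := (q - 1) / d with hs_def
  set f : F → F := fun x => x ^ r * h.eval (x ^ s) with hf_def
  set g : F → F := fun x => x ^ r * (h.eval x) ^ s with hg_def
  set μ : Set F := {x : F | x ^ d = 1} with hμ_def
  have hq2 : 2 ≤ q := by rw [← hq]; exact Fintype.one_lt_card
  have hn : 0 < q - 1 := by omega
  have hds : d * s = q - 1 := Nat.mul_div_cancel' hdvd
  have hs : 0 < s := Nat.div_pos (Nat.le_of_dvd hn hdvd) hd
  have hcardU : Fintype.card Fˣ = q - 1 := by rw [Fintype.card_units, hq]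
  have hfermat : ∀ x : F, x ≠ 0 → x ^ (q - 1) = 1 := by
    intro x hx
    have := FiniteField.pow_card_sub_one_eq_one x hx
    rwa [hq] at this
  have hmem : ∀ x : F, x ≠ 0 → x ^ s ∈ μ := by
    intro x hx
    show (x ^ s) ^ d = 1
    rw [← pow_mul, mul_comm, hds]; exact hfermat x hx
  have h0μ : (0 : F) ∉ μ := by
    simp only [hμ_def, mem_setOf_eq, zero_pow hd.ne']
    exact zero_ne_one
  have hf0 : f 0 = 0 := by simp [hf_def, zero_pow hr.ne']
  have hfg : ∀ x : F, (f x) ^ s = g (x ^ s) := by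
    intro x
    simp only [hf_def, hg_def]
    rw [mul_pow, ← pow_mul, mul_comm r s, pow_mul]
  constructor
  · rintro hf
    have hfinj := hf.injective
    -- gcd r s = 1
    have hgcd : Nat.gcd r s = 1 := by
      by_contra hne
      set e := Nat.gcd r s with he_def
      have he0 : e ≠ 0 := fun h0 => hs.ne' (Nat.eq_zero_of_gcd_eq_zero_right h0)
      have he1 : 1 < e := by omega
      obtain ⟨r', hr'⟩ := Nat.gcd_dvd_left r s
      obtain ⟨s', hs'⟩ := Nat.gcd_dvd_right r s
      have hen : e ∣ q - 1 := (Nat.gcd_dvd_right r s).trans ⟨d, by rw [← hds]; ring⟩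
      obtain ⟨G, hG⟩ := IsCyclic.exists_generator (α := Fˣ)
      have hog : orderOf G = q - 1 := by
        rw [← hcardU, Fintype.card_eq_nat_card]; exact orderOf_eq_card_of_forall_mem_zpowers hG
      set ζ : Fˣ := G ^ ((q - 1) / e) with hζ
      have hGn : G ^ (q - 1) = 1 := by rw [← hog]; exact pow_orderOf_eq_one G
      have hζr : ζ ^ r = 1 := by
        rw [hζ, ← pow_mul, hr', ← mul_assoc, Nat.div_mul_cancel hen, pow_mul, hGn, one_pow]
      have hζs : ζ ^ s = 1 := by
        rw [hζ, ← pow_mul, hs', ← mul_assoc, Nat.div_mul_cancel hen, pow_mul, hGn, one_pow]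
      have hζ1 : ζ ≠ 1 := by
        intro h1
        have : orderOf G ∣ (q - 1) / e := orderOf_dvd_of_pow_eq_one h1
        rw [hog] at this
        have hlt : (q - 1) / e < q - 1 := Nat.div_lt_self hn he1
        have hpos : 0 < (q - 1) / e := Nat.div_pos (Nat.le_of_dvd hn hen) (by omega)
        have := Nat.le_of_dvd hpos this
        omega
      have hcr : ((ζ : F)) ^ r = 1 := by
        have := congrArg (Units.val) hζr; push_cast at this; exact_mod_cast this
      have hcs : ((ζ : F)) ^ s = 1 := by
        have := congrArg (Units.val) hζs; push_cast at this; exact_mod_cast this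
      have : f (ζ : F) = f 1 := by
        simp only [hf_def, hcr, hcs, one_pow, one_mul]
      have := hfinj this
      exact hζ1 (Units.ext (by simpa using this))
    refine ⟨hgcd, ?_⟩
    -- h.eval u ≠ 0 on μ
    have hhne : ∀ u ∈ μ, h.eval u ≠ 0 := by
      intro u hu heval
      obtain ⟨x, hx0, hxs⟩ := aux_surj_pow hcardU hds hd hu
      have : f x = f 0 := by
        rw [hf0]; simp only [hf_def, hxs, heval, mul_zero]
      exact hx0 (hfinj this)
    have hmaps : MapsTo g μ μ := by
      intro u hu
      show g u ^ d = 1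
      have hu' : u ^ d = 1 := hu
      simp only [hg_def]
      rw [mul_pow, ← pow_mul, ← pow_mul, mul_comm r d, pow_mul, hu', one_pow, one_mul,
        mul_comm s d, hds]
      exact hfermat _ (hhne u hu)
    have hinjOn : InjOn g μ := by
      intro u hu v hv huv
      obtain ⟨x, hx0, hxs⟩ := aux_surj_pow hcardU hds hd hu
      obtain ⟨y, hy0, hys⟩ := aux_surj_pow hcardU hds hd hv
      have hfx : f x ≠ 0 := by
        simp only [hf_def, hxs]
        exact mul_ne_zero (pow_ne_zero r hx0) (hhne u hu)
      have hfy : f y ≠ 0 := by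
        simp only [hf_def, hys]
        exact mul_ne_zero (pow_ne_zero r hy0) (hhne v hv)
      have hss : (f x) ^ s = (f y) ^ s := by
        rw [hfg, hfg, hxs, hys, huv]
      set ω : F := f x / f y with hω_def
      have hω0 : ω ≠ 0 := div_ne_zero hfx hfy
      have hωs : ω ^ s = 1 := by
        rw [hω_def, div_pow, hss, div_self (pow_ne_zero s hfy)]
      obtain ⟨ζ, hζs, hζr⟩ := aux_root hgcd hω0 hωs
      have hζ0 : ζ ≠ 0 := by
        intro h0; rw [h0, zero_pow hs.ne'] at hζs; exact zero_ne_one hζs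
      have hkey : f (ζ * y) = f x := by
        simp only [hf_def]
        rw [mul_pow, mul_pow, hζs, one_mul, hζr, hω_def]
        field_simp
        ring
      have := hfinj hkey
      rw [← hxs, ← hys, ← this, mul_pow, hζs, one_mul]
    exact (Set.Finite.injOn_iff_bijOn_of_mapsTo (Set.toFinite μ) hmaps).mp hinjOn
  · rintro ⟨hgcd, hbij⟩
    rw [Finite.injective_iff_bijective.symm]
    intro x y hxy
    have hne0 : ∀ z : F, z ≠ 0 → f z ≠ 0 := by
      intro z hz hfz
      have heval : h.eval (z ^ s) = 0 := by
        rcases mul_eq_zero.mp hfz with h1 | h1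
        · exact absurd h1 (pow_ne_zero r hz)
        · exact h1
      have : g (z ^ s) ∈ μ := hbij.mapsTo (hmem z hz)
      rw [hg_def] at this
      simp only [heval, zero_pow hs.ne', mul_zero] at this
      exact h0μ this
    by_cases hx0 : x = 0
    · subst hx0
      by_contra hy0
      have hy0' : y ≠ 0 := fun h0 => hy0 h0.symm
      exact hne0 y hy0' (by rw [← hxy]; exact hf0)
    · by_cases hy0 : y = 0
      · subst hy0
        exact absurd (hxy.trans hf0) (hne0 x hx0)
      · have hgs : g (x ^ s) = g (y ^ s) := by
          rw [← hfg, ← hfg, hxy]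
        have hxys : x ^ s = y ^ s := hbij.injOn (hmem x hx0) (hmem y hy0) hgs
        have hhe : h.eval (x ^ s) ≠ 0 := by
          intro h0
          apply hne0 x hx0
          simp only [hf_def, h0, mul_zero]
        have hxr : x ^ r = y ^ r := by
          have h2 := hxy
          simp only [hf_def] at h2
          rw [← hxys] at h2
          exact mul_right_cancel₀ hhe h2
        exact aux_eq_of_pows hgcd hx0 hy0 hxr hxys
end

section
/- Let m be a positive integer and k a positive integer with gcd(2^k - 1, 2^m + 1) = 1. Let U = {x ∈ F_{2^{2m}} : x^{2^m+1} = 1}. For x ∈ U, the denominator x^{2^k+1} + x + 1 is nonzero, and the map x ↦ (x^{2^k+1} + x^{2^k} + 1)/(x^{2^k+1} + x + 1) is a bijection from U to U. -/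
theorem stmt_4 (m k : ℕ) (hm : 0 < m) (hk : 0 < k)
    (hgcd : Nat.gcd (2 ^ k - 1) (2 ^ m + 1) = 1) :
    (∀ x : GaloisField 2 (2 * m), x ^ (2 ^ m + 1) = 1 →
        x ^ (2 ^ k + 1) + x + 1 ≠ 0) ∧
      Set.BijOn
        (fun x : GaloisField 2 (2 * m) =>
          (x ^ (2 ^ k + 1) + x ^ (2 ^ k) + 1) / (x ^ (2 ^ k + 1) + x + 1))
        {x : GaloisField 2 (2 * m) | x ^ (2 ^ m + 1) = 1}
        {x : GaloisField 2 (2 * m) | x ^ (2 ^ m + 1) = 1} := by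
  classical
  set G := GaloisField 2 (2 * m) with hG
  have h2m : 2 * m ≠ 0 := by omega
  haveI : Fintype G := Fintype.ofFinite G
  have hcard : Fintype.card G = 2 ^ (2 * m) := by
    rw [← Nat.card_eq_fintype_card]
    exact GaloisField.card 2 (2 * m) h2m
  have hpc : ∀ a : G, a ^ (2 ^ (2 * m)) = a := fun a => by
    rw [← hcard]; exact FiniteField.pow_card a
  have htwo : (2 : G) = 0 := CharTwo.two_eq_zero
  have hmm : 2 ^ m * 2 ^ m = 2 ^ (2 * m) := by rw [two_mul, pow_add]
  -- Part 1: denominator nonzero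
  have hDne : ∀ x : G, x ^ (2 ^ m + 1) = 1 → x ^ (2 ^ k + 1) + x + 1 ≠ 0 := by
    intro x hx hD
    have hx0 : x ≠ 0 := by
      rintro rfl
      rw [zero_pow (by positivity)] at hx
      exact zero_ne_one hx
    have hxx : x ^ (2 ^ m) * x = 1 := by rw [← pow_succ]; exact hx
    rw [pow_succ] at hD
    have he : (x ^ (2 ^ k) * x + x + 1) ^ (2 ^ m)
        = (x ^ (2 ^ m)) ^ (2 ^ k) * x ^ (2 ^ m) + x ^ (2 ^ m) + 1 := by
      rw [add_pow_char_pow, add_pow_char_pow, one_pow, mul_pow, pow_right_comm]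
    have hD2 : (x ^ (2 ^ m)) ^ (2 ^ k) * x ^ (2 ^ m) + x ^ (2 ^ m) + 1 = 0 := by
      rw [← he, hD, zero_pow (by positivity)]
    have hq1 : (x ^ (2 ^ m)) ^ (2 ^ k) * x ^ (2 ^ k) * (x ^ (2 ^ m) * x) = 1 := by
      rw [← mul_pow, hxx, one_pow, one_mul]
    have hxq : x ^ (2 ^ k) = x := by
      generalize hC : (x ^ (2 ^ m)) ^ (2 ^ k) = C at hD2 hq1
      generalize hB : x ^ (2 ^ m) = B at hD2 hq1 hxx
      generalize hA : x ^ (2 ^ k) = A at hD hq1 ⊢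
      linear_combination (A * x) * hD2 - hq1 - A * hxx - hD
    have hxq1 : x ^ (2 ^ k - 1) = 1 := by
      have h1 : x ^ (2 ^ k - 1) * x = 1 * x := by
        rw [← pow_succ, Nat.sub_add_cancel Nat.one_le_two_pow, hxq, one_mul]
      exact mul_right_cancel₀ hx0 h1
    have ho1 : orderOf x ∣ 2 ^ k - 1 := orderOf_dvd_of_pow_eq_one hxq1
    have ho2 : orderOf x ∣ 2 ^ m + 1 := orderOf_dvd_of_pow_eq_one hx
    have hd1 : orderOf x ∣ 1 := hgcd ▸ Nat.dvd_gcd ho1 ho2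
    have hx1 : x = 1 := orderOf_eq_one_iff.mp (Nat.dvd_one.mp hd1)
    rw [hx1, one_pow, one_mul] at hD
    have h11 : (1 : G) + 1 = 0 := CharTwo.add_self_eq_zero 1
    rw [h11, zero_add] at hD
    exact one_ne_zero hD
  -- MapsTo
  have hmaps : ∀ x : G, x ^ (2 ^ m + 1) = 1 →
      ((x ^ (2 ^ k + 1) + x ^ (2 ^ k) + 1) / (x ^ (2 ^ k + 1) + x + 1)) ^ (2 ^ m + 1) = 1 := by
    intro x hx
    have hD0 := hDne x hx
    have hxx : x ^ (2 ^ m) * x = 1 := by rw [← pow_succ]; exact hx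
    have hq1 : (x ^ (2 ^ m)) ^ (2 ^ k) * x ^ (2 ^ k) * (x ^ (2 ^ m) * x) = 1 := by
      rw [← mul_pow, hxx, one_pow, one_mul]
    have hDn : (x ^ (2 ^ k + 1) + x + 1) ^ (2 ^ m)
        = (x ^ (2 ^ m)) ^ (2 ^ k) * x ^ (2 ^ m) + x ^ (2 ^ m) + 1 := by
      rw [pow_succ, add_pow_char_pow, add_pow_char_pow, one_pow, mul_pow, pow_right_comm]
    have key1 : x ^ (2 ^ k + 1) + x ^ (2 ^ k) + 1
        = x ^ (2 ^ k + 1) * ((x ^ (2 ^ k + 1) + x + 1) ^ (2 ^ m)) := by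
      rw [hDn, pow_succ]
      generalize hC : (x ^ (2 ^ m)) ^ (2 ^ k) = C at hq1 ⊢
      generalize hB : x ^ (2 ^ m) = B at hq1 hxx ⊢
      generalize hA : x ^ (2 ^ k) = A at hq1 ⊢
      linear_combination - hq1 - A * hxx
    have e2 : (x ^ (2 ^ k + 1)) ^ (2 ^ m + 1) = 1 := by
      rw [← pow_mul, mul_comm (2 ^ k + 1) (2 ^ m + 1), pow_mul, hx, one_pow]
    have e1 : ((x ^ (2 ^ k + 1) + x + 1) ^ (2 ^ m)) ^ (2 ^ m + 1)
        = (x ^ (2 ^ k + 1) + x + 1) ^ (2 ^ m + 1) := by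
      rw [pow_succ, ← pow_mul, hmm, hpc, ← pow_succ']
    have key2 : (x ^ (2 ^ k + 1) + x ^ (2 ^ k) + 1) ^ (2 ^ m + 1)
        = (x ^ (2 ^ k + 1) + x + 1) ^ (2 ^ m + 1) := by
      rw [key1, mul_pow, e2, one_mul, e1]
    rw [div_pow, key2, div_self (pow_ne_zero _ hD0)]
  -- InjOn
  have hinj : ∀ x : G, x ^ (2 ^ m + 1) = 1 → ∀ y : G, y ^ (2 ^ m + 1) = 1 →
      (x ^ (2 ^ k + 1) + x ^ (2 ^ k) + 1) / (x ^ (2 ^ k + 1) + x + 1)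
        = (y ^ (2 ^ k + 1) + y ^ (2 ^ k) + 1) / (y ^ (2 ^ k + 1) + y + 1) → x = y := by
    intro x hx y hy hfxy
    have hDx := hDne x hx
    have hDy := hDne y hy
    have hx0 : x ≠ 0 := by
      rintro rfl; rw [zero_pow (by positivity)] at hx; exact zero_ne_one hx
    have hy0 : y ≠ 0 := by
      rintro rfl; rw [zero_pow (by positivity)] at hy; exact zero_ne_one hy
    have hcross : (x ^ (2 ^ k + 1) + x ^ (2 ^ k) + 1) * (y ^ (2 ^ k + 1) + y + 1)
        = (y ^ (2 ^ k + 1) + y ^ (2 ^ k) + 1) * (x ^ (2 ^ k + 1) + x + 1) :=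
      (div_eq_div_iff hDx hDy).mp hfxy
    rw [pow_succ x (2 ^ k), pow_succ y (2 ^ k)] at hcross
    have hxx : x ^ (2 ^ m) * x = 1 := by rw [← pow_succ]; exact hx
    have hyy : y ^ (2 ^ m) * y = 1 := by rw [← pow_succ]; exact hy
    have hyq : (y ^ (2 ^ m)) ^ (2 ^ k) * y ^ (2 ^ k) = 1 := by
      rw [← mul_pow, hyy, one_pow]
    have hζq : (y ^ (2 ^ m) + x + 1) ^ (2 ^ k)
        = (y ^ (2 ^ m)) ^ (2 ^ k) + x ^ (2 ^ k) + 1 := by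
      rw [add_pow_char_pow, add_pow_char_pow, one_pow]
    have hσq : (x + y) ^ (2 ^ k) = x ^ (2 ^ k) + y ^ (2 ^ k) := by
      rw [add_pow_char_pow]
    have hynn : (y ^ (2 ^ m)) ^ (2 ^ m) = y := by
      rw [← pow_mul, hmm]; exact hpc y
    have hζn : (y ^ (2 ^ m) + x + 1) ^ (2 ^ m) = y + x ^ (2 ^ m) + 1 := by
      rw [add_pow_char_pow, add_pow_char_pow, one_pow, hynn]
    have hσn : (x + y) ^ (2 ^ m) = x ^ (2 ^ m) + y ^ (2 ^ m) := by
      rw [add_pow_char_pow]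
    have Step1 : (x + y) * (y ^ (2 ^ k) * ((y ^ (2 ^ m)) ^ (2 ^ k) + x ^ (2 ^ k) + 1))
        = (x ^ (2 ^ k) + y ^ (2 ^ k)) * (y * (y ^ (2 ^ m) + x + 1)) := by
      generalize hC : (y ^ (2 ^ m)) ^ (2 ^ k) = C at hyq ⊢
      generalize hYn : y ^ (2 ^ m) = Yn at hyy ⊢
      generalize hA : x ^ (2 ^ k) = A at hcross ⊢
      generalize hB : y ^ (2 ^ k) = B at hcross hyq ⊢
      linear_combination hcross + (x + y) * hyq + (A + B) * hyy
        + (B - y * B * Yn - A * y - A * (y * Yn) + x + x * B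
          + x * A * B - x * A * y) * htwo
    have Step2 : x * (y + x ^ (2 ^ m) + 1) + y * (y ^ (2 ^ m) + x + 1) = x + y := by
      generalize hXn : x ^ (2 ^ m) = Xn at hxx ⊢
      generalize hYn : y ^ (2 ^ m) = Yn at hyy ⊢
      linear_combination hxx + hyy + (x * y + 1) * htwo
    by_cases hζ : y ^ (2 ^ m) + x + 1 = 0
    · have hξ : y + x ^ (2 ^ m) + 1 = 0 := by
        rw [← hζn, hζ, zero_pow (by positivity)]
      have h := Step2
      rw [hζ, hξ, mul_zero, mul_zero, add_zero] at h
      linear_combination h.symm - y * htwo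
    · by_cases hσ0 : x + y = 0
      · linear_combination hσ0 - y * htwo
      · exfalso
        have hden : y * (y ^ (2 ^ m) + x + 1) ≠ 0 := mul_ne_zero hy0 hζ
        have ht0 : (x + y) / (y * (y ^ (2 ^ m) + x + 1)) ≠ 0 := div_ne_zero hσ0 hden
        set t := (x + y) / (y * (y ^ (2 ^ m) + x + 1)) with ht
        have hdenq : y ^ (2 ^ k) * ((y ^ (2 ^ m)) ^ (2 ^ k) + x ^ (2 ^ k) + 1) ≠ 0 := by
          have hz : (y ^ (2 ^ m) + x + 1) ^ (2 ^ k) ≠ 0 := pow_ne_zero _ hζ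
          rw [hζq] at hz
          exact mul_ne_zero (pow_ne_zero _ hy0) hz
        have htq : t ^ (2 ^ k) = t := by
          rw [ht, div_pow, mul_pow, hζq, hσq, div_eq_div_iff hdenq hden]
          exact Step1.symm
        have htq1 : t ^ (2 ^ k - 1) = 1 := by
          have h1 : t ^ (2 ^ k - 1) * t = 1 * t := by
            rw [← pow_succ, Nat.sub_add_cancel Nat.one_le_two_pow, htq, one_mul]
          exact mul_right_cancel₀ ht0 h1
        have htc : t ^ (2 ^ (2 * m) - 1) = 1 := by
          have h1 : t ^ (2 ^ (2 * m) - 1) * t = 1 * t := by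
            rw [← pow_succ, Nat.sub_add_cancel Nat.one_le_two_pow, hpc t, one_mul]
          exact mul_right_cancel₀ ht0 h1
        have ho1 : orderOf t ∣ 2 ^ k - 1 := orderOf_dvd_of_pow_eq_one htq1
        have ho2 : orderOf t ∣ 2 ^ (2 * m) - 1 := orderOf_dvd_of_pow_eq_one htc
        have hfact : 2 ^ (2 * m) - 1 = (2 ^ m - 1) * (2 ^ m + 1) := by
          have h1 : 1 ≤ 2 ^ m := Nat.one_le_two_pow
          have h2 : 1 ≤ 2 ^ m * 2 ^ m := Nat.mul_le_mul h1 h1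
          rw [two_mul, pow_add]
          zify [h1, h2]
          ring
        have hcop : Nat.Coprime (orderOf t) (2 ^ m + 1) :=
          Nat.Coprime.coprime_dvd_left ho1 hgcd
        have hom : orderOf t ∣ 2 ^ m - 1 :=
          hcop.dvd_of_dvd_mul_right (by rwa [hfact] at ho2)
        have htm : t ^ (2 ^ m) = t := by
          have h1 : t ^ (2 ^ m - 1) = 1 := orderOf_dvd_iff_pow_eq_one.mp hom
          conv_lhs => rw [← Nat.sub_add_cancel (Nat.one_le_two_pow : 1 ≤ 2 ^ m)]
          rw [pow_succ, h1, one_mul]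
        have hdenn : y ^ (2 ^ m) * (y + x ^ (2 ^ m) + 1) ≠ 0 := by
          have hz : (y ^ (2 ^ m) + x + 1) ^ (2 ^ m) ≠ 0 := pow_ne_zero _ hζ
          rw [hζn] at hz
          exact mul_ne_zero (pow_ne_zero _ hy0) hz
        have E3 : (x ^ (2 ^ m) + y ^ (2 ^ m)) * (y * (y ^ (2 ^ m) + x + 1))
            = (x + y) * (y ^ (2 ^ m) * (y + x ^ (2 ^ m) + 1)) := by
          have h1 := htm
          rw [ht, div_pow, mul_pow, hζn, hσn] at h1
          exact (div_eq_div_iff hdenn hden).mp h1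
        have final : (x + y) * (x + y) * y ^ (2 ^ m) = 0 := by
          generalize hXn : x ^ (2 ^ m) = Xn at E3 Step2 hxx
          generalize hYn : y ^ (2 ^ m) = Yn at E3 Step2 hyy ⊢
          linear_combination (-x) * E3 - ((x + y) * Yn) * Step2
            + (y + y * Yn + x * y) * hxx
            + (2 + y + y * Yn + 2 * x + 2 * (x * Yn) + x * y + 2 * (x * x)) * hyy
            + (1 + y + x + x * Yn + x * y + x * x) * htwo
        exact mul_ne_zero (mul_ne_zero hσ0 hσ0) (pow_ne_zero _ hy0) final
  refine ⟨hDne, ?_⟩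
  have hfin : ({x : G | x ^ (2 ^ m + 1) = 1}).Finite := Set.toFinite _
  have hmapsTo : Set.MapsTo
      (fun x : G => (x ^ (2 ^ k + 1) + x ^ (2 ^ k) + 1) / (x ^ (2 ^ k + 1) + x + 1))
      {x : G | x ^ (2 ^ m + 1) = 1} {x : G | x ^ (2 ^ m + 1) = 1} := by
    intro x hx
    simp only [Set.mem_setOf_eq] at hx ⊢
    exact hmaps x hx
  refine (hfin.injOn_iff_bijOn_of_mapsTo hmapsTo).mp ?_
  intro x hx y hy h
  simp only [Set.mem_setOf_eq] at hx hy
  exact hinj x hx y hy h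
end

section
/- Let m be a positive integer and k a positive integer with gcd(2^k + 1, 2^m + 1) = 1. Let U = {x ∈ F_{2^{2m}} : x^{2^m+1} = 1}. For x ∈ U, the denominator x^{2^k} + x + 1 is nonzero, and the map x ↦ (x^{2^k+1} + x^{2^k} + x)/(x^{2^k} + x + 1) is a bijection from U to U. -/
open Finset

section Aux
variable {F : Type*} [Field F] [CharP F 2]

private lemma two_eq_zeroF : (2 : F) = 0 := by
  have := CharP.cast_eq_zero F 2
  exact_mod_cast this

private lemma teleF (z : F) (n : ℕ) :
    ∑ j ∈ Finset.range n, (z * z + z) ^ (2 ^ j) = z ^ (2 ^ n) + z := by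
  induction n with
  | zero => simp [CharTwo.add_self_eq_zero]
  | succ n ih =>
    rw [Finset.sum_range_succ, ih, add_pow_char_pow, mul_pow, pow_succ, pow_mul]
    linear_combination (z ^ (2 ^ n)) * (two_eq_zeroF (F := F))

private lemma sum_shiftF (h : ℕ → F) (M : ℕ) (hper : ∀ j, h (j + M) = h j) :
    ∀ t, ∑ j ∈ Finset.range M, h (j + t) = ∑ j ∈ Finset.range M, h j := by
  intro t
  induction t with
  | zero => simp
  | succ t ih =>
    have e1 := Finset.sum_range_succ' (fun j => h (j + t)) M
    have e2 := Finset.sum_range_succ (fun j => h (j + t)) M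
    have e3 : h (M + t) = h (0 + t) := by
      rw [Nat.zero_add, Nat.add_comm M t, hper t]
    have e4 : ∑ j ∈ Finset.range M, h (j + 1 + t) = ∑ j ∈ Finset.range M, h (j + t) := by
      have e5 := e1.symm.trans e2
      simp only [e3] at e5
      exact add_right_cancel e5
    calc ∑ j ∈ Finset.range M, h (j + (t + 1))
        = ∑ j ∈ Finset.range M, h (j + 1 + t) := by
          apply Finset.sum_congr rfl; intro j _; congr 1; omega
      _ = ∑ j ∈ Finset.range M, h (j + t) := e4
      _ = _ := ih

private lemma sum_blocksF (c : F) (g : ℕ) :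
    ∀ n : ℕ, ∑ i ∈ Finset.range (g * n), c ^ (2 ^ i)
      = ∑ a ∈ Finset.range n, ∑ b ∈ Finset.range g, c ^ (2 ^ (g * a + b)) := by
  intro n
  induction n with
  | zero => simp
  | succ n ih =>
    rw [Nat.mul_add, Nat.mul_one, Finset.sum_range_add, ih, Finset.sum_range_succ]

end Aux

private lemma odd_dvdNT (g t : ℕ) (ht : t % 2 = 1) : (2 ^ g + 1) ∣ (2 ^ (g * t) + 1) := by
  have hodd : Odd t := Nat.odd_iff.mpr ht
  have h : ((2 : ℤ) ^ g) ≡ -1 [ZMOD ((2 : ℤ) ^ g + 1)] :=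
    (Int.modEq_iff_dvd.mpr ⟨1, by ring⟩).symm
  have hp : ((2 : ℤ) ^ g) ^ t ≡ (-1) ^ t [ZMOD ((2 : ℤ) ^ g + 1)] := h.pow t
  rw [hodd.neg_one_pow] at hp
  have hdvd : ((2 : ℤ) ^ g + 1) ∣ (((2 : ℤ) ^ g) ^ t + 1) := by
    have h2 := Int.ModEq.dvd hp
    have h3 : (-1 : ℤ) - ((2 : ℤ) ^ g) ^ t = -((((2 : ℤ) ^ g) ^ t) + 1) := by ring
    rw [h3, dvd_neg] at h2
    exact h2
  have : ((2 : ℤ) ^ (g * t) + 1) = (((2 : ℤ) ^ g) ^ t + 1) := by rw [pow_mul]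
  have hZ : ((2 : ℤ) ^ g + 1) ∣ ((2 : ℤ) ^ (g * t) + 1) := this ▸ hdvd
  exact_mod_cast hZ

private lemma parityNT (k m : ℕ) (hk : 0 < k) (hm : 0 < m)
    (hgcd : Nat.gcd (2 ^ k + 1) (2 ^ m + 1) = 1) :
    ∃ g M K : ℕ, 0 < g ∧ g * M = m ∧ g * K = k ∧ (K + M) % 2 = 1 := by
  set g := Nat.gcd k m with hg
  have hgpos : 0 < g := Nat.gcd_pos_of_pos_left m hk
  refine ⟨g, m / g, k / g, hgpos, Nat.mul_div_cancel' (Nat.gcd_dvd_right k m),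
    Nat.mul_div_cancel' (Nat.gcd_dvd_left k m), ?_⟩
  have hco : Nat.Coprime (k / g) (m / g) := Nat.coprime_div_gcd_div_gcd hgpos
  have hkg : g * (k / g) = k := Nat.mul_div_cancel' (Nat.gcd_dvd_left k m)
  have hmg : g * (m / g) = m := Nat.mul_div_cancel' (Nat.gcd_dvd_right k m)
  have hnotodd : ¬((k / g) % 2 = 1 ∧ (m / g) % 2 = 1) := by
    rintro ⟨h1, h2⟩
    have d1 : (2 ^ g + 1) ∣ (2 ^ k + 1) := by
      have := odd_dvdNT g (k / g) h1
      rwa [hkg] at this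
    have d2 : (2 ^ g + 1) ∣ (2 ^ m + 1) := by
      have := odd_dvdNT g (m / g) h2
      rwa [hmg] at this
    have hd : (2 ^ g + 1) ∣ 1 := by
      have hd0 : (2 ^ g + 1) ∣ Nat.gcd (2 ^ k + 1) (2 ^ m + 1) := Nat.dvd_gcd d1 d2
      rwa [hgcd] at hd0
    have hle : 2 ^ g + 1 ≤ 1 := Nat.le_of_dvd one_pos hd
    have : 1 ≤ 2 ^ g := Nat.one_le_two_pow
    omega
  have hnoteven : ¬((k / g) % 2 = 0 ∧ (m / g) % 2 = 0) := by
    rintro ⟨h1, h2⟩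
    have d1 : 2 ∣ (k / g) := Nat.dvd_of_mod_eq_zero h1
    have d2 : 2 ∣ (m / g) := Nat.dvd_of_mod_eq_zero h2
    have := Nat.dvd_gcd d1 d2
    rw [Nat.Coprime] at hco
    rw [hco] at this
    omega
  omega

private theorem mainThm {F : Type*} [Field F] [CharP F 2] [Finite F] (m k : ℕ)
    (hm : 0 < m) (hk : 0 < k)
    (hgcd : Nat.gcd (2 ^ k + 1) (2 ^ m + 1) = 1)
    (hfrob : ∀ x : F, x ^ (2 ^ m * 2 ^ m) = x) :
    (∀ x : F, x ^ (2 ^ m + 1) = 1 → x ^ (2 ^ k) + x + 1 ≠ 0) ∧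
      Set.BijOn (fun x : F => (x ^ (2 ^ k + 1) + x ^ (2 ^ k) + x) / (x ^ (2 ^ k) + x + 1))
        {x : F | x ^ (2 ^ m + 1) = 1} {x : F | x ^ (2 ^ m + 1) = 1} := by
  have h2F : (2 : F) = 0 := two_eq_zeroF
  -- x^(2^k+1)=1 and x^(2^m+1)=1 imply x = 1
  have key1 : ∀ x : F, x ^ (2 ^ k + 1) = 1 → x ^ (2 ^ m + 1) = 1 → x = 1 := by
    intro x h1 h2
    have hd : orderOf x ∣ Nat.gcd (2 ^ k + 1) (2 ^ m + 1) :=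
      Nat.dvd_gcd (orderOf_dvd_of_pow_eq_one h1) (orderOf_dvd_of_pow_eq_one h2)
    rw [hgcd, Nat.dvd_one] at hd
    exact orderOf_eq_one_iff.mp hd
  have hx0 : ∀ x : F, x ^ (2 ^ m + 1) = 1 → x ≠ 0 := by
    intro x hU h
    rw [h, zero_pow (by positivity)] at hU
    exact zero_ne_one hU
  have hxq : ∀ x : F, x ^ (2 ^ m + 1) = 1 → x ^ (2 ^ m) * x = 1 := by
    intro x hU; rw [← pow_succ]; exact hU
  -- Part 1: denominator never vanishes on U
  have hDne : ∀ x : F, x ^ (2 ^ m + 1) = 1 → x ^ (2 ^ k) + x + 1 ≠ 0 := by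
    intro x hU hD
    have hx0' := hx0 x hU
    have hxq' := hxq x hU
    have hA : (x ^ (2 ^ k)) ^ (2 ^ m) * x ^ (2 ^ k) = 1 := by
      rw [← pow_mul, ← pow_add]
      have h : 2 ^ k * 2 ^ m + 2 ^ k = (2 ^ m + 1) * 2 ^ k := by ring
      rw [h, pow_mul, hU, one_pow]
    have hq0 : (x ^ (2 ^ k)) ^ (2 ^ m) + x ^ (2 ^ m) + 1 = 0 := by
      have h : (x ^ (2 ^ k) + x + 1) ^ (2 ^ m) = 0 := by
        rw [hD]; exact zero_pow (by positivity)
      rwa [add_pow_char_pow, add_pow_char_pow, one_pow] at h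
    have hmul : ((x ^ (2 ^ k)) ^ (2 ^ m) + x ^ (2 ^ m) + 1) * (x ^ (2 ^ k) * x) = 0 := by
      rw [hq0, zero_mul]
    have hNz : x ^ (2 ^ k) * x + x ^ (2 ^ k) + x = 0 := by
      linear_combination hmul - x * hA - x ^ (2 ^ k) * hxq'
    have hxQ : x ^ (2 ^ k) = x + 1 := by
      linear_combination hD - (x + 1) * h2F
    rw [hxQ] at hNz
    have hx2 : x * x + x + 1 = 0 := by linear_combination hNz - x * h2F
    have hx1 : x ≠ 1 := by
      intro h; rw [h] at hx2
      exact one_ne_zero (α := F) (by linear_combination hx2 - h2F)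
    have hx3 : x ^ 3 = 1 := by
      linear_combination (x + 1) * hx2 - (x * x + x + 1) * h2F
    have hmod : ∀ n : ℕ, x ^ n = x ^ (n % 3) := by
      intro n
      conv_lhs => rw [← Nat.div_add_mod n 3]
      rw [pow_add, pow_mul, hx3, one_pow, one_mul]
    have h4 : ∀ j : ℕ, 4 ^ j % 3 = 1 := by
      intro j; rw [Nat.pow_mod]; simp
    rcases Nat.even_or_odd k with hke | hko
    · obtain ⟨j, hj⟩ := hke
      have h2k : 2 ^ k = 4 ^ j := by
        rw [hj, pow_add, show (4 : ℕ) = 2 * 2 from rfl, mul_pow]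
      have hm3 : 2 ^ k % 3 = 1 := by rw [h2k]; exact h4 j
      have hxx : x ^ (2 ^ k) = x := by
        rw [hmod (2 ^ k), hm3, pow_one]
      rw [hxx] at hxQ
      exact zero_ne_one (α := F) (by linear_combination hxQ)
    · obtain ⟨j, hj⟩ := hko
      have h2k : 2 ^ k = 4 ^ j * 2 := by
        rw [hj, pow_succ, pow_mul]; norm_num
      have div3k : 3 ∣ 2 ^ k + 1 := by
        have := h4 j; omega
      have div3m : 3 ∣ 2 ^ m + 1 := by
        have hr : x ^ ((2 ^ m + 1) % 3) = 1 := by rw [← hmod]; exact hU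
        have h3 : (2 ^ m + 1) % 3 = 0 ∨ (2 ^ m + 1) % 3 = 1 ∨ (2 ^ m + 1) % 3 = 2 := by omega
        rcases h3 with h | h | h
        · exact Nat.dvd_of_mod_eq_zero h
        · rw [h, pow_one] at hr; exact absurd hr hx1
        · rw [h] at hr
          have hsq : (x + 1) * (x + 1) = 0 := by
            linear_combination hr + (x + 1) * h2F
          have := mul_self_eq_zero.mp hsq
          exact absurd (by linear_combination this - h2F) hx1
      have hd : (3 : ℕ) ∣ 1 := by
        have hd0 : (3 : ℕ) ∣ Nat.gcd (2 ^ k + 1) (2 ^ m + 1) := Nat.dvd_gcd div3k div3m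
        rwa [hgcd] at hd0
      omega
  -- Part 2: maps U to U
  have hMaps : ∀ x : F, x ^ (2 ^ m + 1) = 1 →
      ((x ^ (2 ^ k + 1) + x ^ (2 ^ k) + x) / (x ^ (2 ^ k) + x + 1)) ^ (2 ^ m + 1) = 1 := by
    intro x hU
    have hD := hDne x hU
    have e1 : x ^ (2 ^ k + 1) * (x ^ (2 ^ k)) ^ (2 ^ m) = x := by
      rw [← pow_mul, ← pow_add]
      have h : 2 ^ k + 1 + 2 ^ k * 2 ^ m = (2 ^ m + 1) * 2 ^ k + 1 := by ring
      rw [h, pow_add, pow_mul, hU, one_pow, pow_one, one_mul]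
    have e2 : x ^ (2 ^ k + 1) * x ^ (2 ^ m) = x ^ (2 ^ k) := by
      rw [← pow_add]
      have h : 2 ^ k + 1 + 2 ^ m = 2 ^ k + (2 ^ m + 1) := by ring
      rw [h, pow_add, hU, mul_one]
    have e3 : x ^ (2 ^ k + 1) * (x ^ (2 ^ k + 1)) ^ (2 ^ m) = 1 := by
      rw [← pow_mul, ← pow_add]
      have h : 2 ^ k + 1 + (2 ^ k + 1) * 2 ^ m = (2 ^ m + 1) * (2 ^ k + 1) := by ring
      rw [h, pow_mul, hU, one_pow]
    have c1 : x ^ (2 ^ k + 1) * ((x ^ (2 ^ k)) ^ (2 ^ m) + x ^ (2 ^ m) + 1)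
        = x ^ (2 ^ k + 1) + x ^ (2 ^ k) + x := by
      linear_combination e1 + e2
    have c2 : x ^ (2 ^ k + 1) * ((x ^ (2 ^ k + 1)) ^ (2 ^ m) + (x ^ (2 ^ k)) ^ (2 ^ m) + x ^ (2 ^ m))
        = x ^ (2 ^ k) + x + 1 := by
      linear_combination e3 + e1 + e2
    have hNq : (x ^ (2 ^ k + 1) + x ^ (2 ^ k) + x) ^ (2 ^ m)
        = (x ^ (2 ^ k + 1)) ^ (2 ^ m) + (x ^ (2 ^ k)) ^ (2 ^ m) + x ^ (2 ^ m) := by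
      rw [add_pow_char_pow, add_pow_char_pow]
    have hDq : (x ^ (2 ^ k) + x + 1) ^ (2 ^ m)
        = (x ^ (2 ^ k)) ^ (2 ^ m) + x ^ (2 ^ m) + 1 := by
      rw [add_pow_char_pow, add_pow_char_pow, one_pow]
    have hNP : (x ^ (2 ^ k + 1) + x ^ (2 ^ k) + x) ^ (2 ^ m + 1)
        = (x ^ (2 ^ k) + x + 1) ^ (2 ^ m + 1) := by
      rw [pow_succ (x ^ (2 ^ k + 1) + x ^ (2 ^ k) + x) (2 ^ m),
        pow_succ (x ^ (2 ^ k) + x + 1) (2 ^ m), hNq, hDq]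
      linear_combination ((x ^ (2 ^ k)) ^ (2 ^ m) + x ^ (2 ^ m) + 1) * c2
        - ((x ^ (2 ^ k + 1)) ^ (2 ^ m) + (x ^ (2 ^ k)) ^ (2 ^ m) + x ^ (2 ^ m)) * c1
    rw [div_pow, hNP, div_self (pow_ne_zero _ hD)]
  -- Part 3: injectivity
  have hInj : ∀ x₁ : F, x₁ ^ (2 ^ m + 1) = 1 → ∀ x₂ : F, x₂ ^ (2 ^ m + 1) = 1 →
      (x₁ ^ (2 ^ k + 1) + x₁ ^ (2 ^ k) + x₁) / (x₁ ^ (2 ^ k) + x₁ + 1)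
        = (x₂ ^ (2 ^ k + 1) + x₂ ^ (2 ^ k) + x₂) / (x₂ ^ (2 ^ k) + x₂ + 1) → x₁ = x₂ := by
    intro x₁ hU₁ x₂ hU₂ heqv
    by_contra hne
    have hD₁ := hDne x₁ hU₁
    have hD₂ := hDne x₂ hU₂
    have hcross : (x₁ ^ (2 ^ k + 1) + x₁ ^ (2 ^ k) + x₁) * (x₂ ^ (2 ^ k) + x₂ + 1)
        = (x₂ ^ (2 ^ k + 1) + x₂ ^ (2 ^ k) + x₂) * (x₁ ^ (2 ^ k) + x₁ + 1) :=
      (div_eq_div_iff hD₁ hD₂).mp heqv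
    have h1iff : ∀ x : F, x ^ (2 ^ m + 1) = 1 →
        x ^ (2 ^ k + 1) + x ^ (2 ^ k) + x = x ^ (2 ^ k) + x + 1 → x = 1 := by
      intro x hU hND
      apply key1 x _ hU
      linear_combination hND
    have hx₁1 : x₁ ≠ 1 := by
      intro h
      subst h
      apply hne
      symm
      apply h1iff x₂ hU₂
      simp only [one_pow] at hcross
      linear_combination -hcross + ((x₂ ^ (2 ^ k) + x₂ + 1) - (x₂ ^ (2 ^ k + 1) + x₂ ^ (2 ^ k) + x₂)) * h2F
    have hx₂1 : x₂ ≠ 1 := by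
      intro h
      subst h
      apply hne
      apply h1iff x₁ hU₁
      simp only [one_pow] at hcross
      linear_combination hcross + ((x₁ ^ (2 ^ k) + x₁ + 1) - (x₁ ^ (2 ^ k + 1) + x₁ ^ (2 ^ k) + x₁)) * h2F
    have hx₁0 := hx0 x₁ hU₁
    have hx₂0 := hx0 x₂ hU₂
    have hxq₁ := hxq x₁ hU₁
    have hxq₂ := hxq x₂ hU₂
    have hp₁ : x₁ + 1 ≠ 0 := by
      intro h; exact hx₁1 (by linear_combination h - h2F)
    have hp₂ : x₂ + 1 ≠ 0 := by
      intro h; exact hx₂1 (by linear_combination h - h2F)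
    set e₁ : F := (x₁ + 1)⁻¹ with he₁def
    set e₂ : F := (x₂ + 1)⁻¹ with he₂def
    have hei : e₁ * (x₁ + 1) = 1 := inv_mul_cancel₀ hp₁
    have hei2 : e₂ * (x₂ + 1) = 1 := inv_mul_cancel₀ hp₂
    have heqgen : ∀ (x e : F), x ≠ 0 → x ^ (2 ^ m) * x = 1 → e * (x + 1) = 1 →
        e ^ (2 ^ m) = e + 1 := by
      intro x e hx hxq he
      have hq1 : e ^ (2 ^ m) * (x ^ (2 ^ m) + 1) = 1 := by
        have h1 : (e * (x + 1)) ^ (2 ^ m) = 1 := by rw [he, one_pow]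
        rwa [mul_pow, add_pow_char_pow, one_pow] at h1
      have hkey : (e + 1) * (x ^ (2 ^ m) + 1) * x = 1 * x := by
        linear_combination (e + 1) * hxq + he + h2F
      have hkey2 : (e + 1) * (x ^ (2 ^ m) + 1) = 1 := mul_right_cancel₀ hx hkey
      have hcne : x ^ (2 ^ m) + 1 ≠ 0 := by
        intro h; rw [h, mul_zero] at hq1; exact zero_ne_one hq1
      exact mul_right_cancel₀ hcne (hq1.trans hkey2.symm)
    have heq₁ : e₁ ^ (2 ^ m) = e₁ + 1 := heqgen x₁ e₁ hx₁0 hxq₁ hei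
    have heq₂ : e₂ ^ (2 ^ m) = e₂ + 1 := heqgen x₂ e₂ hx₂0 hxq₂ hei2
    have heQgen : ∀ (x e : F), e * (x + 1) = 1 → e ^ (2 ^ k) * (x ^ (2 ^ k) + 1) = 1 := by
      intro x e he
      have h1 : (e * (x + 1)) ^ (2 ^ k) = 1 := by rw [he, one_pow]
      rwa [mul_pow, add_pow_char_pow, one_pow] at h1
    have heQ₁ := heQgen x₁ e₁ hei
    have heQ₂ := heQgen x₂ e₂ hei2
    have I1 : ∀ (x e : F), e * (x + 1) = 1 → e ^ (2 ^ k) * (x ^ (2 ^ k) + 1) = 1 →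
        (e ^ (2 ^ k) * e + e ^ (2 ^ k) + e) * ((x ^ (2 ^ k) + 1) * (x + 1))
          = x ^ (2 ^ k) + x + 1 := by
      intro x e he heQ
      linear_combination (e * (x + 1) + (x + 1)) * heQ + (1 + (x ^ (2 ^ k) + 1)) * he + h2F
    have I2 : ∀ (x e : F), e * (x + 1) = 1 → e ^ (2 ^ k) * (x ^ (2 ^ k) + 1) = 1 →
        (e ^ (2 ^ k) + e + 1) * ((x ^ (2 ^ k) + 1) * (x + 1))
          = x ^ (2 ^ k) * x + 1 := by
      intro x e he heQ
      linear_combination (x + 1) * heQ + (x ^ (2 ^ k) + 1) * he + (x ^ (2 ^ k) + x + 1) * h2F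
    have hB₁ : (x₁ ^ (2 ^ k) + 1) * (x₁ + 1) ≠ 0 := by
      apply mul_ne_zero _ hp₁
      have h : x₁ ^ (2 ^ k) + 1 = (x₁ + 1) ^ (2 ^ k) := by
        rw [add_pow_char_pow, one_pow]
      rw [h]; exact pow_ne_zero _ hp₁
    have hB₂ : (x₂ ^ (2 ^ k) + 1) * (x₂ + 1) ≠ 0 := by
      apply mul_ne_zero _ hp₂
      have h : x₂ ^ (2 ^ k) + 1 = (x₂ + 1) ^ (2 ^ k) := by
        rw [add_pow_char_pow, one_pow]
      rw [h]; exact pow_ne_zero _ hp₂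
    have hcross2 : (x₁ ^ (2 ^ k) * x₁ + 1) * (x₂ ^ (2 ^ k) + x₂ + 1)
        = (x₂ ^ (2 ^ k) * x₂ + 1) * (x₁ ^ (2 ^ k) + x₁ + 1) := by
      linear_combination hcross + (x₂ ^ (2 ^ k) - x₁ ^ (2 ^ k) + x₂ - x₁) * h2F
    have I11 := I1 x₁ e₁ hei heQ₁
    have I12 := I2 x₁ e₁ hei heQ₁
    have I21 := I1 x₂ e₂ hei2 heQ₂
    have I22 := I2 x₂ e₂ hei2 heQ₂
    have He : (e₁ ^ (2 ^ k) * e₁ + e₁ ^ (2 ^ k) + e₁) * (e₂ ^ (2 ^ k) + e₂ + 1)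
        = (e₂ ^ (2 ^ k) * e₂ + e₂ ^ (2 ^ k) + e₂) * (e₁ ^ (2 ^ k) + e₁ + 1) := by
      apply mul_right_cancel₀ (mul_ne_zero hB₁ hB₂)
      calc (e₁ ^ (2 ^ k) * e₁ + e₁ ^ (2 ^ k) + e₁) * (e₂ ^ (2 ^ k) + e₂ + 1)
            * ((x₁ ^ (2 ^ k) + 1) * (x₁ + 1) * ((x₂ ^ (2 ^ k) + 1) * (x₂ + 1)))
          = ((e₁ ^ (2 ^ k) * e₁ + e₁ ^ (2 ^ k) + e₁) * ((x₁ ^ (2 ^ k) + 1) * (x₁ + 1)))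
            * ((e₂ ^ (2 ^ k) + e₂ + 1) * ((x₂ ^ (2 ^ k) + 1) * (x₂ + 1))) := by ring
        _ = (x₁ ^ (2 ^ k) + x₁ + 1) * (x₂ ^ (2 ^ k) * x₂ + 1) := by rw [I11, I22]
        _ = (x₂ ^ (2 ^ k) + x₂ + 1) * (x₁ ^ (2 ^ k) * x₁ + 1) := by linear_combination -hcross2
        _ = ((e₂ ^ (2 ^ k) * e₂ + e₂ ^ (2 ^ k) + e₂) * ((x₂ ^ (2 ^ k) + 1) * (x₂ + 1)))
            * ((e₁ ^ (2 ^ k) + e₁ + 1) * ((x₁ ^ (2 ^ k) + 1) * (x₁ + 1))) := by rw [I21, I12]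
        _ = (e₂ ^ (2 ^ k) * e₂ + e₂ ^ (2 ^ k) + e₂) * (e₁ ^ (2 ^ k) + e₁ + 1)
            * ((x₁ ^ (2 ^ k) + 1) * (x₁ + 1) * ((x₂ ^ (2 ^ k) + 1) * (x₂ + 1))) := by ring
    have hs_ne : e₁ + e₂ ≠ 0 := by
      intro h
      apply hne
      have he12 : e₁ = e₂ := by linear_combination h - e₂ * h2F
      rw [he₁def, he₂def] at he12
      have h2 := inv_injective he12
      linear_combination h2
    set s : F := e₁ + e₂ with hsdef
    have he₂s : e₂ = e₁ + s := by rw [hsdef]; linear_combination (-e₁) * h2F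
    have he₂Q : e₂ ^ (2 ^ k) = e₁ ^ (2 ^ k) + s ^ (2 ^ k) := by
      rw [he₂s, add_pow_char_pow]
    rw [he₂Q, he₂s] at He
    have HK : s * (e₁ ^ (2 ^ k) * e₁ ^ (2 ^ k) + e₁ ^ (2 ^ k) + 1)
        + s ^ (2 ^ k) * (e₁ * e₁ + e₁ + 1)
        + (e₁ ^ (2 ^ k) + e₁ + 1) * (s ^ (2 ^ k) * s) = 0 := by
      linear_combination He + (s ^ (2 ^ k) + s + s * s ^ (2 ^ k) + s * e₁ ^ (2 ^ k)
        + s * e₁ ^ (2 ^ k) * s ^ (2 ^ k) + s * e₁ ^ (2 ^ k) * e₁ ^ (2 ^ k)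
        + e₁ * s ^ (2 ^ k) + e₁ * s * s ^ (2 ^ k) + e₁ * e₁ * s ^ (2 ^ k)) * h2F
    have hS_ne : s ^ (2 ^ k) ≠ 0 := pow_ne_zero _ hs_ne
    set w : F := (e₁ * e₁ + e₁ + 1) / s with hwdef
    have hw : w * s = e₁ * e₁ + e₁ + 1 := div_mul_cancel₀ _ hs_ne
    have hvQ : (e₁ * e₁ + e₁ + 1) ^ (2 ^ k)
        = e₁ ^ (2 ^ k) * e₁ ^ (2 ^ k) + e₁ ^ (2 ^ k) + 1 := by
      rw [add_pow_char_pow, add_pow_char_pow, mul_pow, one_pow]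
    have hwQ : w ^ (2 ^ k) * s ^ (2 ^ k)
        = e₁ ^ (2 ^ k) * e₁ ^ (2 ^ k) + e₁ ^ (2 ^ k) + 1 := by
      have h : (w * s) ^ (2 ^ k) = (e₁ * e₁ + e₁ + 1) ^ (2 ^ k) := by rw [hw]
      rwa [mul_pow, hvQ] at h
    have Hw : w ^ (2 ^ k) + w = e₁ ^ (2 ^ k) + e₁ + 1 := by
      apply mul_right_cancel₀ (mul_ne_zero hS_ne hs_ne)
      linear_combination s * hwQ + s ^ (2 ^ k) * hw + HK
        - ((e₁ ^ (2 ^ k) + e₁ + 1) * (s ^ (2 ^ k) * s)) * h2F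
    have hsq : s ^ (2 ^ m) = s := by
      have h1 : s ^ (2 ^ m) = e₁ ^ (2 ^ m) + e₂ ^ (2 ^ m) := by
        rw [hsdef, add_pow_char_pow]
      rw [h1, heq₁, heq₂, hsdef]
      linear_combination h2F
    have hδq : (e₁ * e₁ + e₁) ^ (2 ^ m) = e₁ * e₁ + e₁ := by
      rw [add_pow_char_pow, mul_pow, heq₁]
      linear_combination (e₁ + 1) * h2F
    have hvq : (e₁ * e₁ + e₁ + 1) ^ (2 ^ m) = e₁ * e₁ + e₁ + 1 := by
      rw [add_pow_char_pow, one_pow, hδq]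
    have hwq : w ^ (2 ^ m) = w := by
      rw [hwdef, div_pow, hvq, hsq]
    have hTr : ∑ j ∈ Finset.range m, (e₁ * e₁ + e₁) ^ (2 ^ j) = 1 := by
      rw [teleF, heq₁]
      linear_combination e₁ * h2F
    have HwP : w ^ (2 ^ k) + w = (∑ i ∈ Finset.range k, (e₁ * e₁ + e₁) ^ (2 ^ i)) + 1 := by
      rw [teleF]
      exact Hw
    -- trace argument
    obtain ⟨g, M, K, hgpos, hgM, hgK, hparity⟩ := parityNT k m hk hm hgcd
    have hperiod : ∀ z : F, z ^ (2 ^ m) = z → ∀ j, z ^ (2 ^ (g * (j + M))) = z ^ (2 ^ (g * j)) := by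
      intro z hz j
      have h1 : g * (j + M) = g * j + m := by rw [Nat.mul_add, hgM]
      rw [h1, pow_add, pow_mul, pow_right_comm, hz]
    have hTshift : ∀ z : F, z ^ (2 ^ m) = z →
        ∑ j ∈ Finset.range M, (z ^ (2 ^ k)) ^ (2 ^ (g * j))
          = ∑ j ∈ Finset.range M, z ^ (2 ^ (g * j)) := by
      intro z hz
      have h1 : ∀ j : ℕ, (z ^ (2 ^ k)) ^ (2 ^ (g * j)) = z ^ (2 ^ (g * (j + K))) := by
        intro j
        rw [← pow_mul]
        congr 1
        rw [show g * (j + K) = k + g * j from by rw [Nat.mul_add, hgK, Nat.add_comm], pow_add]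
      calc ∑ j ∈ Finset.range M, (z ^ (2 ^ k)) ^ (2 ^ (g * j))
          = ∑ j ∈ Finset.range M, z ^ (2 ^ (g * (j + K))) :=
            Finset.sum_congr rfl (fun j _ => h1 j)
        _ = ∑ j ∈ Finset.range M, z ^ (2 ^ (g * j)) :=
            sum_shiftF (fun j => z ^ (2 ^ (g * j))) M (fun j => hperiod z hz j) K
    have hL : ∑ j ∈ Finset.range M, (w ^ (2 ^ k) + w) ^ (2 ^ (g * j)) = 0 := by
      have h1 : ∀ j : ℕ, (w ^ (2 ^ k) + w) ^ (2 ^ (g * j))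
          = (w ^ (2 ^ k)) ^ (2 ^ (g * j)) + w ^ (2 ^ (g * j)) :=
        fun j => add_pow_char_pow _ _ 2 _
      rw [Finset.sum_congr rfl (fun j _ => h1 j), Finset.sum_add_distrib, hTshift w hwq]
      exact CharTwo.add_self_eq_zero _
    set θ : F := ∑ j ∈ Finset.range M, (e₁ * e₁ + e₁) ^ (2 ^ (g * j)) with hθdef
    have hθshift : θ ^ (2 ^ g) = θ := by
      rw [hθdef, sum_pow_char_pow]
      have h2 : ∀ j : ℕ, ((e₁ * e₁ + e₁) ^ (2 ^ (g * j))) ^ (2 ^ g)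
          = (e₁ * e₁ + e₁) ^ (2 ^ (g * (j + 1))) := by
        intro j; rw [← pow_mul]; congr 1
        rw [Nat.mul_add, Nat.mul_one, pow_add]
      rw [Finset.sum_congr rfl (fun j _ => h2 j)]
      exact sum_shiftF (fun j => (e₁ * e₁ + e₁) ^ (2 ^ (g * j))) M
        (fun j => hperiod _ hδq j) 1
    have hθg : ∀ a : ℕ, θ ^ (2 ^ (g * a)) = θ := by
      intro a
      induction a with
      | zero => rw [Nat.mul_zero, pow_zero, pow_one]
      | succ a ih =>
        have h1 : (2 : ℕ) ^ (g * (a + 1)) = 2 ^ (g * a) * 2 ^ g := by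
          rw [Nat.mul_add, Nat.mul_one, pow_add]
        rw [h1, pow_mul, ih, hθshift]
    have hTgP : ∑ j ∈ Finset.range M,
        ((∑ i ∈ Finset.range k, (e₁ * e₁ + e₁) ^ (2 ^ i)) + 1) ^ (2 ^ (g * j))
        = (∑ i ∈ Finset.range k, θ ^ (2 ^ i)) + (M : F) := by
      have h1 : ∀ j : ℕ, ((∑ i ∈ Finset.range k, (e₁ * e₁ + e₁) ^ (2 ^ i)) + 1) ^ (2 ^ (g * j))
          = (∑ i ∈ Finset.range k, ((e₁ * e₁ + e₁) ^ (2 ^ i)) ^ (2 ^ (g * j))) + 1 := by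
        intro j
        rw [add_pow_char_pow, one_pow, sum_pow_char_pow]
      rw [Finset.sum_congr rfl (fun j _ => h1 j), Finset.sum_add_distrib, Finset.sum_const,
        Finset.card_range, nsmul_eq_mul, mul_one]
      congr 1
      rw [Finset.sum_comm]
      apply Finset.sum_congr rfl
      intro i _
      rw [hθdef, sum_pow_char_pow]
      apply Finset.sum_congr rfl
      intro j _
      rw [pow_right_comm]
    have hblocks : ∀ n : ℕ, ∑ i ∈ Finset.range (g * n), θ ^ (2 ^ i)
        = (n : F) * ∑ b ∈ Finset.range g, θ ^ (2 ^ b) := by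
      intro n
      induction n with
      | zero => simp
      | succ n ih =>
        rw [Nat.mul_add, Nat.mul_one, Finset.sum_range_add, ih]
        have h2 : ∀ b : ℕ, θ ^ (2 ^ (g * n + b)) = θ ^ (2 ^ b) := by
          intro b
          rw [pow_add, pow_mul, hθg n]
        rw [Finset.sum_congr rfl (fun b _ => h2 b)]
        push_cast
        ring
    have hTT : ∑ b ∈ Finset.range g, θ ^ (2 ^ b) = 1 := by
      have hdec : ∑ j ∈ Finset.range (g * M), (e₁ * e₁ + e₁) ^ (2 ^ j)
          = ∑ a ∈ Finset.range M, ∑ b ∈ Finset.range g, (e₁ * e₁ + e₁) ^ (2 ^ (g * a + b)) :=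
        sum_blocksF (e₁ * e₁ + e₁) g M
      have hswap : ∑ a ∈ Finset.range M, ∑ b ∈ Finset.range g, (e₁ * e₁ + e₁) ^ (2 ^ (g * a + b))
          = ∑ b ∈ Finset.range g, θ ^ (2 ^ b) := by
        rw [Finset.sum_comm]
        apply Finset.sum_congr rfl
        intro b _
        rw [hθdef, sum_pow_char_pow]
        apply Finset.sum_congr rfl
        intro a _
        rw [← pow_mul, ← pow_add]
      rw [← hswap, ← hdec, hgM]
      exact hTr
    have hfin : (0 : F) = (K : F) * 1 + (M : F) := by
      calc (0 : F) = ∑ j ∈ Finset.range M, (w ^ (2 ^ k) + w) ^ (2 ^ (g * j)) := hL.symm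
        _ = ∑ j ∈ Finset.range M,
            ((∑ i ∈ Finset.range k, (e₁ * e₁ + e₁) ^ (2 ^ i)) + 1) ^ (2 ^ (g * j)) := by
            apply Finset.sum_congr rfl; intro j _; rw [HwP]
        _ = (∑ i ∈ Finset.range k, θ ^ (2 ^ i)) + (M : F) := hTgP
        _ = (K : F) * (∑ b ∈ Finset.range g, θ ^ (2 ^ b)) + (M : F) := by
            rw [← hgK, hblocks K]
        _ = (K : F) * 1 + (M : F) := by rw [hTT]
    obtain ⟨t, ht⟩ : ∃ t, K + M = 2 * t + 1 := ⟨(K + M) / 2, by omega⟩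
    have hcast : ((K + M : ℕ) : F) = 0 := by
      push_cast
      linear_combination -hfin
    rw [ht] at hcast
    push_cast at hcast
    rw [h2F] at hcast
    simp at hcast
  constructor
  · exact hDne
  · have hmapsTo : Set.MapsTo
        (fun x : F => (x ^ (2 ^ k + 1) + x ^ (2 ^ k) + x) / (x ^ (2 ^ k) + x + 1))
        {x : F | x ^ (2 ^ m + 1) = 1} {x : F | x ^ (2 ^ m + 1) = 1} :=
      fun x hx => hMaps x hx
    have hinjOn : Set.InjOn
        (fun x : F => (x ^ (2 ^ k + 1) + x ^ (2 ^ k) + x) / (x ^ (2 ^ k) + x + 1))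
        {x : F | x ^ (2 ^ m + 1) = 1} :=
      fun x₁ h1 x₂ h2 h => hInj x₁ h1 x₂ h2 h
    exact (Set.Finite.injOn_iff_bijOn_of_mapsTo (Set.toFinite _) hmapsTo).mp hinjOn

theorem stmt_5 (m k : ℕ) (hm : 0 < m) (hk : 0 < k)
    (hgcd : Nat.gcd (2 ^ k + 1) (2 ^ m + 1) = 1) :
    (∀ x : GaloisField 2 (2 * m), x ^ (2 ^ m + 1) = 1 →
        x ^ (2 ^ k) + x + 1 ≠ 0) ∧
      Set.BijOn
        (fun x : GaloisField 2 (2 * m) =>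
          (x ^ (2 ^ k + 1) + x ^ (2 ^ k) + x) / (x ^ (2 ^ k) + x + 1))
        {x : GaloisField 2 (2 * m) | x ^ (2 ^ m + 1) = 1}
        {x : GaloisField 2 (2 * m) | x ^ (2 ^ m + 1) = 1} := by
  have h2m : 2 * m ≠ 0 := by omega
  haveI : Fintype (GaloisField 2 (2 * m)) := Fintype.ofFinite _
  have hcard : Fintype.card (GaloisField 2 (2 * m)) = 2 ^ (2 * m) := by
    rw [← Nat.card_eq_fintype_card]
    exact GaloisField.card 2 (2 * m) h2m
  have hfrob : ∀ x : GaloisField 2 (2 * m), x ^ (2 ^ m * 2 ^ m) = x := by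
    intro x
    have h1 : (2 : ℕ) ^ m * 2 ^ m = 2 ^ (2 * m) := by rw [← pow_add, two_mul]
    rw [h1, ← hcard]
    exact FiniteField.pow_card x
  exact mainThm m k hm hk hgcd hfrob
end

section
/- Let m be an even positive integer, k a positive integer with v_2(k) ≤ v_2(m), and s an integer. Let U = {x ∈ F_{2^{2m}} : x^{2^m+1} = 1}. Then the map sending x ∈ U to (x^{2^k+2s+1} + x^{2^k+2s} + x^{2^k+s+1} + x^{2^k+s} + x^{2^k+1} + x^{2^k} + x^{2s} + x^s + 1)/(x^{2^k+2s+1} + x^{2^k+s+1} + x^{2^k+1} + x^{2s+1} + x^{2s} + x^{s+1} + x^s + x + 1) is well-defined (the denominator never vanishes on U) and is a bijection from U to U. -/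
set_option linter.unusedSectionVars false

section Aux

variable {F : Type*} [Field F] [CharP F 2]

lemma aux_ne0 {m : ℕ} {x : F} (hx : x ^ (2 ^ m + 1) = 1) : x ≠ 0 := by
  intro h
  rw [h, zero_pow (by positivity)] at hx
  exact zero_ne_one hx

lemma aux_cube {m : ℕ} (hme : Even m) {z : F}
    (hz : z ^ 2 + z + 1 = 0) (hU : z ^ (2 ^ m + 1) = 1) : False := by
  have h2 : (2 : F) = 0 := CharTwo.two_eq_zero
  have hz3 : z ^ 3 = 1 := by linear_combination (z + 1) * hz - (z ^ 2 + z + 1) * h2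
  have ho3 := orderOf_dvd_of_pow_eq_one hz3
  have hoU := orderOf_dvd_of_pow_eq_one hU
  have hcop : Nat.Coprime 3 (2 ^ m + 1) := by
    obtain ⟨j, rfl⟩ := hme
    rw [Nat.Prime.coprime_iff_not_dvd (by norm_num)]
    intro hdvd
    have h1 : ¬ (3 ∣ 2 ^ j) := by
      intro hh
      have := Nat.Prime.dvd_of_dvd_pow (p := 3) (by norm_num) hh
      omega
    have h1' : 2 ^ j % 3 = 1 ∨ 2 ^ j % 3 = 2 := by
      have hlt : 2 ^ j % 3 < 3 := Nat.mod_lt _ (by norm_num)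
      have hne : ¬ 2 ^ j % 3 = 0 := fun h => h1 (Nat.dvd_of_mod_eq_zero h)
      omega
    have hsplit : 2 ^ (j + j) = 2 ^ j * 2 ^ j := by rw [pow_add]
    have hmm : (2 ^ j * 2 ^ j) % 3 = (2 ^ j % 3) * (2 ^ j % 3) % 3 := Nat.mul_mod _ _ _
    obtain ⟨c, hc⟩ := hdvd
    rcases h1' with h | h <;> rw [h] at hmm <;> omega
  have hdvd1 : orderOf z ∣ 1 := by
    have hg := Nat.dvd_gcd ho3 hoU
    rwa [Nat.Coprime.gcd_eq_one hcop] at hg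
  have hz1 : z = 1 := orderOf_eq_one_iff.mp (Nat.dvd_one.mp hdvd1)
  rw [hz1] at hz
  have : (1 : F) = 0 := by linear_combination hz - h2
  exact one_ne_zero this

lemma aux_pow_dvd {M : Type*} [Monoid M] {t : M} {d : ℕ} (h : t ^ (2 ^ d) = t) (j : ℕ) :
    t ^ (2 ^ (d * j)) = t := by
  induction j with
  | zero => simp
  | succ n ih =>
    have hdn : d * (n + 1) = d * n + d := by ring
    rw [hdn, pow_add, pow_mul, ih, h]

lemma aux_pow_gcd {M : Type*} [Monoid M] (t : M) : ∀ a b : ℕ,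
    t ^ (2 ^ a) = t → t ^ (2 ^ b) = t → t ^ (2 ^ Nat.gcd a b) = t := by
  intro a b
  induction a, b using Nat.gcd.induction with
  | H0 n => intro _ h; simpa using h
  | H1 a b hpos ih =>
    intro ha hb
    rw [Nat.gcd_rec]
    refine ih ?_ ha
    have hd : a * (b / a) + b % a = b := Nat.div_add_mod b a
    have h1 : t ^ (2 ^ (a * (b / a))) = t := aux_pow_dvd ha _
    calc t ^ 2 ^ (b % a) = (t ^ 2 ^ (a * (b / a))) ^ 2 ^ (b % a) := by rw [h1]
    _ = t ^ (2 ^ (a * (b / a)) * 2 ^ (b % a)) := (pow_mul t _ _).symm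
    _ = t ^ 2 ^ b := by rw [← pow_add, hd]
    _ = t := hb

lemma aux_gcd_dvd {k m : ℕ} (hk : 0 < k) (hm : 0 < m)
    (hv : padicValNat 2 k ≤ padicValNat 2 m) : Nat.gcd k (2 * m) ∣ m := by
  have hg0 : Nat.gcd k (2 * m) ≠ 0 := by
    intro h
    rw [Nat.gcd_eq_zero_iff] at h
    omega
  rw [← Nat.factorization_le_iff_dvd hg0 hm.ne']
  rw [Finsupp.le_def]
  intro p
  by_cases hp2 : p = 2
  · subst hp2
    have hk' := (Nat.factorization_le_iff_dvd hg0 hk.ne').mpr (Nat.gcd_dvd_left k (2 * m))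
    have h1 := Finsupp.le_def.mp hk' 2
    rw [Nat.factorization_def _ Nat.prime_two] at h1 ⊢
    rw [Nat.factorization_def _ Nat.prime_two] at h1
    calc padicValNat 2 (Nat.gcd k (2 * m)) ≤ padicValNat 2 k := h1
    _ ≤ padicValNat 2 m := hv
  · have hle := (Nat.factorization_le_iff_dvd hg0 (by positivity : 2 * m ≠ 0)).mpr
      (Nat.gcd_dvd_right k (2 * m))
    have h1 := Finsupp.le_def.mp hle p
    rw [Nat.factorization_mul (by norm_num) hm.ne', Finsupp.add_apply] at h1
    have h2 : (Nat.factorization 2) p = 0 := by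
      rw [Nat.Prime.factorization Nat.prime_two]
      simp [Finsupp.single_apply, Ne.symm hp2]
    rw [h2] at h1
    simpa using h1

lemma aux_a1 {m : ℕ} (hme : Even m) {x y : F}
    (hx : x ^ (2 ^ m + 1) = 1) (hy : y ^ (2 ^ m + 1) = 1) : x * y + x + 1 ≠ 0 := by
  intro h
  have h2 : (2 : F) = 0 := CharTwo.two_eq_zero
  have exm : x ^ (2 ^ m) * x = 1 := by rw [← pow_succ]; exact hx
  have eym : y ^ (2 ^ m) * y = 1 := by rw [← pow_succ]; exact hy
  have hxy2 : x * y = x + 1 := by linear_combination h - (x + 1) * h2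
  have h3 : (x * y) ^ (2 ^ m) = (x + 1) ^ (2 ^ m) := by rw [hxy2]
  rw [mul_pow, add_pow_char_pow, one_pow] at h3
  have h4 : (x ^ (2 ^ m) * y ^ (2 ^ m)) * (x * y) = 1 := by
    have hh : (x ^ (2 ^ m) * y ^ (2 ^ m)) * (x * y) = (x ^ (2 ^ m) * x) * (y ^ (2 ^ m) * y) := by
      ring
    rw [hh, exm, eym, one_mul]
  rw [h3, hxy2] at h4
  have e22 : x ^ (2 ^ m) = x + 1 := by linear_combination h4 - exm - (x + 1) * h2
  rw [e22] at exm
  have e23 : x ^ 2 + x + 1 = 0 := by linear_combination exm + h2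
  exact aux_cube hme e23 hx

lemma aux_C {m k : ℕ} (hme : Even m) {x : F}
    (hx : x ^ (2 ^ m + 1) = 1) : x ^ (2 ^ k + 1) + x + 1 ≠ 0 := by
  intro hC
  have h2 : (2 : F) = 0 := CharTwo.two_eq_zero
  have exm : x ^ (2 ^ m) * x = 1 := by rw [← pow_succ]; exact hx
  have hxk : x ^ (2 ^ k + 1) = x + 1 := by linear_combination hC - (x + 1) * h2
  have h3 : (x ^ (2 ^ k + 1)) ^ (2 ^ m) = (x + 1) ^ (2 ^ m) := by rw [hxk]
  rw [add_pow_char_pow, one_pow] at h3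
  have h3' : (x ^ (2 ^ m)) ^ (2 ^ k + 1) = x ^ (2 ^ m) + 1 := by
    rw [← pow_mul, mul_comm (2 ^ m) (2 ^ k + 1), pow_mul]
    exact h3
  have h4 : (x ^ (2 ^ m)) ^ (2 ^ k + 1) * x ^ (2 ^ k + 1) = 1 := by
    rw [← mul_pow, exm, one_pow]
  rw [h3', hxk] at h4
  have e22 : x ^ (2 ^ m) = x + 1 := by linear_combination h4 - exm - (x + 1) * h2
  rw [e22] at exm
  have e23 : x ^ 2 + x + 1 = 0 := by linear_combination exm + h2
  exact aux_cube hme e23 hx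

lemma aux_B_eq {m k : ℕ} {x : F} (hx : x ^ (2 ^ m + 1) = 1) :
    x ^ (2 ^ k + 1) + x ^ (2 ^ k) + 1
      = x ^ (2 ^ k + 1) * (x ^ (2 ^ k + 1) + x + 1) ^ (2 ^ m) := by
  have exm : x ^ (2 ^ m) * x = 1 := by rw [← pow_succ]; exact hx
  have hC2 : (x ^ (2 ^ k + 1) + x + 1) ^ (2 ^ m)
      = (x ^ (2 ^ m)) ^ (2 ^ k + 1) + x ^ (2 ^ m) + 1 := by
    rw [add_pow_char_pow, add_pow_char_pow, one_pow, ← pow_mul,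
      mul_comm (2 ^ k + 1) (2 ^ m), pow_mul]
  rw [hC2]
  have e9 : (x ^ (2 ^ m)) ^ (2 ^ k + 1) * x ^ (2 ^ k + 1) = 1 := by
    rw [← mul_pow, exm, one_pow]
  have e10 : x ^ (2 ^ m) * x ^ (2 ^ k + 1) = x ^ (2 ^ k) := by
    have hh : x ^ (2 ^ m) * x ^ (2 ^ k + 1) = x ^ (2 ^ k) * (x ^ (2 ^ m) * x) := by ring
    rw [hh, exm, mul_one]
  linear_combination -e9 - e10

lemma aux_mem {m k : ℕ} (hme : Even m) {x : F} (hx : x ^ (2 ^ m + 1) = 1)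
    (hq : ∀ z : F, z ^ (2 ^ (2 * m)) = z) :
    ((x ^ (2 ^ k + 1) + x ^ (2 ^ k) + 1) / (x ^ (2 ^ k + 1) + x + 1)) ^ (2 ^ m + 1) = 1 := by
  have hC : x ^ (2 ^ k + 1) + x + 1 ≠ 0 := aux_C hme hx
  have hB := aux_B_eq (k := k) hx
  have e11 : ((x ^ (2 ^ k + 1) + x + 1) ^ (2 ^ m)) ^ (2 ^ m + 1)
      = (x ^ (2 ^ k + 1) + x + 1) ^ (2 ^ m + 1) := by
    rw [← pow_mul]
    have hh : 2 ^ m * (2 ^ m + 1) = 2 ^ (2 * m) + 2 ^ m := by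
      rw [two_mul m, pow_add]; ring
    rw [hh, pow_add, hq, ← pow_succ']
  have e12 : (x ^ (2 ^ k + 1)) ^ (2 ^ m + 1) = 1 := by
    rw [← pow_mul, mul_comm (2 ^ k + 1) (2 ^ m + 1), pow_mul, hx, one_pow]
  rw [div_pow, hB, mul_pow, e12, one_mul, e11, div_self (pow_ne_zero _ hC)]

lemma aux_inj {m k : ℕ} (hme : Even m) (hd : Nat.gcd k (2 * m) ∣ m)
    (hq : ∀ z : F, z ^ (2 ^ (2 * m)) = z) {x y : F}
    (hx : x ^ (2 ^ m + 1) = 1) (hy : y ^ (2 ^ m + 1) = 1)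
    (hBC : (x ^ (2 ^ k + 1) + x ^ (2 ^ k) + 1) * (y ^ (2 ^ k + 1) + y + 1)
      = (y ^ (2 ^ k + 1) + y ^ (2 ^ k) + 1) * (x ^ (2 ^ k + 1) + x + 1)) : x = y := by
  by_contra hne
  have h2 : (2 : F) = 0 := CharTwo.two_eq_zero
  have hu : x + y ≠ 0 := by
    intro h
    exact hne (by linear_combination h - y * h2)
  have ha1 : x * y + x + 1 ≠ 0 := aux_a1 hme hx hy
  have hb1 : x * y + y + 1 ≠ 0 := by
    have hh := aux_a1 hme hy hx
    intro h
    exact hh (by linear_combination h)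
  have hu_k : (x + y) ^ (2 ^ k) = x ^ (2 ^ k) + y ^ (2 ^ k) := add_pow_char_pow x y 2 k
  have ha1_k : (x * y + x + 1) ^ (2 ^ k) = x ^ (2 ^ k) * y ^ (2 ^ k) + x ^ (2 ^ k) + 1 := by
    rw [add_pow_char_pow, add_pow_char_pow, one_pow, mul_pow]
  have hR : (x + y) * ((x * y + x + 1) ^ (2 ^ k))
      = ((x + y) ^ (2 ^ k)) * (x * y + x + 1) := by
    rw [ha1_k, hu_k]
    rw [pow_succ x (2 ^ k), pow_succ y (2 ^ k)] at hBC
    linear_combination hBC + (x * x ^ (2 ^ k) * y ^ (2 ^ k) + x - x * y * x ^ (2 ^ k)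
      - x ^ (2 ^ k)) * h2
  set t : F := (x + y) / (x * y + x + 1) with hts
  have ht : t ^ (2 ^ k) = t := by
    rw [hts, div_pow, div_eq_div_iff (pow_ne_zero _ ha1) ha1]
    exact hR.symm
  have htg : t ^ (2 ^ Nat.gcd k (2 * m)) = t := aux_pow_gcd t k (2 * m) ht (hq t)
  obtain ⟨c, hc⟩ := hd
  have htm : t ^ (2 ^ m) = t := by rw [hc]; exact aux_pow_dvd htg c
  have exm : x ^ (2 ^ m) * x = 1 := by rw [← pow_succ]; exact hx
  have eym : y ^ (2 ^ m) * y = 1 := by rw [← pow_succ]; exact hy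
  have ha1m : (x * y + x + 1) ^ (2 ^ m) = x ^ (2 ^ m) * y ^ (2 ^ m) + x ^ (2 ^ m) + 1 := by
    rw [add_pow_char_pow, add_pow_char_pow, one_pow, mul_pow]
  have hum : (x + y) ^ (2 ^ m) = x ^ (2 ^ m) + y ^ (2 ^ m) := add_pow_char_pow x y 2 m
  have hden : x ^ (2 ^ m) * y ^ (2 ^ m) + x ^ (2 ^ m) + 1 ≠ 0 := by
    rw [← ha1m]; exact pow_ne_zero _ ha1
  have e30 : (x ^ (2 ^ m) + y ^ (2 ^ m)) * (x * y + x + 1)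
      = (x + y) * (x ^ (2 ^ m) * y ^ (2 ^ m) + x ^ (2 ^ m) + 1) := by
    have h' := htm
    rw [hts, div_pow, hum, ha1m, div_eq_div_iff hden ha1] at h'
    exact h'
  have e32 : (x + y) * (x * y + x + 1) = (x + y) * (x * y + y + 1) := by
    linear_combination (x * y) * e30
      + (x * y * y ^ (2 ^ m) + y ^ 2 * y ^ (2 ^ m) + y ^ 2 - x * y ^ 2 - y) * exm
      + (y - x ^ 2 * y - x ^ 2) * eym
  have hfin : (x * y + x + 1) = (x * y + y + 1) := mul_left_cancel₀ hu e32
  exact hne (by linear_combination hfin)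

lemma aux_split (k : ℕ) (s : ℤ) {x : F} (hx0 : x ≠ 0) :
    (x ^ ((2:ℤ) ^ k + 2 * s + 1) + x ^ ((2:ℤ) ^ k + 2 * s) + x ^ ((2:ℤ) ^ k + s + 1)
        + x ^ ((2:ℤ) ^ k + s) + x ^ ((2:ℤ) ^ k + 1) + x ^ ((2:ℤ) ^ k)
        + x ^ (2 * s) + x ^ s + 1
      = (x ^ s * x ^ s + x ^ s + 1) * (x ^ (2 ^ k + 1) + x ^ (2 ^ k) + 1))
    ∧ (x ^ ((2:ℤ) ^ k + 2 * s + 1) + x ^ ((2:ℤ) ^ k + s + 1) + x ^ ((2:ℤ) ^ k + 1)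
        + x ^ (2 * s + 1) + x ^ (2 * s) + x ^ (s + 1) + x ^ s + x + 1
      = (x ^ s * x ^ s + x ^ s + 1) * (x ^ (2 ^ k + 1) + x + 1)) := by
  have h2k : ((2:ℤ) ^ k) = ((2 ^ k : ℕ) : ℤ) := by push_cast; ring
  constructor <;>
  · simp only [h2k, two_mul, zpow_add₀ hx0, zpow_natCast, zpow_one]
    ring

lemma aux_A {m : ℕ} (hme : Even m) (s : ℤ) {x : F} (hx : x ^ (2 ^ m + 1) = 1) :
    x ^ s * x ^ s + x ^ s + 1 ≠ 0 := by
  have hw : (x ^ s) ^ (2 ^ m + 1) = 1 := by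
    rw [← zpow_natCast (x ^ s), ← zpow_mul, mul_comm s (((2 ^ m + 1 : ℕ) : ℤ)), zpow_mul,
      zpow_natCast, hx, one_zpow]
  intro h
  have h' : (x ^ s) ^ 2 + (x ^ s) + 1 = 0 := by rw [sq]; exact h
  exact aux_cube hme h' hw

end Aux

theorem stmt_6 (m k : ℕ) (hm : 0 < m) (hme : Even m) (hk : 0 < k)
    (hv : padicValNat 2 k ≤ padicValNat 2 m) (s : ℤ) :
    (∀ x : GaloisField 2 (2 * m), x ^ (2 ^ m + 1) = 1 →
        x ^ ((2:ℤ) ^ k + 2 * s + 1) + x ^ ((2:ℤ) ^ k + s + 1) + x ^ ((2:ℤ) ^ k + 1)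
          + x ^ (2 * s + 1) + x ^ (2 * s) + x ^ (s + 1) + x ^ s + x + 1 ≠ 0) ∧
      Set.BijOn
        (fun x : GaloisField 2 (2 * m) =>
          (x ^ ((2:ℤ) ^ k + 2 * s + 1) + x ^ ((2:ℤ) ^ k + 2 * s) + x ^ ((2:ℤ) ^ k + s + 1)
              + x ^ ((2:ℤ) ^ k + s) + x ^ ((2:ℤ) ^ k + 1) + x ^ ((2:ℤ) ^ k)
              + x ^ (2 * s) + x ^ s + 1) /
            (x ^ ((2:ℤ) ^ k + 2 * s + 1) + x ^ ((2:ℤ) ^ k + s + 1) + x ^ ((2:ℤ) ^ k + 1)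
              + x ^ (2 * s + 1) + x ^ (2 * s) + x ^ (s + 1) + x ^ s + x + 1))
        {x : GaloisField 2 (2 * m) | x ^ (2 ^ m + 1) = 1}
        {x : GaloisField 2 (2 * m) | x ^ (2 ^ m + 1) = 1} := by
  set F := GaloisField 2 (2 * m) with hF
  letI : Fintype F := Fintype.ofFinite F
  have hcardF : Fintype.card F = 2 ^ (2 * m) := by
    rw [← Nat.card_eq_fintype_card]
    exact GaloisField.card 2 (2 * m) (by omega)
  have hq : ∀ z : F, z ^ (2 ^ (2 * m)) = z := by
    intro z
    rw [← hcardF]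
    exact FiniteField.pow_card z
  have hd : Nat.gcd k (2 * m) ∣ m := aux_gcd_dvd hk hm hv
  have hval : ∀ x : F, x ^ (2 ^ m + 1) = 1 →
      (x ^ ((2:ℤ) ^ k + 2 * s + 1) + x ^ ((2:ℤ) ^ k + 2 * s) + x ^ ((2:ℤ) ^ k + s + 1)
          + x ^ ((2:ℤ) ^ k + s) + x ^ ((2:ℤ) ^ k + 1) + x ^ ((2:ℤ) ^ k)
          + x ^ (2 * s) + x ^ s + 1) /
        (x ^ ((2:ℤ) ^ k + 2 * s + 1) + x ^ ((2:ℤ) ^ k + s + 1) + x ^ ((2:ℤ) ^ k + 1)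
          + x ^ (2 * s + 1) + x ^ (2 * s) + x ^ (s + 1) + x ^ s + x + 1)
      = (x ^ (2 ^ k + 1) + x ^ (2 ^ k) + 1) / (x ^ (2 ^ k + 1) + x + 1) := by
    intro x hx
    obtain ⟨hN, hD⟩ := aux_split (F := F) k s (aux_ne0 hx)
    rw [hN, hD, mul_div_mul_left _ _ (aux_A hme s hx)]
  constructor
  · intro x hx
    obtain ⟨hN, hD⟩ := aux_split (F := F) k s (aux_ne0 hx)
    rw [hD]
    exact mul_ne_zero (aux_A hme s hx) (aux_C hme hx)
  · have hmaps : Set.MapsTo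
        (fun x : F =>
          (x ^ ((2:ℤ) ^ k + 2 * s + 1) + x ^ ((2:ℤ) ^ k + 2 * s) + x ^ ((2:ℤ) ^ k + s + 1)
              + x ^ ((2:ℤ) ^ k + s) + x ^ ((2:ℤ) ^ k + 1) + x ^ ((2:ℤ) ^ k)
              + x ^ (2 * s) + x ^ s + 1) /
            (x ^ ((2:ℤ) ^ k + 2 * s + 1) + x ^ ((2:ℤ) ^ k + s + 1) + x ^ ((2:ℤ) ^ k + 1)
              + x ^ (2 * s + 1) + x ^ (2 * s) + x ^ (s + 1) + x ^ s + x + 1))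
        {x : F | x ^ (2 ^ m + 1) = 1} {x : F | x ^ (2 ^ m + 1) = 1} := by
      intro x hx
      simp only [Set.mem_setOf_eq] at hx ⊢
      rw [hval x hx]
      exact aux_mem hme hx hq
    refine ((Set.toFinite _).injOn_iff_bijOn_of_mapsTo hmaps).mp ?_
    intro x hx y hy hfxy
    simp only [Set.mem_setOf_eq] at hx hy
    simp only [] at hfxy
    rw [hval x hx, hval y hy] at hfxy
    exact aux_inj hme hd hq hx hy
      ((div_eq_div_iff (aux_C hme hx) (aux_C hme hy)).mp hfxy)
end

section
/- Let m be an even positive integer, k a positive integer with gcd(2^k + 1, 2^m + 1) = 1, and s an integer. Let U = {x ∈ F_{2^{2m}} : x^{2^m+1} = 1}. Then the map sending x ∈ U to (x^{2^k+2s+1} + x^{2^k+2s} + x^{2^k+s+1} + x^{2^k+s} + x^{2^k+1} + x^{2^k} + x^{2s+1} + x^{s+1} + x)/(x^{2^k+2s} + x^{2^k+s} + x^{2^k} + x^{2s+1} + x^{2s} + x^{s+1} + x^s + x + 1) is well-defined (the denominator never vanishes on U) and is a bijection from U to U. -/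
/-!
Write `q = 2^k` and `y = x^s`. Numerator and denominator share the factor `y² + y + 1`, which does
not vanish on `U` because `3 ∤ 2^m + 1`; what remains is the map
`g(x) = (x^{q+1} + x^q + x) / (x^q + x + 1)`, independent of `s`. It maps `U` to `U` because the
conjugation `u ↦ u^{2^m}` sends its numerator to its denominator up to the factor `x^{q+1}`.

For injectivity take a primitive cube root of unity `ω ∈ F_{2^{2m}}` and the Cayley transform
`φ(x) = (x + ω²)/(x + ω)`. In characteristic 2 one has `φ(g x) φ(x^q) φ(x) = 1` and
`φ(x²) = φ(x)^{-2}`, hence `φ(g x) = φ(x)^{-(1 + (-2)^k)}`, while `φ(x)^{2^m+1} = ω` on `U`. So if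
`g x₁ = g x₂`, the quotient `φ(x₁)/φ(x₂)` is killed by both `1 + (-2)^k` and `2^m + 1`. These are
coprime: for even `k` by hypothesis, for odd `k` because `gcd(2^k - 1, 2^m + 1) = 1`. Hence
`φ(x₁) = φ(x₂)`, so `x₁ = x₂`, and an injective self-map of the finite set `U` is a bijection.
-/

theorem Nat.two_pow_mod_three_of_even {m : ℕ} (hm : Even m) : 2 ^ m % 3 = 1 := by
  obtain ⟨j, rfl⟩ := hm
  rw [← two_mul, pow_mul, Nat.pow_mod]
  norm_num

theorem Nat.coprime_two_pow_sub_one_two_pow_add_one {k m : ℕ} (hk : Odd k) :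
    Nat.Coprime (2 ^ k - 1) (2 ^ m + 1) := by
  set d := Nat.gcd (2 ^ k - 1) (2 ^ m + 1)
  have hd_pow_gcd : d ∣ 2 ^ Nat.gcd k (2 * m) - 1 := by
    rw [← Nat.pow_sub_one_gcd_pow_sub_one]
    refine Nat.dvd_gcd (Nat.gcd_dvd_left _ _) ((Nat.gcd_dvd_right _ _).trans ?_)
    rw [pow_mul', ← one_pow 2, Nat.sq_sub_sq]
    exact Dvd.intro _ rfl
  have hgm : Nat.gcd k (2 * m) ∣ m :=
    ((Nat.coprime_two_right.2 hk).coprime_dvd_left (Nat.gcd_dvd_left _ _)).dvd_of_dvd_mul_left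
      (Nat.gcd_dvd_right _ _)
  have hd_sub : d ∣ 2 ^ m - 1 := hd_pow_gcd.trans (Nat.pow_sub_one_dvd_pow_sub_one 2 hgm)
  have hd_two : d ∣ 2 := by
    have := Nat.dvd_sub (Nat.gcd_dvd_right _ _) hd_sub
    rwa [show 2 ^ m + 1 - (2 ^ m - 1) = 2 by have := Nat.one_le_two_pow (n := m); omega] at this
  have hd_odd : ¬ 2 ∣ d := fun h => by
    have h2 := h.trans (Nat.gcd_dvd_left _ _)
    have : 2 ∣ 2 ^ k := dvd_pow_self 2 hk.pos.ne'
    have := Nat.one_le_two_pow (n := k)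
    omega
  rcases (Nat.dvd_prime Nat.prime_two).1 hd_two with h | h
  · exact h
  · exact absurd (h ▸ dvd_rfl) hd_odd

theorem Nat.coprime_natAbs_neg_two_pow_add_one {k m : ℕ}
    (hcop : Nat.Coprime (2 ^ k + 1) (2 ^ m + 1)) :
    Nat.Coprime ((-2 : ℤ) ^ k + 1).natAbs (2 ^ m + 1) := by
  rcases k.even_or_odd with hk | hk
  · rwa [hk.neg_pow, show (2 : ℤ) ^ k + 1 = ((2 ^ k + 1 : ℕ) : ℤ) by push_cast; rfl,
      Int.natAbs_natCast]
  · have := Nat.one_le_two_pow (n := k)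
    rw [hk.neg_pow, show -(2 : ℤ) ^ k + 1 = -((2 ^ k - 1 : ℕ) : ℤ) by push_cast [this]; ring,
      Int.natAbs_neg, Int.natAbs_natCast]
    exact Nat.coprime_two_pow_sub_one_two_pow_add_one hk

theorem eq_of_zpow_eq_of_pow_eq {G₀ : Type*} [CommGroupWithZero G₀] {a b : G₀}
    (ha : a ≠ 0) (hb : b ≠ 0) {i : ℤ} {n : ℕ} (hi : a ^ i = b ^ i) (hn : a ^ n = b ^ n)
    (hcop : Nat.Coprime i.natAbs n) : a = b := by
  lift a to G₀ˣ using ha.isUnit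
  lift b to G₀ˣ using hb.isUnit
  norm_cast at hi hn ⊢
  rw [← div_eq_one] at hi hn ⊢
  rw [← div_zpow] at hi
  rw [← div_pow] at hn
  exact (pow_eq_one_iff_of_coprime hcop).1 ⟨pow_natAbs_eq_one.2 hi, hn⟩

theorem exists_sq_add_self_add_one_eq_zero {F : Type*} [Field F] [Finite F]
    (h : 3 ∣ Nat.card F - 1) : ∃ ω : F, ω ^ 2 + ω + 1 = 0 := by
  obtain ⟨u, hu⟩ := exists_prime_orderOf_dvd_card' (G := Fˣ) 3 (by rwa [Nat.card_units])
  have hu3 : (u : F) ^ 3 = 1 := by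
    rw [← Units.val_pow_eq_pow_val, ← hu, pow_orderOf_eq_one]; rfl
  have hu1 : (u : F) - 1 ≠ 0 := sub_ne_zero.2 fun h => by
    rw [Units.val_eq_one.1 h, orderOf_one] at hu
    omega
  refine ⟨u, (mul_eq_zero.1 ?_).resolve_left hu1⟩
  linear_combination hu3

theorem ne_zero_of_pow_succ_eq_one {M₀ : Type*} [MonoidWithZero M₀] [Nontrivial M₀] {x : M₀}
    {n : ℕ} (hx : x ^ (n + 1) = 1) : x ≠ 0 := by
  rintro rfl
  simp at hx

theorem pow_eq_inv_of_pow_succ_eq_one {G₀ : Type*} [GroupWithZero G₀] {x : G₀} {n : ℕ}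
    (hx : x ^ (n + 1) = 1) : x ^ n = x⁻¹ :=
  eq_inv_of_mul_eq_one_left (by rwa [← pow_succ])

theorem pow_pow_eq_one {M : Type*} [Monoid M] {x : M} {n : ℕ} (hx : x ^ n = 1) (a : ℕ) :
    (x ^ a) ^ n = 1 := by
  rw [pow_right_comm, hx, one_pow]

theorem pow_three_eq_one {R : Type*} [CommRing R] {ω : R} (hω : ω ^ 2 + ω + 1 = 0) :
    ω ^ 3 = 1 := by
  linear_combination (ω - 1) * hω

section Cayley

variable {F : Type*} [Field F] {ω : F}

def cayley (ω x : F) : F := (x + ω ^ 2) / (x + ω)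

theorem cayley_inv (hω : ω ^ 2 + ω + 1 = 0) {x : F} (hx : x ≠ 0) :
    cayley ω x⁻¹ = ω * (cayley ω x)⁻¹ := by
  have hω0 : ω ≠ 0 := by rintro rfl; simp at hω
  have hnum : x⁻¹ + ω ^ 2 = ω ^ 2 * x⁻¹ * (x + ω) := by
    field_simp
    linear_combination -pow_three_eq_one hω
  have hden : x⁻¹ + ω = ω * x⁻¹ * (x + ω ^ 2) := by
    field_simp
    linear_combination -pow_three_eq_one hω
  rw [cayley, cayley, hnum, hden, inv_div]
  field_simp

end Cayley

section CharTwo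

variable {F : Type*} [Field F] [CharP F 2] {m : ℕ}

theorem sq_add_self_add_one_ne_zero (hm : Even m) {x : F} (hx : x ^ (2 ^ m + 1) = 1) :
    x ^ 2 + x + 1 ≠ 0 := by
  intro h
  have h3 : x ^ 3 = 1 := by
    linear_combination (x + 1) * h - (x ^ 2 + x + 1) * CharTwo.two_eq_zero (R := F)
  have hcop : Nat.Coprime 3 (2 ^ m + 1) := by
    rw [Nat.Prime.coprime_iff_not_dvd Nat.prime_three]
    have := Nat.two_pow_mod_three_of_even hm
    omega
  have hx1 : x = 1 := (pow_eq_one_iff_of_coprime hcop).1 ⟨h3, hx⟩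
  subst hx1
  exact one_ne_zero (by linear_combination h - CharTwo.two_eq_zero (R := F))

variable {a b : F}

theorem add_add_one_pow_two_pow_mul (ha : a ^ (2 ^ m + 1) = 1) (hb : b ^ (2 ^ m + 1) = 1) :
    (a + b + 1) ^ 2 ^ m * (a * b) = a * b + a + b := by
  have ha0 := ne_zero_of_pow_succ_eq_one ha
  have hb0 := ne_zero_of_pow_succ_eq_one hb
  rw [add_pow_char_pow, add_pow_char_pow, one_pow, pow_eq_inv_of_pow_succ_eq_one ha,
    pow_eq_inv_of_pow_succ_eq_one hb]
  field_simp
  ring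

theorem mul_add_add_pow_two_pow_mul (ha : a ^ (2 ^ m + 1) = 1) (hb : b ^ (2 ^ m + 1) = 1) :
    (a * b + a + b) ^ 2 ^ m * (a * b) = a + b + 1 := by
  have ha0 := ne_zero_of_pow_succ_eq_one ha
  have hb0 := ne_zero_of_pow_succ_eq_one hb
  rw [add_pow_char_pow, add_pow_char_pow, mul_pow, pow_eq_inv_of_pow_succ_eq_one ha,
    pow_eq_inv_of_pow_succ_eq_one hb]
  field_simp
  ring

def ratFun (k : ℕ) (x : F) : F := (x ^ 2 ^ k * x + x ^ 2 ^ k + x) / (x ^ 2 ^ k + x + 1)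

theorem ratFun_denom_ne_zero (hm : Even m) (k : ℕ) {x : F} (hx : x ^ (2 ^ m + 1) = 1) :
    x ^ 2 ^ k + x + 1 ≠ 0 := by
  intro hD
  have hN := add_add_one_pow_two_pow_mul (pow_pow_eq_one hx (2 ^ k)) hx
  rw [hD, zero_pow (by positivity), zero_mul] at hN
  apply sq_add_self_add_one_ne_zero hm hx
  linear_combination
    (1 + x) * hD - hN - (x + x * x ^ 2 ^ k + x ^ 2 ^ k) * CharTwo.two_eq_zero (R := F)

theorem ratFun_mapsTo (hm : Even m) (k : ℕ) :
    Set.MapsTo (ratFun k) {x : F | x ^ (2 ^ m + 1) = 1} {x : F | x ^ (2 ^ m + 1) = 1} := by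
  intro x (hx : x ^ (2 ^ m + 1) = 1)
  have hX := pow_pow_eq_one hx (2 ^ k)
  have hD := ratFun_denom_ne_zero hm k hx
  have hXx : x ^ 2 ^ k * x ≠ 0 := by
    have := ne_zero_of_pow_succ_eq_one hx
    positivity
  have hDN := add_add_one_pow_two_pow_mul hX hx
  have hND := mul_add_add_pow_two_pow_mul hX hx
  change (ratFun k x) ^ (2 ^ m + 1) = 1
  rw [ratFun, div_pow, div_eq_one_iff_eq (pow_ne_zero _ hD)]
  apply mul_right_cancel₀ hXx
  rw [pow_succ, pow_succ]
  linear_combination (x ^ 2 ^ k * x + x ^ 2 ^ k + x) * hND - (x ^ 2 ^ k + x + 1) * hDN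

variable {ω : F}

theorem sq_add_self_add_one_eq_mul (hω : ω ^ 2 + ω + 1 = 0) (x : F) :
    x ^ 2 + x + 1 = (x + ω) * (x + ω ^ 2) := by
  linear_combination (-x - (ω - 1)) * hω + x * CharTwo.two_eq_zero (R := F)

theorem add_ne_zero_of_pow_eq_one (hω : ω ^ 2 + ω + 1 = 0) (hm : Even m) {x : F}
    (hx : x ^ (2 ^ m + 1) = 1) : x + ω ≠ 0 ∧ x + ω ^ 2 ≠ 0 := by
  rw [← mul_ne_zero_iff, ← sq_add_self_add_one_eq_mul hω]
  exact sq_add_self_add_one_ne_zero hm hx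

theorem cayley_ne_zero (hω : ω ^ 2 + ω + 1 = 0) (hm : Even m) {x : F}
    (hx : x ^ (2 ^ m + 1) = 1) : cayley ω x ≠ 0 :=
  div_ne_zero (add_ne_zero_of_pow_eq_one hω hm hx).2 (add_ne_zero_of_pow_eq_one hω hm hx).1

theorem cayley_sq (hω : ω ^ 2 + ω + 1 = 0) (x : F) :
    cayley ω (x ^ 2) = (cayley ω x ^ 2)⁻¹ := by
  have hω4 : (ω ^ 2) ^ 2 = ω := by linear_combination ω * pow_three_eq_one hω
  rw [cayley, cayley, div_pow, inv_div, CharTwo.add_sq, CharTwo.add_sq, hω4]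

theorem cayley_pow_two_pow (hω : ω ^ 2 + ω + 1 = 0) (x : F) (k : ℕ) :
    cayley ω (x ^ 2 ^ k) = cayley ω x ^ ((-2 : ℤ) ^ k) := by
  induction k with
  | zero => simp
  | succ k ih =>
    rw [pow_succ 2 k, pow_mul, cayley_sq hω, ih, pow_succ (-2 : ℤ) k, zpow_mul, zpow_neg,
      zpow_ofNat]

theorem cayley_pow_two_pow_add_one (hω : ω ^ 2 + ω + 1 = 0) (hm : Even m) {x : F}
    (hx : x ^ (2 ^ m + 1) = 1) : cayley ω x ^ (2 ^ m + 1) = ω := by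
  have hconj : cayley ω x ^ 2 ^ m = ω * (cayley ω x)⁻¹ := by
    have h2m : (-2 : ℤ) ^ m = ((2 ^ m : ℕ) : ℤ) := by rw [hm.neg_pow]; push_cast; rfl
    rw [← zpow_natCast, ← h2m, ← cayley_pow_two_pow hω, pow_eq_inv_of_pow_succ_eq_one hx,
      cayley_inv hω (ne_zero_of_pow_succ_eq_one hx)]
  rw [pow_succ, hconj, inv_mul_cancel_right₀ (cayley_ne_zero hω hm hx)]

theorem cayley_injOn (hω : ω ^ 2 + ω + 1 = 0) :
    Set.InjOn (cayley ω) {x : F | x + ω ≠ 0} := by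
  intro x₁ (h₁ : x₁ + ω ≠ 0) x₂ (h₂ : x₂ + ω ≠ 0) h
  rw [cayley, cayley, div_eq_div_iff h₁ h₂] at h
  linear_combination h + (x₁ - x₂) * hω - ω * (x₁ - x₂) * CharTwo.two_eq_zero (R := F)

theorem cayley_ratFun_mul_mul (hω : ω ^ 2 + ω + 1 = 0) {k : ℕ} {x : F}
    (hD : x ^ 2 ^ k + x + 1 ≠ 0) (hy : ratFun k x + ω ≠ 0) (hX : x ^ 2 ^ k + ω ≠ 0)
    (hx : x + ω ≠ 0) :
    cayley ω (ratFun k x) * (cayley ω (x ^ 2 ^ k) * cayley ω x) = 1 := by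
  have hrel : ratFun k x * (x ^ 2 ^ k + x + 1) = x ^ 2 ^ k * x + x ^ 2 ^ k + x :=
    div_mul_cancel₀ _ hD
  have hω2 : ω ^ 2 = ω + 1 := by
    linear_combination hω - (ω + 1) * CharTwo.two_eq_zero (R := F)
  set y := ratFun k x
  set X := x ^ 2 ^ k
  rw [cayley, cayley, cayley, div_mul_div_comm, div_mul_div_comm,
    div_eq_one_iff_eq (mul_ne_zero hy (mul_ne_zero hX hx)), hω2]
  linear_combination hrel + hω +
    (X * x + ω * (y + X + x) + X + x + ω ^ 2 + ω) * CharTwo.two_eq_zero (R := F)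

theorem cayley_ratFun (hω : ω ^ 2 + ω + 1 = 0) (hm : Even m) (k : ℕ) {x : F}
    (hx : x ^ (2 ^ m + 1) = 1) :
    cayley ω (ratFun k x) = cayley ω x ^ (-((-2 : ℤ) ^ k + 1)) := by
  have hmul := cayley_ratFun_mul_mul hω (ratFun_denom_ne_zero hm k hx)
    (add_ne_zero_of_pow_eq_one hω hm (ratFun_mapsTo hm k hx)).1
    (add_ne_zero_of_pow_eq_one hω hm (pow_pow_eq_one hx (2 ^ k))).1
    (add_ne_zero_of_pow_eq_one hω hm hx).1
  rw [eq_inv_of_mul_eq_one_left hmul, cayley_pow_two_pow hω, zpow_neg,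
    zpow_add_one₀ (cayley_ne_zero hω hm hx)]

theorem ratFun_injOn (hω : ω ^ 2 + ω + 1 = 0) (hm : Even m) {k : ℕ}
    (hcop : Nat.Coprime ((-2 : ℤ) ^ k + 1).natAbs (2 ^ m + 1)) :
    Set.InjOn (ratFun k) {x : F | x ^ (2 ^ m + 1) = 1} := by
  intro x₁ (hx₁ : x₁ ^ (2 ^ m + 1) = 1) x₂ (hx₂ : x₂ ^ (2 ^ m + 1) = 1) h
  refine cayley_injOn hω (add_ne_zero_of_pow_eq_one hω hm hx₁).1
    (add_ne_zero_of_pow_eq_one hω hm hx₂).1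
    (eq_of_zpow_eq_of_pow_eq (i := -((-2 : ℤ) ^ k + 1)) (n := 2 ^ m + 1)
      (cayley_ne_zero hω hm hx₁) (cayley_ne_zero hω hm hx₂) ?_ ?_ ?_)
  · rw [← cayley_ratFun hω hm k hx₁, ← cayley_ratFun hω hm k hx₂, h]
  · rw [cayley_pow_two_pow_add_one hω hm hx₁, cayley_pow_two_pow_add_one hω hm hx₂]
  · rwa [Int.natAbs_neg]

theorem ratFun_bijOn [Finite F] (hω : ω ^ 2 + ω + 1 = 0) (hm : Even m) {k : ℕ}
    (hcop : Nat.Coprime (2 ^ k + 1) (2 ^ m + 1)) :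
    Set.BijOn (ratFun k) {x : F | x ^ (2 ^ m + 1) = 1} {x : F | x ^ (2 ^ m + 1) = 1} :=
  ((Set.toFinite _).injOn_iff_bijOn_of_mapsTo (ratFun_mapsTo hm k)).1
    (ratFun_injOn hω hm (Nat.coprime_natAbs_neg_two_pow_add_one hcop))

end CharTwo

section ZpowExpansion

variable {F : Type*} [Field F] {x : F}

theorem zpow_expansion_eq_denom_mul (hx : x ≠ 0) (k : ℕ) (s : ℤ) :
    x ^ ((2:ℤ) ^ k + 2 * s) + x ^ ((2:ℤ) ^ k + s) + x ^ ((2:ℤ) ^ k)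
        + x ^ (2 * s + 1) + x ^ (2 * s) + x ^ (s + 1) + x ^ s + x + 1
      = (x ^ 2 ^ k + x + 1) * ((x ^ s) ^ 2 + x ^ s + 1) := by
  have hq : x ^ ((2:ℤ) ^ k) = x ^ 2 ^ k := by exact_mod_cast zpow_natCast x (2 ^ k)
  simp only [zpow_add₀ hx, zpow_mul', hq, zpow_ofNat]
  ring

theorem zpow_expansion_eq_numer_mul (hx : x ≠ 0) (k : ℕ) (s : ℤ) :
    x ^ ((2:ℤ) ^ k + 2 * s + 1) + x ^ ((2:ℤ) ^ k + 2 * s) + x ^ ((2:ℤ) ^ k + s + 1)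
        + x ^ ((2:ℤ) ^ k + s) + x ^ ((2:ℤ) ^ k + 1) + x ^ ((2:ℤ) ^ k)
        + x ^ (2 * s + 1) + x ^ (s + 1) + x
      = (x ^ 2 ^ k * x + x ^ 2 ^ k + x) * ((x ^ s) ^ 2 + x ^ s + 1) := by
  have hq : x ^ ((2:ℤ) ^ k) = x ^ 2 ^ k := by exact_mod_cast zpow_natCast x (2 ^ k)
  simp only [zpow_add₀ hx, zpow_mul', hq, zpow_ofNat]
  ring

end ZpowExpansion

theorem stmt_7_general (m k : ℕ) (hm : 0 < m) (hme : Even m)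
    (hgcd : Nat.gcd (2 ^ k + 1) (2 ^ m + 1) = 1) (s : ℤ) :
    (∀ x : GaloisField 2 (2 * m), x ^ (2 ^ m + 1) = 1 →
        x ^ ((2:ℤ) ^ k + 2 * s) + x ^ ((2:ℤ) ^ k + s) + x ^ ((2:ℤ) ^ k)
          + x ^ (2 * s + 1) + x ^ (2 * s) + x ^ (s + 1) + x ^ s + x + 1 ≠ 0) ∧
      Set.BijOn
        (fun x : GaloisField 2 (2 * m) =>
          (x ^ ((2:ℤ) ^ k + 2 * s + 1) + x ^ ((2:ℤ) ^ k + 2 * s) + x ^ ((2:ℤ) ^ k + s + 1)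
              + x ^ ((2:ℤ) ^ k + s) + x ^ ((2:ℤ) ^ k + 1) + x ^ ((2:ℤ) ^ k)
              + x ^ (2 * s + 1) + x ^ (s + 1) + x) /
            (x ^ ((2:ℤ) ^ k + 2 * s) + x ^ ((2:ℤ) ^ k + s) + x ^ ((2:ℤ) ^ k)
              + x ^ (2 * s + 1) + x ^ (2 * s) + x ^ (s + 1) + x ^ s + x + 1))
        {x : GaloisField 2 (2 * m) | x ^ (2 ^ m + 1) = 1}
        {x : GaloisField 2 (2 * m) | x ^ (2 ^ m + 1) = 1} := by
  obtain ⟨ω, hω⟩ : ∃ ω : GaloisField 2 (2 * m), ω ^ 2 + ω + 1 = 0 := by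
    apply exists_sq_add_self_add_one_eq_zero
    have := Nat.two_pow_mod_three_of_even (even_two_mul m)
    rw [GaloisField.card 2 (2 * m) (by omega)]
    omega
  have hfactor {x : GaloisField 2 (2 * m)} (hx : x ^ (2 ^ m + 1) = 1) :
      (x ^ s) ^ 2 + x ^ s + 1 ≠ 0 := by
    refine sq_add_self_add_one_ne_zero hme ?_
    rw [← zpow_natCast, ← zpow_mul', zpow_mul, zpow_natCast, hx, one_zpow]
  refine ⟨fun x hx => ?_, (ratFun_bijOn hω hme hgcd).congr fun x hx => ?_⟩
  · rw [zpow_expansion_eq_denom_mul (ne_zero_of_pow_succ_eq_one hx)]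
    exact mul_ne_zero (ratFun_denom_ne_zero hme k hx) (hfactor hx)
  · have hx0 := ne_zero_of_pow_succ_eq_one hx
    rw [zpow_expansion_eq_numer_mul hx0, zpow_expansion_eq_denom_mul hx0,
      mul_div_mul_right _ _ (hfactor hx), ratFun]

theorem stmt_7 (m k : ℕ) (hm : 0 < m) (hme : Even m) (hk : 0 < k)
    (hgcd : Nat.gcd (2 ^ k + 1) (2 ^ m + 1) = 1) (s : ℤ) :
    (∀ x : GaloisField 2 (2 * m), x ^ (2 ^ m + 1) = 1 →
        x ^ ((2:ℤ) ^ k + 2 * s) + x ^ ((2:ℤ) ^ k + s) + x ^ ((2:ℤ) ^ k)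
          + x ^ (2 * s + 1) + x ^ (2 * s) + x ^ (s + 1) + x ^ s + x + 1 ≠ 0) ∧
      Set.BijOn
        (fun x : GaloisField 2 (2 * m) =>
          (x ^ ((2:ℤ) ^ k + 2 * s + 1) + x ^ ((2:ℤ) ^ k + 2 * s) + x ^ ((2:ℤ) ^ k + s + 1)
              + x ^ ((2:ℤ) ^ k + s) + x ^ ((2:ℤ) ^ k + 1) + x ^ ((2:ℤ) ^ k)
              + x ^ (2 * s + 1) + x ^ (s + 1) + x) /
            (x ^ ((2:ℤ) ^ k + 2 * s) + x ^ ((2:ℤ) ^ k + s) + x ^ ((2:ℤ) ^ k)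
              + x ^ (2 * s + 1) + x ^ (2 * s) + x ^ (s + 1) + x ^ s + x + 1))
        {x : GaloisField 2 (2 * m) | x ^ (2 ^ m + 1) = 1}
        {x : GaloisField 2 (2 * m) | x ^ (2 ^ m + 1) = 1} :=
  stmt_7_general m k hm hme hgcd s
end

section
/- Let m be an even positive integer, k a positive integer, and s an integer with v_2(k) ≤ v_2(m) and gcd(2^k + 2s + 1, 2^m - 1) = 1. Then the polynomial f(x) = x^{2^{k+m}+s·2^{m+1}+2^m} + x^{2^{k+m}+s·2^m+2^m+s} + x^{2^{k+m}+2^m+2s} + x^{s·2^{m+1}+2^m+2^k} + x^{s·2^{m+1}+2^k+1} + x^{s·2^m+2^m+2^k+s} + x^{s·2^m+2^k+s+1} + x^{2^m+2^k+2s} + x^{2^k+2s+1} is a permutation polynomial of F_{2^{2m}}. -/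
/-! Write `q = 2 ^ m` and `r = 2 ^ k + 2 * s + 1`. For `x ≠ 0` the element `u = x ^ (q - 1)` lies
in the group `μ_{q+1}` of `(q + 1)`-th roots of unity, and the polynomial factors as
`f x = x ^ r * A u * C u` with `A = trinomial (2 ^ k + 1) 1` and `C = trinomial (2 * s) s`.
By the criterion of Akbary, Ghioca and Wang, `f` permutes `𝔽_{q²}` because `gcd r (q - 1) = 1`,
`A * C` has no zero on `μ_{q+1}`, and `u ↦ u ^ r * (A u * C u) ^ (q - 1) = B u / A u` is injective
on `μ_{q+1}`, where `B = trinomial (2 ^ k + 1) (2 ^ k)` is the reciprocal of `A`.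

The hypothesis `v₂ k ≤ v₂ m` says that `𝔽_{2^k} ∩ 𝔽_{q²} ⊆ 𝔽_q`, and `m` even gives
`𝔽₄ ⊆ 𝔽_q`; since `μ_{q+1} ∩ 𝔽_q = {1}`, this keeps `A` and `C` from vanishing on `μ_{q+1}`.
For the injectivity, `u ↦ (u + 1)⁻¹` maps `μ_{q+1} \ {1}` to the line `c ^ q = c + 1` without
changing `B / A`. If two points `x ≠ y` of the line have the same value, then
`(x ^ 2 + x + 1) / (x + y) + x` is fixed by `z ↦ z ^ 2 ^ k`, hence lies in `𝔽_q`, and so does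
`(x ^ 2 + x + 1) / (x + y)`; therefore `x ∈ 𝔽_q`, contradicting `x ^ q = x + 1`. -/

open Function

theorem isPeriodicPt_pow_iff {M : Type*} [Monoid M] {p n : ℕ} {z : M} :
    IsPeriodicPt (· ^ p) n z ↔ z ^ p ^ n = z := by
  simp [IsPeriodicPt, IsFixedPt, pow_iterate]

theorem Nat.gcd_two_mul_dvd_of_padicValNat_le {k m : ℕ} (hk : k ≠ 0)
    (hv : padicValNat 2 k ≤ padicValNat 2 m) : Nat.gcd k (2 * m) ∣ m := by
  obtain ⟨e, d, hd, hgcd⟩ := Nat.exists_eq_two_pow_mul_odd (Nat.gcd_ne_zero_left (n := 2 * m) hk)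
  have hek : e ≤ padicValNat 2 k := ((padicValNat_dvd_iff e k).1
    ((Dvd.intro d hgcd.symm).trans (Nat.gcd_dvd_left _ _))).resolve_left hk
  have hem : 2 ^ e ∣ m := (padicValNat_dvd_iff e m).2 (Or.inr (hek.trans hv))
  have hdm : d ∣ m := hd.coprime_two_right.dvd_of_dvd_mul_left
    ((Dvd.intro_left _ hgcd.symm).trans (Nat.gcd_dvd_right _ _))
  rw [hgcd]
  exact Nat.Coprime.mul_dvd_of_dvd_of_dvd (hd.coprime_two_left.pow_left e) hem hdm

theorem FiniteField.pow_two_pow_eq_self_of_padicValNat_le {F : Type*} [Field F] [Finite F]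
    {m k : ℕ} (hF : Nat.card F = 2 ^ (2 * m)) (hk : k ≠ 0)
    (hv : padicValNat 2 k ≤ padicValNat 2 m) {z : F} (hz : z ^ 2 ^ k = z) : z ^ 2 ^ m = z := by
  have : Fintype F := Fintype.ofFinite F
  have hzF : IsPeriodicPt (· ^ 2) (2 * m) z := isPeriodicPt_pow_iff.2 <| by
    rw [← hF, Nat.card_eq_fintype_card, FiniteField.pow_card]
  exact isPeriodicPt_pow_iff.1 (((isPeriodicPt_pow_iff.2 hz).gcd hzF).trans_dvd
    (Nat.gcd_two_mul_dvd_of_padicValNat_le hk hv))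

theorem pow_eq_inv_of_pow_succ_eq_one_s8 {M : Type*} [DivisionMonoid M] {n : ℕ} {u : M}
    (hu : u ^ (n + 1) = 1) : u ^ n = u⁻¹ :=
  eq_inv_of_mul_eq_one_left (by rwa [← pow_succ])

theorem bijective_pow_mul_comp_pow_sub_one {F : Type*} [Field F] [Finite F] {q r : ℕ}
    (hF : Nat.card F = q ^ 2) (hr : r ≠ 0) (hcop : r.Coprime (q - 1)) {h : F → F}
    (hh : ∀ u : F, u ^ (q + 1) = 1 → h u ≠ 0)
    (hinj : Set.InjOn (fun u => u ^ r * h u ^ (q - 1)) {u | u ^ (q + 1) = 1}) :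
    Function.Bijective fun x => x ^ r * h (x ^ (q - 1)) := by
  have : Fintype F := Fintype.ofFinite F
  have hcirc : ∀ x : F, x ≠ 0 → (x ^ (q - 1)) ^ (q + 1) = 1 := by
    intro x hx
    rw [← pow_mul, mul_comm, ← one_pow 2, ← Nat.sq_sub_sq, one_pow, ← hF,
      Nat.card_eq_fintype_card]
    exact FiniteField.pow_card_sub_one_eq_one x hx
  have hne : ∀ x : F, x ≠ 0 → x ^ r * h (x ^ (q - 1)) ≠ 0 := fun x hx =>
    mul_ne_zero (pow_ne_zero r hx) (hh _ (hcirc x hx))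
  have hpow : ∀ x : F, (x ^ r * h (x ^ (q - 1))) ^ (q - 1)
      = (x ^ (q - 1)) ^ r * h (x ^ (q - 1)) ^ (q - 1) := fun x => by
    rw [mul_pow, ← pow_mul, ← pow_mul, mul_comm r]
  rw [← Finite.injective_iff_bijective]
  intro a b hab
  simp only at hab
  obtain rfl | ha := eq_or_ne a 0
  · by_contra hb
    exact hne b (Ne.symm hb) (by rw [← hab, zero_pow hr, zero_mul])
  obtain rfl | hb := eq_or_ne b 0
  · exact absurd (by rw [hab, zero_pow hr, zero_mul]) (hne a ha)
  have huv : a ^ (q - 1) = b ^ (q - 1) :=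
    hinj (hcirc a ha) (hcirc b hb) (by simpa only [hpow] using congrArg (· ^ (q - 1)) hab)
  have hab' : a ^ r = b ^ r := mul_right_cancel₀ (hh _ (hcirc b hb)) (by rwa [huv] at hab)
  have hgcd : (a / b) ^ r.gcd (q - 1) = 1 := pow_gcd_eq_one.2
    ⟨by rw [div_pow, hab', div_self (pow_ne_zero r hb)],
      by rw [div_pow, huv, div_self (pow_ne_zero _ hb)]⟩
  rwa [hcop, pow_one, div_eq_one_iff_eq hb] at hgcd

def trinomial {R : Type*} [Semiring R] (a b : ℕ) (u : R) : R := u ^ a + u ^ b + 1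

section CharTwo

variable {F : Type*} [Field F] [CharP F 2]

theorem trinomial_pow_two_pow (m a b : ℕ) (u : F) :
    trinomial a b u ^ 2 ^ m = trinomial a b (u ^ 2 ^ m) := by
  simp only [trinomial, add_pow_char_pow, one_pow, ← pow_mul, mul_comm]

theorem trinomial_one (a b : ℕ) : trinomial a b (1 : F) = 1 := by
  simp only [trinomial, one_pow]
  grind

theorem eq_one_of_pow_succ_eq_one_of_pow_eq_self {n : ℕ} {u : F} (h1 : u ^ (n + 1) = 1)
    (hn : u ^ n = u) : u = 1 := by
  rw [pow_succ, hn] at h1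
  grind

theorem pow_mul_trinomial_pow_two_pow {m a b c : ℕ} {u : F} (hu : u ^ (2 ^ m + 1) = 1)
    (habc : a = b + c) : u ^ a * trinomial a b u ^ 2 ^ m = trinomial a c u := by
  have hu0 : u ≠ 0 := by rintro rfl; simp at hu
  rw [trinomial_pow_two_pow, pow_eq_inv_of_pow_succ_eq_one_s8 hu, habc]
  simp only [trinomial, inv_pow, pow_add]
  field_simp
  ring

theorem pow_mul_trinomial_mul_trinomial_pow_sub_one {m k s : ℕ} {u : F} (hu : u ^ (2 ^ m + 1) = 1)
    (hA : trinomial (2 ^ k + 1) 1 u ≠ 0) (hC : trinomial (2 * s) s u ≠ 0) :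
    u ^ (2 ^ k + 2 * s + 1) * (trinomial (2 ^ k + 1) 1 u * trinomial (2 * s) s u) ^ (2 ^ m - 1)
      = trinomial (2 ^ k + 1) (2 ^ k) u / trinomial (2 ^ k + 1) 1 u := by
  rw [pow_sub₀ _ (mul_ne_zero hA hC) Nat.one_le_two_pow, pow_one]
  calc _ = (u ^ (2 ^ k + 1) * trinomial (2 ^ k + 1) 1 u ^ 2 ^ m)
        * (u ^ (2 * s) * trinomial (2 * s) s u ^ 2 ^ m)
        / (trinomial (2 ^ k + 1) 1 u * trinomial (2 * s) s u) := by ring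
    _ = trinomial (2 ^ k + 1) (2 ^ k) u * trinomial (2 * s) s u
        / (trinomial (2 ^ k + 1) 1 u * trinomial (2 * s) s u) := by
      rw [pow_mul_trinomial_pow_two_pow hu (add_comm _ _),
        pow_mul_trinomial_pow_two_pow hu (two_mul s)]
    _ = _ := mul_div_mul_right _ _ hC

theorem trinomial_ne_zero_of_two_dvd {m : ℕ} (hm : 2 ∣ m) (s : ℕ) {u : F}
    (hu : u ^ (2 ^ m + 1) = 1) : trinomial (2 * s) s u ≠ 0 := by
  set w := u ^ s
  intro h0
  have hw : w ^ 2 + w + 1 = 0 := by rwa [trinomial, mul_comm, pow_mul] at h0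
  have hw4 : w ^ 2 ^ 2 = w := by grind
  have hwq : w ^ 2 ^ m = w := isPeriodicPt_pow_iff.1 ((isPeriodicPt_pow_iff.2 hw4).trans_dvd hm)
  have hw1 : w ^ (2 ^ m + 1) = 1 := by rw [← pow_mul, mul_comm, pow_mul, hu, one_pow]
  rw [eq_one_of_pow_succ_eq_one_of_pow_eq_self hw1 hwq] at hw
  grind

theorem inv_add_one_mul_self {u : F} (hu : u ≠ 1) : (u + 1)⁻¹ * u = (u + 1)⁻¹ + 1 := by
  have : u + 1 ≠ 0 := by grind
  field_simp
  grind

theorem inv_add_one_pow_two_pow {m : ℕ} {u : F} (hu : u ^ (2 ^ m + 1) = 1) (hu1 : u ≠ 1) :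
    (u + 1)⁻¹ ^ 2 ^ m = (u + 1)⁻¹ + 1 := by
  have hu0 : u ≠ 0 := by rintro rfl; simp at hu
  rw [inv_pow, add_pow_char_pow, one_pow, pow_eq_inv_of_pow_succ_eq_one_s8 hu,
    ← inv_add_one_mul_self hu1, show u⁻¹ + 1 = (u + 1) * u⁻¹ by field_simp; ring, mul_inv,
    inv_inv]

theorem pow_mul_trinomial_of_mul_eq_add_one (k : ℕ) {b : ℕ} (hb : b = 1 ∨ b = 2 ^ k) {c u : F}
    (h : c * u = c + 1) :
    c ^ (2 ^ k + 1) * trinomial (2 ^ k + 1) b u = trinomial (2 ^ k + 1) b c := by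
  have hK : c ^ 2 ^ k * u ^ 2 ^ k = c ^ 2 ^ k + 1 := by
    rw [← mul_pow, h, add_pow_char_pow, one_pow]
  rcases hb with rfl | rfl <;> unfold trinomial <;> grind

variable {m k : ℕ} (hfix : ∀ z : F, z ^ 2 ^ k = z → z ^ 2 ^ m = z)
include hfix

theorem eq_one_of_trinomial_eq {u : F} (hu : u ^ (2 ^ m + 1) = 1)
    (h : trinomial (2 ^ k + 1) (2 ^ k) u = trinomial (2 ^ k + 1) 1 u) : u = 1 := by
  simp only [trinomial, add_left_inj, add_right_inj, pow_one] at h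
  exact eq_one_of_pow_succ_eq_one_of_pow_eq_self hu (hfix u h)

theorem trinomial_ne_zero {u : F} (hu : u ^ (2 ^ m + 1) = 1) :
    trinomial (2 ^ k + 1) 1 u ≠ 0 := by
  intro h0
  have hB : trinomial (2 ^ k + 1) (2 ^ k) u = 0 := by
    rw [← pow_mul_trinomial_pow_two_pow hu (add_comm _ _), h0, zero_pow (by positivity),
      mul_zero]
  rw [eq_one_of_trinomial_eq hfix hu (hB.trans h0.symm)] at h0
  exact one_ne_zero ((trinomial_one _ _).symm.trans h0)

theorem eq_of_trinomial_mul_eq {x y : F} (hx : x ^ 2 ^ m = x + 1) (hy : y ^ 2 ^ m = y + 1)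
    (h : trinomial (2 ^ k + 1) 1 x * trinomial (2 ^ k + 1) (2 ^ k) y
      = trinomial (2 ^ k + 1) (2 ^ k) x * trinomial (2 ^ k + 1) 1 y) : x = y := by
  obtain ⟨t, rfl⟩ : ∃ t, y = x + t := ⟨x + y, by grind⟩
  by_contra hne
  have ht : t ≠ 0 := by grind
  have hyK : (x + t) ^ 2 ^ k = x ^ 2 ^ k + t ^ 2 ^ k := add_pow_char_pow ..
  have key : t * ((x ^ 2 ^ k) ^ 2 + x ^ 2 ^ k + 1) + t ^ 2 ^ k * (x ^ 2 + x + 1)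
      = t ^ 2 ^ k * t * (x ^ 2 ^ k + x) := by
    unfold trinomial at h; grind
  obtain ⟨w, hw⟩ : ∃ w, w * t = x ^ 2 + x + 1 := ⟨(x ^ 2 + x + 1) / t, div_mul_cancel₀ _ ht⟩
  have hwK : w ^ 2 ^ k + w = x ^ 2 ^ k + x := by
    have hwT : w ^ 2 ^ k * t ^ 2 ^ k = (x ^ 2 ^ k) ^ 2 + x ^ 2 ^ k + 1 := by
      rw [← mul_pow, hw, add_pow_char_pow, add_pow_char_pow, one_pow, pow_right_comm]
    exact mul_right_cancel₀ (mul_ne_zero (pow_ne_zero (2 ^ k) ht) ht) (by grind)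
  have hz : (w + x) ^ 2 ^ m = w + x := hfix _ (by rw [add_pow_char_pow]; grind)
  have hwq : w ^ 2 ^ m = w := by
    have htq : t ^ 2 ^ m = t := by
      rw [← add_right_inj (x ^ 2 ^ m), ← add_pow_char_pow, hx, hy]; grind
    have hwtq : w ^ 2 ^ m * t = w * t := by
      rw [← htq, ← mul_pow, hw, add_pow_char_pow, add_pow_char_pow, one_pow, pow_right_comm, hx]
      grind
    exact mul_right_cancel₀ ht hwtq
  have hxq : x ^ 2 ^ m = x := by
    rw [show x = (w + x) + w by grind, add_pow_char_pow, hz, hwq]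
  grind

theorem injOn_trinomial_div_trinomial :
    Set.InjOn (fun u : F => trinomial (2 ^ k + 1) (2 ^ k) u / trinomial (2 ^ k + 1) 1 u)
      {u | u ^ (2 ^ m + 1) = 1} := by
  intro u hu v hv huv
  have hcross : trinomial (2 ^ k + 1) 1 u * trinomial (2 ^ k + 1) (2 ^ k) v
      = trinomial (2 ^ k + 1) (2 ^ k) u * trinomial (2 ^ k + 1) 1 v := by
    rw [div_eq_div_iff (trinomial_ne_zero hfix hu) (trinomial_ne_zero hfix hv)] at huv
    linear_combination -huv
  rcases eq_or_ne u 1 with rfl | hu1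
  · exact (eq_one_of_trinomial_eq hfix hv (by simpa [trinomial_one] using hcross)).symm
  rcases eq_or_ne v 1 with rfl | hv1
  · exact eq_one_of_trinomial_eq hfix hu (by simpa [trinomial_one] using hcross.symm)
  have hc := inv_add_one_mul_self hu1
  have hd := inv_add_one_mul_self hv1
  have hcd : (u + 1)⁻¹ = (v + 1)⁻¹ := by
    refine eq_of_trinomial_mul_eq hfix (inv_add_one_pow_two_pow hu hu1)
      (inv_add_one_pow_two_pow hv hv1) ?_
    rw [← pow_mul_trinomial_of_mul_eq_add_one k (.inl rfl) hc,
      ← pow_mul_trinomial_of_mul_eq_add_one k (.inr rfl) hc,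
      ← pow_mul_trinomial_of_mul_eq_add_one k (.inl rfl) hd,
      ← pow_mul_trinomial_of_mul_eq_add_one k (.inr rfl) hd]
    linear_combination ((u + 1)⁻¹ ^ (2 ^ k + 1) * (v + 1)⁻¹ ^ (2 ^ k + 1)) * hcross
  simpa using hcd

end CharTwo

theorem sum_nine_pow_eq_pow_mul_trinomial_mul_trinomial {R : Type*} [CommRing R]
    (m k s : ℕ) (x : R) :
    x ^ (2 ^ (k + m) + s * 2 ^ (m + 1) + 2 ^ m)
        + x ^ (2 ^ (k + m) + s * 2 ^ m + 2 ^ m + s)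
        + x ^ (2 ^ (k + m) + 2 ^ m + 2 * s)
        + x ^ (s * 2 ^ (m + 1) + 2 ^ m + 2 ^ k)
        + x ^ (s * 2 ^ (m + 1) + 2 ^ k + 1)
        + x ^ (s * 2 ^ m + 2 ^ m + 2 ^ k + s)
        + x ^ (s * 2 ^ m + 2 ^ k + s + 1)
        + x ^ (2 ^ m + 2 ^ k + 2 * s)
        + x ^ (2 ^ k + 2 * s + 1)
      = x ^ (2 ^ k + 2 * s + 1) * (trinomial (2 ^ k + 1) 1 (x ^ (2 ^ m - 1))
          * trinomial (2 * s) s (x ^ (2 ^ m - 1))) := by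
  set u := x ^ (2 ^ m - 1)
  have hsplit : ∀ n i j : ℕ, n = 2 ^ m * i + j → x ^ n = (u * x) ^ i * x ^ j := by
    rintro n i j rfl
    rw [pow_add, pow_mul, pow_sub_one_mul (by positivity)]
  rw [hsplit (2 ^ (k + m) + s * 2 ^ (m + 1) + 2 ^ m) (2 ^ k + 2 * s + 1) 0 (by ring),
    hsplit (2 ^ (k + m) + s * 2 ^ m + 2 ^ m + s) (2 ^ k + s + 1) s (by ring),
    hsplit (2 ^ (k + m) + 2 ^ m + 2 * s) (2 ^ k + 1) (2 * s) (by ring),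
    hsplit (s * 2 ^ (m + 1) + 2 ^ m + 2 ^ k) (2 * s + 1) (2 ^ k) (by ring),
    hsplit (s * 2 ^ (m + 1) + 2 ^ k + 1) (2 * s) (2 ^ k + 1) (by ring),
    hsplit (s * 2 ^ m + 2 ^ m + 2 ^ k + s) (s + 1) (2 ^ k + s) (by ring),
    hsplit (s * 2 ^ m + 2 ^ k + s + 1) s (2 ^ k + s + 1) (by ring),
    hsplit (2 ^ m + 2 ^ k + 2 * s) 1 (2 ^ k + 2 * s) (by ring)]
  simp only [trinomial]
  ring

theorem stmt_8 (m k s : ℕ) (hm : 0 < m) (hme : Even m) (hk : 0 < k)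
    (hv : padicValNat 2 k ≤ padicValNat 2 m)
    (hgcd : Nat.gcd (2 ^ k + 2 * s + 1) (2 ^ m - 1) = 1) :
    Function.Bijective (fun x : GaloisField 2 (2 * m) =>
      x ^ (2 ^ (k + m) + s * 2 ^ (m + 1) + 2 ^ m)
        + x ^ (2 ^ (k + m) + s * 2 ^ m + 2 ^ m + s)
        + x ^ (2 ^ (k + m) + 2 ^ m + 2 * s)
        + x ^ (s * 2 ^ (m + 1) + 2 ^ m + 2 ^ k)
        + x ^ (s * 2 ^ (m + 1) + 2 ^ k + 1)
        + x ^ (s * 2 ^ m + 2 ^ m + 2 ^ k + s)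
        + x ^ (s * 2 ^ m + 2 ^ k + s + 1)
        + x ^ (2 ^ m + 2 ^ k + 2 * s)
        + x ^ (2 ^ k + 2 * s + 1)) := by
  have hF : Nat.card (GaloisField 2 (2 * m)) = 2 ^ (2 * m) := GaloisField.card 2 _ (by omega)
  have hfix : ∀ z : GaloisField 2 (2 * m), z ^ 2 ^ k = z → z ^ 2 ^ m = z := fun _ =>
    FiniteField.pow_two_pow_eq_self_of_padicValNat_le hF hk.ne' hv
  have hA : ∀ u : GaloisField 2 (2 * m), u ^ (2 ^ m + 1) = 1 → trinomial (2 ^ k + 1) 1 u ≠ 0 :=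
    fun _ => trinomial_ne_zero hfix
  have hC : ∀ u : GaloisField 2 (2 * m), u ^ (2 ^ m + 1) = 1 → trinomial (2 * s) s u ≠ 0 :=
    fun _ => trinomial_ne_zero_of_two_dvd hme.two_dvd s
  simp only [sum_nine_pow_eq_pow_mul_trinomial_mul_trinomial]
  refine bijective_pow_mul_comp_pow_sub_one (hF.trans (pow_mul' 2 2 m)) (by positivity) hgcd
    (fun u hu => mul_ne_zero (hA u hu) (hC u hu)) ?_
  exact (injOn_trinomial_div_trinomial hfix).congr fun u hu =>
    (pow_mul_trinomial_mul_trinomial_pow_sub_one hu (hA u hu) (hC u hu)).symm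
end

section
/- Let m be a positive even integer with m ≢ 0 mod 4 (so that gcd(5, 2^m+1)=1 and gcd(5, 2^m-1)=1). Then f(x) = x^5 + x^{4·2^m+1} + x^{5·2^m} is a permutation polynomial of F_{2^{2m}}. -/
/-- Kill an element whose order divides two coprime numbers. -/
private lemma okill {F : Type*} [Monoid F] {x : F} {a b : ℕ} (ha : x ^ a = 1)
    (hb : x ^ b = 1) (hg : Nat.gcd a b = 1) : x = 1 := by
  have d1 := orderOf_dvd_of_pow_eq_one ha
  have d2 := orderOf_dvd_of_pow_eq_one hb
  have := Nat.dvd_gcd d1 d2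
  rw [hg, Nat.dvd_one] at this
  exact orderOf_eq_one_iff.mp this

private lemma A3 {F : Type*} [Field F] (h2 : (2:F) = 0) {q : ℕ}
    (hg3 : Nat.gcd 3 (q+1) = 1) {z : F} (hmu : z ^ (q+1) = 1)
    (hz : z^2 + z + 1 = 0) : False := by
  have h3z : z ^ 3 = 1 := by linear_combination (z - 1) * hz
  have hz1 : z = 1 := okill h3z hmu hg3
  rw [hz1] at hz
  exact one_ne_zero (α := F) (by linear_combination hz - h2)

private lemma A7 {F : Type*} [Field F] (h2 : (2:F) = 0) {q : ℕ}
    (hg7 : Nat.gcd 7 (q+1) = 1) {z : F} (hmu : z ^ (q+1) = 1)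
    (hz : z^3 + z + 1 = 0) : False := by
  have h7z : z ^ 7 = 1 := by
    linear_combination (1 + z + z^2 + z^4) * hz + (-1 - z - z^2 - z^3 - z^4 - z^5) * h2
  have hz1 : z = 1 := okill h7z hmu hg7
  rw [hz1] at hz
  exact one_ne_zero (α := F) (by linear_combination hz - h2)

private lemma A7' {F : Type*} [Field F] (h2 : (2:F) = 0) {q : ℕ}
    (hg7 : Nat.gcd 7 (q+1) = 1) {z : F} (hmu : z ^ (q+1) = 1)
    (hz : z^3 + z^2 + 1 = 0) : False := by
  have h7z : z ^ 7 = 1 := by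
    linear_combination (1 + z^2 + z^3 + z^4) * hz + (-1 - z^2 - z^3 - z^4 - z^5 - z^6) * h2
  have hz1 : z = 1 := okill h7z hmu hg7
  rw [hz1] at hz
  exact one_ne_zero (α := F) (by linear_combination hz - h2)

/-- The key lemma: the quartic curve has no points on the unit circle μ_{q+1}. -/
private lemma keyC {F : Type*} [Field F] (h2 : (2:F) = 0) {q : ℕ}
    (hfrob : ∀ x y : F, (x + y) ^ q = x ^ q + y ^ q)
    (hg3 : Nat.gcd 3 (q+1) = 1)
    {z w : F} (hmuz : z ^ (q+1) = 1) (hmuw : w ^ (q+1) = 1)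
    (hC : z^2*w^2 + z^2*w + z*w^2 + z*w + z + w + 1 = 0) : False := by
  have hz0 : z ≠ 0 := by
    intro h; rw [h] at hmuz; simp [zero_pow] at hmuz
  have hw0 : w ≠ 0 := by
    intro h; rw [h] at hmuw; simp [zero_pow] at hmuw
  have hzi : z * z⁻¹ = 1 := mul_inv_cancel₀ hz0
  have hwi : w * w⁻¹ = 1 := mul_inv_cancel₀ hw0
  have hzq : z ^ q = z⁻¹ := by
    have : z ^ q * z = 1 := by rw [← pow_succ]; exact hmuz
    exact eq_inv_of_mul_eq_one_left this
  have hwq : w ^ q = w⁻¹ := by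
    have : w ^ q * w = 1 := by rw [← pow_succ]; exact hmuw
    exact eq_inv_of_mul_eq_one_left this
  set a : F := z + z⁻¹ with ha_def
  set b : F := w + w⁻¹ with hb_def
  have haz : a * z = z^2 + 1 := by rw [ha_def]; linear_combination hzi
  have hbw : b * w = w^2 + 1 := by rw [hb_def]; linear_combination hwi
  have haq : a ^ q = a := by
    rw [ha_def, hfrob, hzq, inv_pow, hzq, inv_inv, add_comm]
  have hbq : b ^ q = b := by
    rw [hb_def, hfrob, hwq, inv_pow, hwq, inv_inv, add_comm]
  have hab5 : z * w * (a + b + 1) = (z^2+1)*w + (w^2+1)*z + z*w := by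
    rw [ha_def, hb_def]; linear_combination w * hzi + z * hwi
  -- derive a*b*(a+b+1) = 1
  have hE1 : z^2 * w^2 * (a * b * (a+b+1)) =
      (z^2+1) * ((w^2+1) * ((z^2+1)*w + (w^2+1)*z + z*w)) := by
    calc z^2 * w^2 * (a * b * (a+b+1))
        = (a*z) * ((b*w) * (z*w*(a+b+1))) := by ring
      _ = (z^2+1) * ((w^2+1) * ((z^2+1)*w + (w^2+1)*z + z*w)) := by
          rw [haz, hbw, hab5]
  have hE2 : (z^2+1) * ((w^2+1) * ((z^2+1)*w + (w^2+1)*z + z*w)) = z^2 * w^2 := by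
    linear_combination (w + w^2 + z + z*w + z*w^2 + z^2 + z^2*w) * hC +
      (-(w^2) - z*w - z*w^2 - z*w^3 - z^2 - z^2*w - 3*z^2*w^2 - z^2*w^3 - z^2*w^4
        - z^3*w - z^3*w^2 - z^3*w^3 - z^4*w^2) * h2
  have hD : a * b * (a + b + 1) = 1 := by
    have hzw2 : z^2 * w^2 ≠ 0 := by
      apply mul_ne_zero <;> exact pow_ne_zero _ ‹_›
    apply mul_left_cancel₀ hzw2
    rw [mul_one, hE1, hE2]
  have ha0 : a ≠ 0 := by
    intro h; rw [h] at hD; simp at hD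
  have hai : a * a⁻¹ = 1 := mul_inv_cancel₀ ha0
  by_cases hc : a * b = 1
  · -- then a = b = 1 and z^2+z+1 = 0
    rw [hc, one_mul] at hD
    have hab0 : a + b = 0 := by linear_combination hD
    have hba : b = a := by linear_combination hab0 - a * h2
    rw [hba] at hc
    have hsq : (a - 1)^2 = 0 := by linear_combination hc + (1 - a) * h2
    have ha1 : a = 1 := by
      have := pow_eq_zero_iff (two_ne_zero) |>.mp hsq
      exact sub_eq_zero.mp this
    rw [ha1, one_mul] at haz
    exact A3 h2 hg3 hmuz (by linear_combination -haz + z * h2)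
  · -- main case
    have hs0 : a + b ≠ 0 := by
      intro h
      apply hc
      rw [show a + b + 1 = 1 by rw [h]; ring, mul_one] at hD
      exact hD
    have hsi : (a + b) * (a + b)⁻¹ = 1 := mul_inv_cancel₀ hs0
    set e : F := (a + 1) * (a + b)⁻¹ with he_def
    have pe1 : e^2 + e = ((a+1)^2 + (a+1)*(a+b)) * ((a+b)⁻¹ * (a+b)⁻¹) := by
      rw [he_def]; linear_combination (-(a+1)*(a+b)⁻¹) * hsi
    have pe2 : (a+1)^2 + (a+1)*(a+b) = (a*b) * ((a+b)*(a+b)) := by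
      linear_combination (1 + b + a) * hD +
        (1 + b + 2*a - a*b^2 - a*b^3 + a^2 - a^2*b - 2*a^2*b^2 - a^3*b) * h2
    have pe3 : e^2 + e = a * b := by
      rw [pe1, pe2]
      linear_combination (a*b) * ((a+b)*(a+b)⁻¹ + 1) * hsi
    set g : F := e + b with hg_def
    have pg : a * (g^2 + g) = 1 := by
      rw [hg_def]; linear_combination a * pe3 + hD + a * e * b * h2
    have hgq : g ^ q = g := by
      rw [hg_def, he_def, hfrob, mul_pow, hfrob, haq, one_pow, inv_pow, hfrob, haq, hbq]
    have hgai : g^2 + g = a⁻¹ := by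
      linear_combination a⁻¹ * pg - (g^2 + g) * hai
    have hzai : z*a⁻¹*(z*a⁻¹) + z*a⁻¹ = a⁻¹*a⁻¹ := by
      linear_combination (a⁻¹*a⁻¹) * haz - (z*a⁻¹) * hai + (z*z*a⁻¹*a⁻¹) * h2
    have pt : (z*a⁻¹ + g^2) * (z*a⁻¹ + g^2 + 1) = 0 := by
      linear_combination hzai + (g^2 + g + a⁻¹) * hgai +
        (z*a⁻¹*g^2 - g^3 + a⁻¹*a⁻¹) * h2
    have hgsq : (g^2) ^ q = g^2 := by
      rw [← pow_mul, mul_comm 2 q, pow_mul, hgq]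
    have hfix : z ^ q = z := by
      rcases mul_eq_zero.mp pt with h0 | h1
      · have hz2 : z = a * g^2 := by linear_combination -a * h0 + z * hai + z * h2
        rw [hz2, mul_pow, hgsq, haq]
      · have hz2 : z = a * (g^2 + 1) := by
          linear_combination -a * h1 + z * hai + z * h2
        have h5 : (g^2 + 1 : F) ^ q = g^2 + 1 := by rw [hfrob, one_pow, hgsq]
        rw [hz2, mul_pow, h5, haq]
    have hzz : z = z⁻¹ := hfix.symm.trans hzq
    have hz21 : z ^ 2 = 1 := by
      rw [pow_two]; nth_rewrite 2 [hzz]; exact hzi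
    have hsq : (z + 1)^2 = 0 := by linear_combination hz21 + (z+1) * h2
    have hz10 : z + 1 = 0 := pow_eq_zero_iff (two_ne_zero) |>.mp hsq
    have hz1 : z = 1 := by linear_combination hz10 - h2
    rw [hz1, mul_one] at haz
    have : a = 0 := by linear_combination haz + h2
    exact ha0 this

theorem stmt_10 (m : ℕ) (hm : 0 < m) (hme : Even m) (h4 : m % 4 ≠ 0) :
    Function.Bijective (fun x : GaloisField 2 (2 * m) =>
      x ^ 5 + x ^ (4 * 2 ^ m + 1) + x ^ (5 * 2 ^ m)) := by
  classical
  set F := GaloisField 2 (2 * m) with hF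
  haveI : Fintype F := Fintype.ofFinite F
  have h2m : 2 * m ≠ 0 := by omega
  have hcard : Fintype.card F = 2 ^ (2*m) := by
    rw [← Nat.card_eq_fintype_card]; exact GaloisField.card 2 (2*m) h2m
  have h2 : (2 : F) = 0 := CharTwo.two_eq_zero
  set q : ℕ := 2 ^ m with hq_def
  have hq1 : 1 ≤ q := Nat.one_le_two_pow
  have hq0 : q ≠ 0 := Nat.one_le_iff_ne_zero.mp hq1
  have hqq : q ^ 2 = 2 ^ (2*m) := by
    rw [hq_def, ← pow_mul, mul_comm]
  have hfrob : ∀ x y : F, (x + y) ^ q = x ^ q + y ^ q := by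
    intro x y
    rw [hq_def]
    exact add_pow_char_pow x y 2 m
  -- arithmetic facts
  have hm4 : m % 4 = 2 := by
    have := Nat.even_iff.mp hme
    omega
  have hq3 : q % 3 = 1 := by
    obtain ⟨k, hk⟩ := hme
    have : q = 4 ^ k := by rw [hq_def, hk, ← two_mul, pow_mul]; norm_num
    rw [this, Nat.pow_mod]
    norm_num
  have hg3 : Nat.gcd 3 (q+1) = 1 := by
    have : ¬ (3 ∣ (q+1)) := by omega
    exact (Nat.Prime.coprime_iff_not_dvd (by norm_num)).mpr this
  have hq7 : q % 7 = 1 ∨ q % 7 = 2 ∨ q % 7 = 4 := by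
    have hm3 : m = 3 * (m / 3) + m % 3 := (Nat.div_add_mod m 3).symm
    have hq7' : q % 7 = (8 ^ (m/3) % 7) * (2 ^ (m % 3) % 7) % 7 := by
      conv_lhs => rw [hq_def, hm3]
      rw [pow_add, pow_mul, Nat.mul_mod]
      norm_num
    have h8 : 8 ^ (m/3) % 7 = 1 := by rw [Nat.pow_mod]; norm_num
    rw [h8, one_mul, Nat.mod_mod_of_dvd _ (by norm_num)] at hq7'
    have h3 : m % 3 = 0 ∨ m % 3 = 1 ∨ m % 3 = 2 := by omega
    rcases h3 with h | h | h <;> rw [h] at hq7' <;> norm_num at hq7' <;> omega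
  have hg7 : Nat.gcd 7 (q+1) = 1 := by
    have : ¬ (7 ∣ (q+1)) := by omega
    exact (Nat.Prime.coprime_iff_not_dvd (by norm_num)).mpr this
  have hq5 : q % 5 = 4 := by
    have hm4' : m = 4 * (m / 4) + 2 := by omega
    have : q = 16 ^ (m/4) * 4 := by
      rw [hq_def]; conv_lhs => rw [hm4']
      rw [pow_add, pow_mul]; norm_num
    rw [this, Nat.mul_mod, Nat.pow_mod]
    norm_num
  have hg5 : Nat.gcd 5 (q-1) = 1 := by
    have : ¬ (5 ∣ (q-1)) := by omega
    exact (Nat.Prime.coprime_iff_not_dvd (by norm_num)).mpr this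
  -- power facts
  have hqsub : (q-1) * (q+1) = q^2 - 1 := by
    rcases Nat.exists_eq_add_of_le hq1 with ⟨r, hr⟩
    rw [hr]
    have h1 : 1 + r - 1 = r := by omega
    rw [h1]
    have : (1+r)^2 = r * (1 + r + 1) + 1 := by ring
    rw [this, Nat.add_sub_cancel]
  have hunit : ∀ x : F, x ≠ 0 → x ^ (q^2 - 1) = 1 := by
    intro x hx
    have := FiniteField.pow_card_sub_one_eq_one x hx
    rwa [hcard, ← hqq] at this
  have hmu : ∀ x : F, x ≠ 0 → (x ^ (q-1)) ^ (q+1) = 1 := by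
    intro x hx
    rw [← pow_mul, hqsub]
    exact hunit x hx
  have hpow : ∀ x : F, x ^ (q^2) = x := by
    intro x
    have := FiniteField.pow_card x
    rwa [hcard, ← hqq] at this
  -- splitting identities
  have hsplit1 : ∀ x : F, x^5 + x^(4*q+1) + x^(5*q)
      = x^5 * (1 + (x^(q-1))^4 + (x^(q-1))^5) := by
    intro x
    have e1 : 4*q+1 = 5 + (q-1)*4 := by omega
    have e2 : 5*q = 5 + (q-1)*5 := by omega
    rw [e1, e2, pow_add, pow_add, ← pow_mul, ← pow_mul]
    ring
  -- nonvanishing of f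
  have hne : ∀ x : F, x ≠ 0 → x^5 + x^(4*q+1) + x^(5*q) ≠ 0 := by
    intro x hx h0
    rw [hsplit1 x] at h0
    rcases mul_eq_zero.mp h0 with h | h
    · exact pow_ne_zero 5 hx h
    · set z : F := x ^ (q-1) with hz_def
      have hmuz : z ^ (q+1) = 1 := hmu x hx
      have hfac : (z^2+z+1) * (z^3+z+1) = 0 := by
        linear_combination h + (z^3 + z^2 + z) * h2
      rcases mul_eq_zero.mp hfac with h' | h'
      · exact A3 h2 hg3 hmuz h'
      · exact A7 h2 hg7 hmuz h'
  -- injectivity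
  have hinj : Function.Injective (fun x : F =>
      x ^ 5 + x ^ (4 * q + 1) + x ^ (5 * q)) := by
    intro a b hab
    dsimp only at hab
    rcases eq_or_ne a 0 with ha0 | ha0
    · rcases eq_or_ne b 0 with hb0 | hb0
      · rw [ha0, hb0]
      · exfalso
        apply hne b hb0
        rw [← hab, ha0]
        simp [zero_pow, (by omega : 4*q+1 ≠ 0), (by omega : 5*q ≠ 0), hq0]
    · have hb0 : b ≠ 0 := by
        intro hb0
        apply hne a ha0
        rw [hab, hb0]
        simp [zero_pow, (by omega : 4*q+1 ≠ 0), (by omega : 5*q ≠ 0), hq0]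
      set z : F := a ^ (q-1) with hz_def
      set w : F := b ^ (q-1) with hw_def
      have hmuz : z ^ (q+1) = 1 := hmu a ha0
      have hmuw : w ^ (q+1) = 1 := hmu b hb0
      -- E1
      have hE1 : a^5 * (1 + z^4 + z^5) = b^5 * (1 + w^4 + w^5) := by
        rw [hz_def, hw_def, ← hsplit1 a, ← hsplit1 b]
        exact hab
      -- E2 : apply Frobenius
      have hE2 : a^5 * (z^5 + z + 1) = b^5 * (w^5 + w + 1) := by
        have hq2 := congrArg (· ^ q) hab
        rw [hfrob, hfrob, hfrob, hfrob] at hq2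
        have red : ∀ x : F, (x^5)^q + (x^(4*q+1))^q + (x^(5*q))^q
            = x^5 * ((x^(q-1))^5 + x^(q-1) + 1) := by
          intro x
          have r1 : (x^5)^q = x^5 * (x^(q-1))^5 := by
            rw [← pow_mul, ← pow_mul, ← pow_add]
            congr 1
            omega
          have r2 : (x^(4*q+1))^q = (x^(q^2))^4 * x^q := by
            rw [← pow_mul, ← pow_mul, ← pow_add]
            congr 1
            ring
          have r3 : (x^(5*q))^q = (x^(q^2))^5 := by
            rw [← pow_mul, ← pow_mul]
            congr 1
            ring
          have r4 : x^4 * x^q = x^5 * x^(q-1) := by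
            rw [← pow_add, ← pow_add]
            congr 1
            omega
          rw [r1, r2, r3, hpow x]
          calc x^5 * (x^(q-1))^5 + x^4 * x^q + x^5
              = x^5 * (x^(q-1))^5 + x^5 * x^(q-1) + x^5 := by rw [r4]
            _ = x^5 * ((x^(q-1))^5 + x^(q-1) + 1) := by ring
          
        rw [red a, red b] at hq2
        rw [hz_def, hw_def]
        exact hq2
      -- cross-multiply and factor
      have hP : (1 + z^4 + z^5) * (b^5 * (w^5+w+1)) = (1 + w^4 + w^5) * (b^5 * (z^5+z+1)) := by
        have hab5 : (a:F)^5 ≠ 0 := pow_ne_zero _ ha0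
        apply mul_left_cancel₀ hab5
        calc a^5 * ((1 + z^4 + z^5) * (b^5 * (w^5+w+1)))
            = (a^5 * (1 + z^4 + z^5)) * (b^5 * (w^5+w+1)) := by ring
          _ = (b^5 * (1 + w^4 + w^5)) * (a^5 * (z^5+z+1)) := by rw [hE1, hE2]
          _ = a^5 * ((1 + w^4 + w^5) * (b^5 * (z^5+z+1))) := by ring
      have hP' : (1 + z^4 + z^5) * (w^5+w+1) = (1 + w^4 + w^5) * (z^5+z+1) := by
        have hb5 : (b:F)^5 ≠ 0 := pow_ne_zero _ hb0
        apply mul_left_cancel₀ hb5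
        calc b^5 * ((1 + z^4 + z^5) * (w^5+w+1))
            = (1 + z^4 + z^5) * (b^5 * (w^5+w+1)) := by ring
          _ = (1 + w^4 + w^5) * (b^5 * (z^5+z+1)) := hP
          _ = b^5 * ((1 + w^4 + w^5) * (z^5+z+1)) := by ring
      have hfact : (z^2+z+1) * ((w^2+w+1) * ((z+w) *
          (z^2*w^2 + z^2*w + z*w^2 + z*w + z + w + 1))) = 0 := by
        linear_combination hP' +
          (w^2 + w^3 + w^4 + z + 2*z*w + 3*z*w^2 + 3*z*w^3 + 2*z*w^4 + z*w^5 + z^2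
            + 3*z^2*w + 5*z^2*w^2 + 5*z^2*w^3 + 3*z^2*w^4 + z^2*w^5 + z^3 + 3*z^3*w
            + 5*z^3*w^2 + 5*z^3*w^3 + 3*z^3*w^4 + z^3*w^5 + z^4*w + 3*z^4*w^2
            + 3*z^4*w^3 + 2*z^4*w^4 + z^5*w^2 + z^5*w^3 + z^5*w^4) * h2
      have hzw : z = w := by
        rcases mul_eq_zero.mp hfact with h' | h'
        · exact absurd h' (fun h' => A3 h2 hg3 hmuz h')
        rcases mul_eq_zero.mp h' with h'' | h''
        · exact absurd h'' (fun h'' => A3 h2 hg3 hmuw h'')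
        rcases mul_eq_zero.mp h'' with h3 | h3
        · linear_combination h3 - w * h2
        · exact absurd h3 (fun h3 => keyC h2 hfrob hg3 hmuz hmuw h3)
      -- endgame
      obtain ⟨c, hcq1, hbca⟩ : ∃ c : F, c ^ (q-1) = 1 ∧ b = c * a := by
        refine ⟨b * a⁻¹, ?_, ?_⟩
        · rw [mul_pow, inv_pow, ← hw_def, ← hzw, hz_def, mul_inv_cancel₀]
          exact pow_ne_zero _ ha0
        · rw [mul_assoc, inv_mul_cancel₀ ha0, mul_one]
      have hcq : c ^ q = c := by
        have : q = (q-1) + 1 := by omega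
        rw [this, pow_succ, hcq1, one_mul]
      have hc4 : c ^ (4*q+1) = c^5 := by
        have : c ^ (4*q+1) = (c^q)^4 * c := by
          rw [← pow_mul, ← pow_succ]
          congr 1
          ring
        rw [this, hcq, ← pow_succ]
      have hc5 : c ^ (5*q) = c^5 := by
        have : c ^ (5*q) = (c^q)^5 := by
          rw [← pow_mul]
          congr 1
          ring
        rw [this, hcq]
      have hfb : b^5 + b^(4*q+1) + b^(5*q) = c^5 * (a^5 + a^(4*q+1) + a^(5*q)) := by
        rw [hbca, mul_pow, mul_pow, mul_pow, hc4, hc5]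
        ring
      have hfa_ne : a^5 + a^(4*q+1) + a^(5*q) ≠ 0 := hne a ha0
      have hc51 : c^5 = 1 := by
        have h' : c^5 * (a^5 + a^(4*q+1) + a^(5*q)) = 1 * (a^5 + a^(4*q+1) + a^(5*q)) := by
          rw [one_mul, ← hfb, ← hab]
        exact mul_right_cancel₀ hfa_ne h'
      have hc1 : c = 1 := okill hc51 hcq1 hg5
      rw [hbca, hc1, one_mul]
  rw [show (fun x : F => x ^ 5 + x ^ (4 * 2 ^ m + 1) + x ^ (5 * 2 ^ m))
      = (fun x : F => x ^ 5 + x ^ (4 * q + 1) + x ^ (5 * q)) from rfl]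
  exact Finite.injective_iff_bijective.mp hinj
end

section
/- Let m and k be positive even integers with v_2(k) ≤ v_2(m). Over F_2[x], one has gcd(x^{2^k+1} + x^{2^k} + 1, x^{2^k+1} + x + 1) = x^2 + x + 1. -/
open Polynomial

theorem stmt_13 (m k : ℕ) (hm : 0 < m) (hk : 0 < k) (hme : Even m) (hke : Even k)
    (hv : padicValNat 2 k ≤ padicValNat 2 m) :
    Associated
      (EuclideanDomain.gcd
        (X ^ (2 ^ k + 1) + X ^ (2 ^ k) + 1 : Polynomial (ZMod 2))
        (X ^ (2 ^ k + 1) + X + 1))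
      (X ^ 2 + X + 1) := by
  set p : Polynomial (ZMod 2) := X ^ 2 + X + 1 with hp
  set a : Polynomial (ZMod 2) := X ^ (2 ^ k + 1) + X ^ (2 ^ k) + 1 with ha
  set b : Polynomial (ZMod 2) := X ^ (2 ^ k + 1) + X + 1 with hb
  have h2 : (2 : Polynomial (ZMod 2)) = 0 := by
    exact CharTwo.two_eq_zero
  -- 3 ∣ 2^k - 1
  obtain ⟨j, hj⟩ := hke
  have h4 : (2 : ℕ) ^ k = 4 ^ j := by
    rw [hj]; rw [show j + j = 2 * j by ring, pow_mul]; norm_num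
  have h3 : 3 ∣ 2 ^ k - 1 := by
    rw [h4]
    simpa using Nat.sub_dvd_pow_sub_pow 4 1 j
  obtain ⟨t, ht⟩ := h3
  have hk2 : 2 ^ k = 3 * t + 1 := by
    have h1 : 1 ≤ 2 ^ k := Nat.one_le_two_pow
    omega
  -- p ∣ X^(2^k) + X
  have hdvd3 : p ∣ (X : Polynomial (ZMod 2)) ^ 3 + 1 := by
    refine ⟨X + 1, ?_⟩
    linear_combination (-(X ^ 2 + X) : Polynomial (ZMod 2)) * h2
  have hdvd3t : p ∣ ((X : Polynomial (ZMod 2)) ^ 3) ^ t + 1 := by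
    refine hdvd3.trans ?_
    have := sub_dvd_pow_sub_pow ((X : Polynomial (ZMod 2)) ^ 3) 1 t
    simpa [CharTwo.sub_eq_add] using this
  have hkey : p ∣ (X : Polynomial (ZMod 2)) ^ (2 ^ k) + X := by
    have heq : (X : Polynomial (ZMod 2)) ^ (2 ^ k) + X
        = X * (((X : Polynomial (ZMod 2)) ^ 3) ^ t + 1) := by
      rw [hk2]
      ring
    rw [heq]
    exact hdvd3t.mul_left X
  have hpa : p ∣ a := by
    have : a = ((X : Polynomial (ZMod 2)) ^ (2 ^ k) + X) * (X + 1) + p := by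
      rw [ha, hp]
      linear_combination (-(X ^ 2 + X) : Polynomial (ZMod 2)) * h2
    rw [this]
    exact dvd_add (hkey.mul_right _) dvd_rfl
  have hpb : p ∣ b := by
    have : b = ((X : Polynomial (ZMod 2)) ^ (2 ^ k) + X) * X + p := by
      rw [hb, hp]
      linear_combination (-(X ^ 2) : Polynomial (ZMod 2)) * h2
    rw [this]
    exact dvd_add (hkey.mul_right _) dvd_rfl
  have hgp : EuclideanDomain.gcd a b ∣ p := by
    have hid : p = a * X + b * (X + 1) := by
      rw [ha, hb, hp]
      linear_combination (-(X ^ (2 ^ k + 2) + X ^ (2 ^ k + 1) + X) : Polynomial (ZMod 2)) * h2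
    rw [hid]
    exact dvd_add ((EuclideanDomain.gcd_dvd_left a b).mul_right _)
      ((EuclideanDomain.gcd_dvd_right a b).mul_right _)
  have hpg : p ∣ EuclideanDomain.gcd a b := EuclideanDomain.dvd_gcd hpa hpb
  exact associated_of_dvd_dvd hgp hpg
end

section
/- Let k be a positive odd integer. Over F_2[x], one has gcd(x^{2^k+1} + x^{2^k} + x, x^{2^k} + x + 1) = x^2 + x + 1. -/
open Polynomial

theorem stmt_14 (k : ℕ) (hk : 0 < k) (hko : Odd k) :
    Associated
      (EuclideanDomain.gcd
        (X ^ (2 ^ k + 1) + X ^ (2 ^ k) + X : Polynomial (ZMod 2))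
        (X ^ (2 ^ k) + X + 1))
      (X ^ 2 + X + 1) := by
  obtain ⟨j, rfl⟩ := hko
  -- arithmetic: 2^(2j+1) = 3*m + 2
  obtain ⟨m0, hm0⟩ : (3 : ℕ) ∣ 4 ^ j - 1 := by
    have := Nat.sub_dvd_pow_sub_pow 4 1 j
    simpa using this
  have h4 : 1 ≤ 4 ^ j := Nat.one_le_pow _ _ (by norm_num)
  have hn : 2 ^ (2 * j + 1) = 3 * (2 * m0) + 2 := by
    have : 2 ^ (2 * j + 1) = 2 * 4 ^ j := by
      rw [pow_succ, pow_mul]; ring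
    omega
  set m := 2 * m0 with hm
  rw [hn]
  have h2 : (2 : Polynomial (ZMod 2)) = 0 := by
    exact_mod_cast CharP.cast_eq_zero (Polynomial (ZMod 2)) 2
  set p : Polynomial (ZMod 2) := X ^ 2 + X + 1 with hp
  set hpoly : Polynomial (ZMod 2) := X ^ (3 * m + 2) + X ^ 2 with hh
  set g : Polynomial (ZMod 2) := X ^ (3 * m + 2) + X + 1 with hg
  set f : Polynomial (ZMod 2) := X ^ (3 * m + 2 + 1) + X ^ (3 * m + 2) + X with hf
  have hph : p ∣ hpoly := by
    have h1 : (X ^ 3 + 1 : Polynomial (ZMod 2)) = (X + 1) * p := by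
      rw [hp]; linear_combination (-(X ^ 2 + X) : Polynomial (ZMod 2)) * h2
    have h2' : (X ^ 3 + 1 : Polynomial (ZMod 2)) ∣ (X ^ 3) ^ m + 1 := by
      have := sub_dvd_pow_sub_pow (X ^ 3 : Polynomial (ZMod 2)) 1 m
      simpa [CharTwo.sub_eq_add] using this
    have h3 : hpoly = X ^ 2 * ((X ^ 3) ^ m + 1) := by
      rw [hh, ← pow_mul]; ring
    rw [h3]
    exact Dvd.dvd.mul_left (dvd_trans (h1 ▸ dvd_mul_left p (X + 1)) h2') _
  have hgh : g = hpoly + p := by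
    rw [hg, hh, hp]; linear_combination (-(X ^ 2) : Polynomial (ZMod 2)) * h2
  have hpg : p ∣ g := by rw [hgh]; exact dvd_add hph dvd_rfl
  have hfh : f = X * g + hpoly := by
    rw [hf, hg, hh]; linear_combination (-(X ^ 2) : Polynomial (ZMod 2)) * h2
  have hpf : p ∣ f := by rw [hfh]; exact dvd_add (hpg.mul_left _) hph
  apply associated_of_dvd_dvd
  · have d1 : EuclideanDomain.gcd f g ∣ f := EuclideanDomain.gcd_dvd_left _ _
    have d2 : EuclideanDomain.gcd f g ∣ g := EuclideanDomain.gcd_dvd_right _ _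
    have d3 : EuclideanDomain.gcd f g ∣ hpoly := by
      have : hpoly = f + X * g := by
        rw [hfh]; linear_combination (-(X ^ (3 * m + 2 + 1) + X ^ 2 + X) : Polynomial (ZMod 2)) * h2
      rw [this]; exact dvd_add d1 (d2.mul_left _)
    have : p = g + hpoly := by
      rw [hgh]; linear_combination (-(X ^ (3 * m + 2) + X ^ 2) : Polynomial (ZMod 2)) * h2
    rw [this]; exact dvd_add d2 d3
  · exact EuclideanDomain.dvd_gcd hpf hpg
end

section
/- Let m and k be positive even integers with v_2(k) ≤ v_2(m), and let U = {x ∈ F_{2^{2m}} : x^{2^m+1} = 1}. Then the map sending x ∈ U to (Σ_{i} x^{2^k - i}) / (Σ_{j} x^{2^k - j}), where i ranges over 1 ≤ i ≤ 2^k with i ≡ 0 or 1 mod 3 and j ranges over 1 ≤ j ≤ 2^k with j ≡ 1 or 2 mod 3, is well-defined (denominator nonzero on U) and is a bijection from U to U. -/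
open Finset

section stmt15aux
variable {K : Type*} [Field K] [CharP K 2]

private lemma st15_two : (2 : K) = 0 := by
  have := CharP.cast_eq_zero K 2; exact_mod_cast this

private lemma st15_frob (a b : K) (n : ℕ) : (a + b) ^ (2:ℕ) ^ n = a ^ (2:ℕ) ^ n + b ^ (2:ℕ) ^ n :=
  add_pow_char_pow a b 2 n

omit [CharP K 2] in
private lemma st15_fix_pow (a : K) (c : ℕ) (h : a ^ c = a) : ∀ s, a ^ c ^ s = a := by
  intro s; induction s with
  | zero => simp
  | succ s ih => rw [pow_succ, pow_mul, ih, h]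

private lemma st15_natCast_sq (j : ℕ) : ((j : K)) ^ 2 = (j : K) := by
  rcases Nat.even_or_odd j with ⟨t, rfl⟩ | ⟨t, rfl⟩
  · push_cast
    have : (t : K) + t = 0 := CharTwo.add_self_eq_zero (t : K)
    rw [this]; ring
  · push_cast
    have h2 : (2 : K) = 0 := st15_two
    rw [h2]; ring

/-- Key lemma: no θ with θ^(2^k) = θ and θ^(2^m) = θ + 1 when v₂(k) ≤ v₂(m). -/
private lemma st15_no_theta (m k : ℕ) (hk : 0 < k)
    (hv : padicValNat 2 k ≤ padicValNat 2 m)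
    (θ : K) (h1 : θ ^ (2:ℕ) ^ k = θ) (h2 : θ ^ (2:ℕ) ^ m = θ + 1) : False := by
  have hk1 : ∀ j, θ ^ (2:ℕ) ^ (k * j) = θ := by
    intro j; induction j with
    | zero => simp
    | succ j ih =>
      have e : (2:ℕ) ^ (k * (j+1)) = 2 ^ (k * j) * 2 ^ k := by
        rw [← pow_add]; ring_nf
      rw [e, pow_mul, ih, h1]
  have hm1 : ∀ j, θ ^ (2:ℕ) ^ (m * j) = θ + (j : K) := by
    intro j; induction j with
    | zero => simp
    | succ j ih =>
      have e : (2:ℕ) ^ (m * (j+1)) = 2 ^ (m * j) * 2 ^ m := by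
        rw [← pow_add]; ring_nf
      rw [e, pow_mul, ih, st15_frob, h2, st15_fix_pow _ 2 (st15_natCast_sq j)]
      push_cast; ring
  have hg : 0 < Nat.gcd k m := Nat.gcd_pos_of_pos_left m hk
  obtain ⟨a, ha⟩ := Nat.gcd_dvd_left k m
  obtain ⟨b, hb⟩ := Nat.gcd_dvd_right k m
  have key : k * b = m * a := by
    calc k * b = (Nat.gcd k m * a) * b := by rw [← ha]
    _ = (Nat.gcd k m * b) * a := by ring
    _ = m * a := by rw [← hb]
  have hodd : Odd a := by
    rcases Nat.even_or_odd a with he | ho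
    · exfalso
      have hd1 : (2:ℕ) ^ padicValNat 2 k ∣ k := pow_padicValNat_dvd
      have hd2 : (2:ℕ) ^ padicValNat 2 k ∣ m :=
        dvd_trans (pow_dvd_pow 2 hv) pow_padicValNat_dvd
      have hd3 : (2:ℕ) ^ padicValNat 2 k ∣ Nat.gcd k m := Nat.dvd_gcd hd1 hd2
      obtain ⟨t, ht⟩ := he
      have h2a : 2 ∣ a := ⟨t, by omega⟩
      have : (2:ℕ) ^ (padicValNat 2 k + 1) ∣ k := by
        nth_rewrite 2 [ha]
        rw [pow_succ]
        exact mul_dvd_mul hd3 h2a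
      exact pow_succ_padicValNat_not_dvd (by omega : k ≠ 0) this
    · exact ho
  have e1 := hk1 b
  have e2 := hm1 a
  rw [← key] at e2
  rw [e1] at e2
  have hcast : ((a : ℕ) : K) = 1 := by
    obtain ⟨t, ht⟩ := hodd
    rw [ht]; push_cast
    have h2' : (2 : K) = 0 := st15_two
    rw [h2']; ring
  rw [hcast] at e2
  exact one_ne_zero (left_eq_add.mp e2)

private lemma st15_sum_den (x : K) (t : ℕ) :
    (∑ j ∈ (Icc 1 (3*t+1)).filter (fun j => j % 3 = 1 ∨ j % 3 = 2), x ^ (3*t+1-j))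
      * (x^2 + x + 1) = x^(3*t+1) * x + x + 1 := by
  have h2 : (2:K) = 0 := st15_two
  induction t with
  | zero =>
    have : (Icc 1 1).filter (fun j => j % 3 = 1 ∨ j % 3 = 2) = {1} := by decide
    rw [show 3*0+1 = 1 from rfl, this]
    simp; ring
  | succ t ih =>
    rw [Finset.sum_filter] at ih ⊢
    have hb : 3*(t+1)+1 = (3*t+1) + 1 + 1 + 1 := by ring
    rw [hb]
    rw [Finset.sum_Icc_succ_top (by omega), Finset.sum_Icc_succ_top (by omega),
        Finset.sum_Icc_succ_top (by omega)]
    have c1 : ((3*t+1+1) % 3 = 1 ∨ (3*t+1+1) % 3 = 2) := by omega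
    have c2 : ¬((3*t+1+1+1) % 3 = 1 ∨ (3*t+1+1+1) % 3 = 2) := by omega
    have c3 : ((3*t+1+1+1+1) % 3 = 1 ∨ (3*t+1+1+1+1) % 3 = 2) := by omega
    rw [if_pos c1, if_neg c2, if_pos c3]
    have e1 : 3*t+1+1+1+1 - (3*t+1+1) = 2 := by omega
    have e3 : 3*t+1+1+1+1 - (3*t+1+1+1+1) = 0 := by omega
    rw [e1, e3]
    have hshift : ∑ j ∈ Icc 1 (3*t+1), (if j % 3 = 1 ∨ j % 3 = 2 then x ^ (3*t+1+1+1+1-j) else 0)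
        = x^3 * ∑ j ∈ Icc 1 (3*t+1), (if j % 3 = 1 ∨ j % 3 = 2 then x ^ (3*t+1-j) else 0) := by
      rw [Finset.mul_sum]
      apply Finset.sum_congr rfl
      intro j hj
      rw [Finset.mem_Icc] at hj
      split_ifs
      · have : 3*t+1+1+1+1 - j = (3*t+1-j) + 3 := by omega
        rw [this, pow_add]; ring
      · ring
    rw [hshift]
    have hX : x ^ (3*t+1+1+1+1) = x ^ (3*t+1) * x^3 := by
      rw [show 3*t+1+1+1+1 = (3*t+1)+3 by omega, pow_add]
    rw [hX]
    linear_combination (x^3) * ih + (x^4 + x^3 + x^2) * h2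

private lemma st15_sum_num (x : K) (t : ℕ) :
    (∑ j ∈ (Icc 1 (3*t+1)).filter (fun j => j % 3 = 0 ∨ j % 3 = 1), x ^ (3*t+1-j))
      * (x^2 + x + 1) = x^(3*t+1) * x + x^(3*t+1) + 1 := by
  have h2 : (2:K) = 0 := st15_two
  induction t with
  | zero =>
    have : (Icc 1 1).filter (fun j => j % 3 = 0 ∨ j % 3 = 1) = {1} := by decide
    rw [show 3*0+1 = 1 from rfl, this]
    simp; ring
  | succ t ih =>
    rw [Finset.sum_filter] at ih ⊢
    have hb : 3*(t+1)+1 = (3*t+1) + 1 + 1 + 1 := by ring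
    rw [hb]
    rw [Finset.sum_Icc_succ_top (by omega), Finset.sum_Icc_succ_top (by omega),
        Finset.sum_Icc_succ_top (by omega)]
    have c1 : ¬((3*t+1+1) % 3 = 0 ∨ (3*t+1+1) % 3 = 1) := by omega
    have c2 : ((3*t+1+1+1) % 3 = 0 ∨ (3*t+1+1+1) % 3 = 1) := by omega
    have c3 : ((3*t+1+1+1+1) % 3 = 0 ∨ (3*t+1+1+1+1) % 3 = 1) := by omega
    rw [if_neg c1, if_pos c2, if_pos c3]
    have e2 : 3*t+1+1+1+1 - (3*t+1+1+1) = 1 := by omega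
    have e3 : 3*t+1+1+1+1 - (3*t+1+1+1+1) = 0 := by omega
    rw [e2, e3]
    have hshift : ∑ j ∈ Icc 1 (3*t+1), (if j % 3 = 0 ∨ j % 3 = 1 then x ^ (3*t+1+1+1+1-j) else 0)
        = x^3 * ∑ j ∈ Icc 1 (3*t+1), (if j % 3 = 0 ∨ j % 3 = 1 then x ^ (3*t+1-j) else 0) := by
      rw [Finset.mul_sum]
      apply Finset.sum_congr rfl
      intro j hj
      rw [Finset.mem_Icc] at hj
      split_ifs
      · have : 3*t+1+1+1+1 - j = (3*t+1-j) + 3 := by omega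
        rw [this, pow_add]; ring
      · ring
    rw [hshift]
    have hX : x ^ (3*t+1+1+1+1) = x ^ (3*t+1) * x^3 := by
      rw [show 3*t+1+1+1+1 = (3*t+1)+3 by omega, pow_add]
    rw [hX]
    linear_combination (x^3) * ih + (x^3 + x^2 + x) * h2

/-- If x²+x+1 = 0 then x is fixed by 2^m-Frobenius for even m. -/
private lemma st15_qfix (m : ℕ) (hme : Even m) (x : K) (h : x^2 + x + 1 = 0) :
    x ^ (2:ℕ) ^ m = x := by
  have h2 : (2:K) = 0 := st15_two
  have h4 : x ^ (4:ℕ) = x := by linear_combination (x^2 - x) * h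
  obtain ⟨s, rfl⟩ := hme
  have e : (2:ℕ) ^ (s + s) = 4 ^ s := by
    rw [show s + s = 2 * s by omega, pow_mul]; norm_num
  rw [e]
  exact st15_fix_pow x 4 h4 s

private lemma st15_qU_ne (m : ℕ) (hme : Even m) (x : K) (hx : x ^ (2:ℕ) ^ m * x = 1) :
    x^2 + x + 1 ≠ 0 := by
  have h2 : (2:K) = 0 := st15_two
  intro h
  have hfix := st15_qfix m hme x h
  rw [hfix] at hx
  have hx0 : x = 0 := by linear_combination hx - h + (x + 1) * h2
  rw [hx0] at h
  norm_num at h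

/-- membership in W : if x ∈ U, x ≠ 1, and (x+1)w = 1 then w^(2^m) = w + 1. -/
private lemma st15_Wmem (m : ℕ) (x w : K) (hx : x ^ (2:ℕ) ^ m * x = 1)
    (hxw : (x + 1) * w = 1) : w ^ (2:ℕ) ^ m = w + 1 := by
  have h2 : (2:K) = 0 := st15_two
  have hx0 : x ≠ 0 := right_ne_zero_of_mul_eq_one hx
  have hYW : (x ^ (2:ℕ) ^ m + 1) * w ^ (2:ℕ) ^ m = 1 := by
    have := congrArg (· ^ (2:ℕ) ^ m) hxw
    simpa [mul_pow, st15_frob, one_pow] using this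
  have h3x : x * ((x ^ (2:ℕ) ^ m + 1) * (w + 1)) = x * 1 := by
    linear_combination (w + 1) * hx + hxw + h2
  have h3 : (x ^ (2:ℕ) ^ m + 1) * (w + 1) = 1 := mul_left_cancel₀ hx0 h3x
  have hY1 : (x ^ (2:ℕ) ^ m + 1) ≠ 0 := left_ne_zero_of_mul_eq_one hYW
  exact mul_left_cancel₀ hY1 (hYW.trans h3.symm)

/-- if z ∈ U and z^(2^k) = z then z = 1 (needs the valuation condition). -/
private lemma st15_pow_fix_U (m k : ℕ) (hk : 0 < k)
    (hv : padicValNat 2 k ≤ padicValNat 2 m)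
    (z : K) (hz : z ^ (2:ℕ) ^ m * z = 1) (h : z ^ (2:ℕ) ^ k = z) : z = 1 := by
  have h2 : (2:K) = 0 := st15_two
  by_contra hz1
  have hne : z + 1 ≠ 0 := by
    intro hzz; apply hz1; linear_combination hzz - h2
  have hw1 : (z + 1) * (z+1)⁻¹ = 1 := mul_inv_cancel₀ hne
  have hW : ((z+1)⁻¹) ^ (2:ℕ) ^ m = (z+1)⁻¹ + 1 := st15_Wmem m z _ hz hw1
  have hwk : ((z+1)⁻¹) ^ (2:ℕ) ^ k = (z+1)⁻¹ := by
    rw [inv_pow, st15_frob, one_pow, h]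
  exact st15_no_theta m k hk hv _ hwk hW

/-- transfer lemma 1 -/
private lemma st15_t1 (k : ℕ) (x w : K) (hxw : (x + 1) * w = 1) :
    (x^(2:ℕ)^k * x + x^(2:ℕ)^k + 1) * (w^(2:ℕ)^k * w)
      = w^(2:ℕ)^k * w + w^(2:ℕ)^k + 1 := by
  have h2 : (2:K) = 0 := st15_two
  have hxwk : (x ^ (2:ℕ) ^ k + 1) * w ^ (2:ℕ) ^ k = 1 := by
    have := congrArg (· ^ (2:ℕ) ^ k) hxw
    simpa [mul_pow, st15_frob, one_pow] using this
  linear_combination (1 - w^(2:ℕ)^k) * hxw + (w * x + w) * hxwk - w^(2:ℕ)^k * h2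

/-- transfer lemma 2 -/
private lemma st15_t2 (k : ℕ) (x w : K) (hxw : (x + 1) * w = 1) :
    (x^(2:ℕ)^k * x + x + 1) * (w^(2:ℕ)^k * w)
      = w^(2:ℕ)^k * w + w + 1 := by
  have h2 : (2:K) = 0 := st15_two
  have hxwk : (x ^ (2:ℕ) ^ k + 1) * w ^ (2:ℕ) ^ k = 1 := by
    have := congrArg (· ^ (2:ℕ) ^ k) hxw
    simpa [mul_pow, st15_frob, one_pow] using this
  linear_combination hxw + (w * x) * hxwk - w * h2

/-- h2-part is nonzero on U. -/
private lemma st15_h2_ne (m k : ℕ) (hme : Even m) (x : K)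
    (hx : x ^ (2:ℕ) ^ m * x = 1) :
    x ^ (2:ℕ) ^ k * x + x + 1 ≠ 0 := by
  have h2 : (2:K) = 0 := st15_two
  intro h
  have hYxk : (x ^ (2:ℕ) ^ m) ^ (2:ℕ) ^ k * x ^ (2:ℕ) ^ k = 1 := by
    rw [← mul_pow, hx, one_pow]
  have hcon : (x ^ (2:ℕ) ^ m) ^ (2:ℕ) ^ k * x ^ (2:ℕ) ^ m + x ^ (2:ℕ) ^ m + 1 = 0 := by
    have h0 : (x ^ (2:ℕ) ^ k * x + x + 1) ^ (2:ℕ) ^ m = 0 := by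
      rw [h]; exact zero_pow (by positivity)
    rw [st15_frob, st15_frob, one_pow, mul_pow, pow_right_comm] at h0
    exact h0
  have hfix : x ^ (2:ℕ) ^ k = x := by
    linear_combination (x ^ (2:ℕ) ^ k * x) * hcon - hYxk
      - ((x ^ (2:ℕ) ^ m) ^ (2:ℕ) ^ k * x ^ (2:ℕ) ^ k + x ^ (2:ℕ) ^ k) * hx - h
  rw [hfix] at h
  exact st15_qU_ne m hme x hx (by linear_combination h)

/-- Frobenius swaps h1 and h2 on U (1). -/
private lemma st15_swap1 (m k : ℕ) (x : K) (hx : x ^ (2:ℕ) ^ m * x = 1) :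
    (x ^ (2:ℕ) ^ k * x + x ^ (2:ℕ) ^ k + 1) ^ (2:ℕ) ^ m * (x ^ (2:ℕ) ^ k * x)
      = x ^ (2:ℕ) ^ k * x + x + 1 := by
  have hYxk : (x ^ (2:ℕ) ^ m) ^ (2:ℕ) ^ k * x ^ (2:ℕ) ^ k = 1 := by
    rw [← mul_pow, hx, one_pow]
  rw [st15_frob, st15_frob, one_pow, mul_pow, pow_right_comm]
  linear_combination (x * x ^ (2:ℕ) ^ m + x) * hYxk + hx

/-- Frobenius swaps h1 and h2 on U (2). -/
private lemma st15_swap2 (m k : ℕ) (x : K) (hx : x ^ (2:ℕ) ^ m * x = 1) :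
    (x ^ (2:ℕ) ^ k * x + x + 1) ^ (2:ℕ) ^ m * (x ^ (2:ℕ) ^ k * x)
      = x ^ (2:ℕ) ^ k * x + x ^ (2:ℕ) ^ k + 1 := by
  have hYxk : (x ^ (2:ℕ) ^ m) ^ (2:ℕ) ^ k * x ^ (2:ℕ) ^ k = 1 := by
    rw [← mul_pow, hx, one_pow]
  rw [st15_frob, st15_frob, one_pow, mul_pow, pow_right_comm]
  linear_combination (x * x ^ (2:ℕ) ^ m) * hYxk + (x ^ (2:ℕ) ^ k + 1) * hx

end stmt15aux
section stmt15core
variable {K : Type*} [Field K] [CharP K 2]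

private lemma st15_fU (m k : ℕ) (hme : Even m) (x N D : K)
    (hx : x ^ (2:ℕ)^m * x = 1)
    (hN : N * (x^2 + x + 1) = x ^ (2:ℕ)^k * x + x ^ (2:ℕ)^k + 1)
    (hD : D * (x^2 + x + 1) = x ^ (2:ℕ)^k * x + x + 1) :
    (N / D) ^ ((2:ℕ)^m + 1) = 1 := by
  have hq : x^2 + x + 1 ≠ 0 := st15_qU_ne m hme x hx
  have hx0 : x ≠ 0 := right_ne_zero_of_mul_eq_one hx
  have hD0 : D ≠ 0 := by
    intro h; apply st15_h2_ne m k hme x hx; rw [← hD, h, zero_mul]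
  have hXx : x ^ (2:ℕ)^k * x ≠ 0 := mul_ne_zero (pow_ne_zero _ hx0) hx0
  have hpow : (x ^ (2:ℕ)^k * x + x ^ (2:ℕ)^k + 1) ^ ((2:ℕ)^m + 1)
      = (x ^ (2:ℕ)^k * x + x + 1) ^ ((2:ℕ)^m + 1) := by
    apply mul_right_cancel₀ hXx
    rw [pow_succ, pow_succ, mul_right_comm, st15_swap1 m k x hx,
        mul_right_comm, st15_swap2 m k x hx]
    ring
  have hNpow : (N * (x^2+x+1)) ^ ((2:ℕ)^m+1) = (D * (x^2+x+1)) ^ ((2:ℕ)^m+1) := by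
    rw [hN, hD]; exact hpow
  rw [mul_pow, mul_pow] at hNpow
  have hND : N ^ ((2:ℕ)^m+1) = D ^ ((2:ℕ)^m+1) :=
    mul_right_cancel₀ (pow_ne_zero _ hq) hNpow
  rw [div_pow, hND, div_self (pow_ne_zero _ hD0)]

private lemma st15_inj (m k : ℕ) (hk : 0 < k) (hme : Even m)
    (hvv : padicValNat 2 k ≤ padicValNat 2 m)
    (x z Nx Dx Nz Dz : K)
    (hx : x ^ (2:ℕ)^m * x = 1) (hz : z ^ (2:ℕ)^m * z = 1)
    (hNx : Nx * (x^2+x+1) = x ^ (2:ℕ)^k * x + x ^ (2:ℕ)^k + 1)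
    (hDx : Dx * (x^2+x+1) = x ^ (2:ℕ)^k * x + x + 1)
    (hNz : Nz * (z^2+z+1) = z ^ (2:ℕ)^k * z + z ^ (2:ℕ)^k + 1)
    (hDz : Dz * (z^2+z+1) = z ^ (2:ℕ)^k * z + z + 1)
    (heq : Nx / Dx = Nz / Dz) : x = z := by
  have h2 : (2:K) = 0 := st15_two
  have hDx0 : Dx ≠ 0 := by
    intro h; apply st15_h2_ne m k hme x hx; rw [← hDx, h, zero_mul]
  have hDz0 : Dz ≠ 0 := by
    intro h; apply st15_h2_ne m k hme z hz; rw [← hDz, h, zero_mul]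
  rw [div_eq_div_iff hDx0 hDz0] at heq
  have hE0 : (x ^ (2:ℕ)^k * x + x ^ (2:ℕ)^k + 1) * (z ^ (2:ℕ)^k * z + z + 1)
      = (z ^ (2:ℕ)^k * z + z ^ (2:ℕ)^k + 1) * (x ^ (2:ℕ)^k * x + x + 1) := by
    rw [← hNx, ← hDz, ← hNz, ← hDx]
    linear_combination ((x^2+x+1) * (z^2+z+1)) * heq
  by_cases hx1 : x = 1
  · subst hx1
    have hzfix : z ^ (2:ℕ)^k = z := by
      linear_combination (-1 : K) * hE0 + (z - z ^ (2:ℕ)^k) * h2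
    exact (st15_pow_fix_U m k hk hvv z hz hzfix).symm
  by_cases hz1 : z = 1
  · subst hz1
    have hxfix : x ^ (2:ℕ)^k = x := by
      linear_combination hE0 + (x - x ^ (2:ℕ)^k) * h2
    exact st15_pow_fix_U m k hk hvv x hx hxfix
  by_contra hxz
  have hxne : x + 1 ≠ 0 := by intro h; exact hx1 (by linear_combination h - h2)
  have hzne : z + 1 ≠ 0 := by intro h; exact hz1 (by linear_combination h - h2)
  obtain ⟨w1, hw1⟩ : ∃ w, (x+1) * w = 1 := ⟨(x+1)⁻¹, mul_inv_cancel₀ hxne⟩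
  obtain ⟨w2, hw2⟩ : ∃ w, (z+1) * w = 1 := ⟨(z+1)⁻¹, mul_inv_cancel₀ hzne⟩
  have hW1 : w1 ^ (2:ℕ)^m = w1 + 1 := st15_Wmem m x w1 hx hw1
  have hW2 : w2 ^ (2:ℕ)^m = w2 + 1 := st15_Wmem m z w2 hz hw2
  have hw10 : w1 ≠ 0 := right_ne_zero_of_mul_eq_one hw1
  have hE0' : (w1 ^ (2:ℕ)^k * w1 + w1 ^ (2:ℕ)^k + 1) * (w2 ^ (2:ℕ)^k * w2 + w2 + 1)
      = (w2 ^ (2:ℕ)^k * w2 + w2 ^ (2:ℕ)^k + 1) * (w1 ^ (2:ℕ)^k * w1 + w1 + 1) := by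
    rw [← st15_t1 k x w1 hw1, ← st15_t2 k z w2 hw2, ← st15_t1 k z w2 hw2,
        ← st15_t2 k x w1 hw1]
    linear_combination ((w1 ^ (2:ℕ)^k * w1) * (w2 ^ (2:ℕ)^k * w2)) * hE0
  have hww : w1 ≠ w2 := by
    intro h
    apply hxz
    have hcc : (x+1) * w1 = (z+1) * w1 := by rw [hw1]; rw [h]; exact hw2.symm
    have hxz1 := mul_right_cancel₀ hw10 hcc
    linear_combination hxz1
  obtain ⟨u, hudef⟩ : ∃ u : K, u = w1 + w2 := ⟨w1 + w2, rfl⟩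
  have hu0 : u ≠ 0 := by
    intro h; apply hww; linear_combination h - hudef - w2 * h2
  have hu : u ^ (2:ℕ)^m = u := by
    rw [hudef, st15_frob, hW1, hW2]; linear_combination h2
  have hw2u : w2 = w1 + u := by rw [hudef]; linear_combination (-w1) * h2
  have hA2 : w2 ^ (2:ℕ)^k = w1 ^ (2:ℕ)^k + u ^ (2:ℕ)^k := by
    rw [hw2u, st15_frob]
  rw [hA2, hw2u] at hE0'
  have hE3 : (w1 ^ (2:ℕ)^k + w1) * (u ^ (2:ℕ)^k * u) + (w1^2 + w1 + 1) * u ^ (2:ℕ)^k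
      + ((w1 ^ (2:ℕ)^k)^2 + w1 ^ (2:ℕ)^k + 1) * u = 0 := by
    linear_combination hE0' + (u ^ (2:ℕ)^k + w1 * u ^ (2:ℕ)^k + w1 * u * u ^ (2:ℕ)^k
      + w1^2 * u ^ (2:ℕ)^k) * h2
  obtain ⟨v, hvu⟩ : ∃ v : K, v * u = w1^2 + w1 + 1 :=
    ⟨(w1^2 + w1 + 1) * u⁻¹, by rw [mul_assoc, inv_mul_cancel₀ hu0, mul_one]⟩
  have hvk : v ^ (2:ℕ)^k * u ^ (2:ℕ)^k = (w1 ^ (2:ℕ)^k)^2 + w1 ^ (2:ℕ)^k + 1 := by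
    rw [← mul_pow, hvu, st15_frob, st15_frob, one_pow, pow_right_comm]
  have hSu : u ^ (2:ℕ)^k * u ≠ 0 := mul_ne_zero (pow_ne_zero _ hu0) hu0
  have hvfix : v ^ (2:ℕ)^k = v + (w1 ^ (2:ℕ)^k + w1) := by
    apply mul_right_cancel₀ hSu
    linear_combination u * hvk - hE3 - u ^ (2:ℕ)^k * hvu
      + (((w1 ^ (2:ℕ)^k)^2 + w1 ^ (2:ℕ)^k + 1) * u) * h2
  have hvm : v ^ (2:ℕ)^m = v := by
    apply mul_right_cancel₀ hu0
    calc v ^ (2:ℕ)^m * u = v ^ (2:ℕ)^m * u ^ (2:ℕ)^m := by rw [hu]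
    _ = (v * u) ^ (2:ℕ)^m := (mul_pow v u _).symm
    _ = (w1^2 + w1 + 1) ^ (2:ℕ)^m := by rw [hvu]
    _ = v * u := by
        rw [st15_frob, st15_frob, one_pow, pow_right_comm, hW1, hvu]
        linear_combination (w1 + 1) * h2
  have hθk : (v + w1) ^ (2:ℕ)^k = v + w1 := by
    rw [st15_frob, hvfix]
    linear_combination (w1 ^ (2:ℕ)^k) * h2
  have hθm : (v + w1) ^ (2:ℕ)^m = (v + w1) + 1 := by
    rw [st15_frob, hvm, hW1]; ring
  exact st15_no_theta m k hk hvv _ hθk hθm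

end stmt15core

theorem stmt_15 (m k : ℕ) (hm : 0 < m) (hk : 0 < k) (hme : Even m) (hke : Even k)
    (hv : padicValNat 2 k ≤ padicValNat 2 m) :
    (∀ x : GaloisField 2 (2 * m), x ^ (2 ^ m + 1) = 1 →
        ∑ j ∈ (Finset.Icc 1 (2 ^ k)).filter (fun j => j % 3 = 1 ∨ j % 3 = 2),
            x ^ (2 ^ k - j) ≠ 0) ∧
      Set.BijOn
        (fun x : GaloisField 2 (2 * m) =>
          (∑ i ∈ (Finset.Icc 1 (2 ^ k)).filter (fun i => i % 3 = 0 ∨ i % 3 = 1),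
              x ^ (2 ^ k - i)) /
            (∑ j ∈ (Finset.Icc 1 (2 ^ k)).filter (fun j => j % 3 = 1 ∨ j % 3 = 2),
              x ^ (2 ^ k - j)))
        {x : GaloisField 2 (2 * m) | x ^ (2 ^ m + 1) = 1}
        {x : GaloisField 2 (2 * m) | x ^ (2 ^ m + 1) = 1} := by
  have hmod : (2:ℕ)^k % 3 = 1 := by
    obtain ⟨c, rfl⟩ := hke
    rw [show c + c = 2 * c by omega, pow_mul]
    norm_num [Nat.pow_mod]
  obtain ⟨t, h3t⟩ : ∃ t, 3*t+1 = 2^k := ⟨(2^k)/3, by omega⟩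
  have hDq : ∀ x : GaloisField 2 (2*m),
      (∑ j ∈ (Finset.Icc 1 (2^k)).filter (fun j => j % 3 = 1 ∨ j % 3 = 2), x ^ (2^k - j))
        * (x^2 + x + 1) = x ^ (2:ℕ)^k * x + x + 1 := by
    intro x; rw [← h3t]; exact st15_sum_den x t
  have hNq : ∀ x : GaloisField 2 (2*m),
      (∑ j ∈ (Finset.Icc 1 (2^k)).filter (fun j => j % 3 = 0 ∨ j % 3 = 1), x ^ (2^k - j))
        * (x^2 + x + 1) = x ^ (2:ℕ)^k * x + x ^ (2:ℕ)^k + 1 := by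
    intro x; rw [← h3t]; exact st15_sum_num x t
  have hU : ∀ x : GaloisField 2 (2*m), x ^ (2^m + 1) = 1 → x ^ (2:ℕ)^m * x = 1 := by
    intro x hx; rw [← pow_succ]; exact hx
  have hDne : ∀ x : GaloisField 2 (2*m), x ^ (2^m + 1) = 1 →
      (∑ j ∈ (Finset.Icc 1 (2^k)).filter (fun j => j % 3 = 1 ∨ j % 3 = 2), x ^ (2^k - j)) ≠ 0 := by
    intro x hx hD0
    apply st15_h2_ne m k hme x (hU x hx)
    rw [← hDq x, hD0, zero_mul]
  refine ⟨hDne, ?_⟩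
  have hfin : ({x : GaloisField 2 (2*m) | x ^ (2^m + 1) = 1}).Finite := Set.toFinite _
  have hmaps : Set.MapsTo
      (fun x : GaloisField 2 (2*m) =>
        (∑ i ∈ (Finset.Icc 1 (2^k)).filter (fun i => i % 3 = 0 ∨ i % 3 = 1), x ^ (2^k - i)) /
          (∑ j ∈ (Finset.Icc 1 (2^k)).filter (fun j => j % 3 = 1 ∨ j % 3 = 2), x ^ (2^k - j)))
      {x : GaloisField 2 (2*m) | x ^ (2^m + 1) = 1}
      {x : GaloisField 2 (2*m) | x ^ (2^m + 1) = 1} := by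
    intro x hx
    simp only [Set.mem_setOf_eq] at hx ⊢
    exact st15_fU m k hme x _ _ (hU x hx) (hNq x) (hDq x)
  have hinj : Set.InjOn
      (fun x : GaloisField 2 (2*m) =>
        (∑ i ∈ (Finset.Icc 1 (2^k)).filter (fun i => i % 3 = 0 ∨ i % 3 = 1), x ^ (2^k - i)) /
          (∑ j ∈ (Finset.Icc 1 (2^k)).filter (fun j => j % 3 = 1 ∨ j % 3 = 2), x ^ (2^k - j)))
      {x : GaloisField 2 (2*m) | x ^ (2^m + 1) = 1} := by
    intro x hx z hz hfeq
    simp only [Set.mem_setOf_eq] at hx hz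
    exact st15_inj m k hk hme hv x z _ _ _ _ (hU x hx) (hU z hz)
      (hNq x) (hDq x) (hNq z) (hDq z) hfeq
  exact (hfin.injOn_iff_bijOn_of_mapsTo hmaps).mp hinj
end

section
/- Let m be a positive even integer and k a positive odd integer with gcd(2^k+1, 2^m+1) = 1, and let U = {x ∈ F_{2^{2m}} : x^{2^m+1} = 1}. Then the map sending x ∈ U to (Σ_{i} x^{2^k - i}) / (Σ_{j} x^{2^k - j}), where i ranges over 1 ≤ i ≤ 2^k with i ≡ 0 or 1 mod 3 and j ranges over 1 ≤ j ≤ 2^k with j ≡ 0 or 2 mod 3, is well-defined (denominator nonzero on U) and is a bijection from U to U. -/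
open Finset

/-- geometric-type sum for the denominator filter -/
private lemma aux_sumD {F : Type*} [Field F] (h2 : (2:F) = 0) (x : F) (t : ℕ) :
    (x^3 + 1) * ∑ e ∈ Finset.range (3*t+2), (if e % 3 = 1 then 0 else x^e)
      = x^(3*t+2)*x + x^(3*t+2) + x^2 + 1 := by
  induction t with
  | zero =>
    have h02 : 3*0+2 = 0+1+1 := rfl
    rw [h02, Finset.sum_range_succ, Finset.sum_range_succ, Finset.sum_range_zero,
      if_neg (by norm_num : ¬ (0:ℕ) % 3 = 1), if_pos (by norm_num : (0+1) % 3 = 1)]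
    linear_combination (-x^2) * h2
  | succ t ih =>
    rw [show 3*(t+1)+2 = (3*t+2)+1+1+1 by ring, Finset.sum_range_succ,
      Finset.sum_range_succ, Finset.sum_range_succ,
      if_neg (by omega : ¬ (3*t+2) % 3 = 1), if_neg (by omega : ¬ ((3*t+2)+1) % 3 = 1),
      if_pos (by omega : ((3*t+2)+1+1) % 3 = 1)]
    linear_combination ih + (x^(3*t+2) + x^(3*t+2)*x) * h2

/-- geometric-type sum for the numerator filter -/
private lemma aux_sumN {F : Type*} [Field F] (h2 : (2:F) = 0) (x : F) (t : ℕ) :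
    (x^3 + 1) * ∑ e ∈ Finset.range (3*t+2), (if e % 3 = 0 then 0 else x^e)
      = x^(3*t+2)*x^2 + x^(3*t+2) + x^2 + x := by
  induction t with
  | zero =>
    have h02 : 3*0+2 = 0+1+1 := rfl
    rw [h02, Finset.sum_range_succ, Finset.sum_range_succ, Finset.sum_range_zero,
      if_pos (by norm_num : (0:ℕ) % 3 = 0), if_neg (by norm_num : ¬ (0+1) % 3 = 0)]
    linear_combination (-x^2) * h2
  | succ t ih =>
    rw [show 3*(t+1)+2 = (3*t+2)+1+1+1 by ring, Finset.sum_range_succ,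
      Finset.sum_range_succ, Finset.sum_range_succ,
      if_neg (by omega : ¬ (3*t+2) % 3 = 0), if_pos (by omega : ((3*t+2)+1) % 3 = 0),
      if_neg (by omega : ¬ ((3*t+2)+1+1) % 3 = 0)]
    linear_combination ih + (x^(3*t+2) + x^(3*t+2)*x^2) * h2

private lemma aux_oneD {F : Type*} [Field F] (h2 : (2:F) = 0) (t : ℕ) :
    ∑ e ∈ Finset.range (3*t+2), (if e % 3 = 1 then 0 else (1:F)) = 1 := by
  induction t with
  | zero =>
    have h02 : 3*0+2 = 0+1+1 := rfl
    rw [h02, Finset.sum_range_succ, Finset.sum_range_succ, Finset.sum_range_zero,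
      if_neg (by norm_num : ¬ (0:ℕ) % 3 = 1), if_pos (by norm_num : (0+1) % 3 = 1)]
    norm_num
  | succ t ih =>
    rw [show 3*(t+1)+2 = (3*t+2)+1+1+1 by ring, Finset.sum_range_succ,
      Finset.sum_range_succ, Finset.sum_range_succ,
      if_neg (by omega : ¬ (3*t+2) % 3 = 1), if_neg (by omega : ¬ ((3*t+2)+1) % 3 = 1),
      if_pos (by omega : ((3*t+2)+1+1) % 3 = 1)]
    linear_combination ih + h2

private lemma aux_oneN {F : Type*} [Field F] (h2 : (2:F) = 0) (t : ℕ) :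
    ∑ e ∈ Finset.range (3*t+2), (if e % 3 = 0 then 0 else (1:F)) = 1 := by
  induction t with
  | zero =>
    have h02 : 3*0+2 = 0+1+1 := rfl
    rw [h02, Finset.sum_range_succ, Finset.sum_range_succ, Finset.sum_range_zero,
      if_pos (by norm_num : (0:ℕ) % 3 = 0), if_neg (by norm_num : ¬ (0+1) % 3 = 0)]
    norm_num
  | succ t ih =>
    rw [show 3*(t+1)+2 = (3*t+2)+1+1+1 by ring, Finset.sum_range_succ,
      Finset.sum_range_succ, Finset.sum_range_succ,
      if_neg (by omega : ¬ (3*t+2) % 3 = 0), if_pos (by omega : ((3*t+2)+1) % 3 = 0),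
      if_neg (by omega : ¬ ((3*t+2)+1+1) % 3 = 0)]
    linear_combination ih + h2

/-- Reindexing the denominator sum. -/
private lemma aux_convD {F : Type*} [Field F] (x : F) (n t : ℕ) (hn : n = 3*t+2) :
    ∑ j ∈ (Finset.Icc 1 n).filter (fun j => j % 3 = 0 ∨ j % 3 = 2), x ^ (n - j)
      = ∑ e ∈ Finset.range n, (if e % 3 = 1 then 0 else x^e) := by
  subst hn
  calc ∑ j ∈ (Finset.Icc 1 (3*t+2)).filter (fun j => j % 3 = 0 ∨ j % 3 = 2), x ^ (3*t+2 - j)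
      = ∑ e ∈ (Finset.range (3*t+2)).filter (fun e => ¬ e % 3 = 1), x^e := by
        refine Finset.sum_nbij' (fun j => 3*t+2 - j) (fun e => 3*t+2 - e) ?_ ?_ ?_ ?_ ?_
        · intro a ha
          simp only [Finset.mem_filter, Finset.mem_Icc, Finset.mem_range] at ha ⊢
          omega
        · intro a ha
          simp only [Finset.mem_filter, Finset.mem_Icc, Finset.mem_range] at ha ⊢
          omega
        · intro a ha
          simp only [Finset.mem_filter, Finset.mem_Icc] at ha
          show 3*t+2 - (3*t+2 - a) = a
          omega
        · intro a ha
          simp only [Finset.mem_filter, Finset.mem_range] at ha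
          show 3*t+2 - (3*t+2 - a) = a
          omega
        · intro a _
          rfl
    _ = ∑ e ∈ Finset.range (3*t+2), (if e % 3 = 1 then 0 else x^e) := by
        rw [Finset.sum_filter]
        refine Finset.sum_congr rfl fun e _ => ?_
        by_cases h : e % 3 = 1 <;> simp [h]

/-- Reindexing the numerator sum. -/
private lemma aux_convN {F : Type*} [Field F] (x : F) (n t : ℕ) (hn : n = 3*t+2) :
    ∑ j ∈ (Finset.Icc 1 n).filter (fun j => j % 3 = 0 ∨ j % 3 = 1), x ^ (n - j)
      = ∑ e ∈ Finset.range n, (if e % 3 = 0 then 0 else x^e) := by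
  subst hn
  calc ∑ j ∈ (Finset.Icc 1 (3*t+2)).filter (fun j => j % 3 = 0 ∨ j % 3 = 1), x ^ (3*t+2 - j)
      = ∑ e ∈ (Finset.range (3*t+2)).filter (fun e => ¬ e % 3 = 0), x^e := by
        refine Finset.sum_nbij' (fun j => 3*t+2 - j) (fun e => 3*t+2 - e) ?_ ?_ ?_ ?_ ?_
        · intro a ha
          simp only [Finset.mem_filter, Finset.mem_Icc, Finset.mem_range] at ha ⊢
          omega
        · intro a ha
          simp only [Finset.mem_filter, Finset.mem_Icc, Finset.mem_range] at ha ⊢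
          omega
        · intro a ha
          simp only [Finset.mem_filter, Finset.mem_Icc] at ha
          show 3*t+2 - (3*t+2 - a) = a
          omega
        · intro a ha
          simp only [Finset.mem_filter, Finset.mem_range] at ha
          show 3*t+2 - (3*t+2 - a) = a
          omega
        · intro a _
          rfl
    _ = ∑ e ∈ Finset.range (3*t+2), (if e % 3 = 0 then 0 else x^e) := by
        rw [Finset.sum_filter]
        refine Finset.sum_congr rfl fun e _ => ?_
        by_cases h : e % 3 = 0 <;> simp [h]

/-- Frobenius tower lemma. -/
private lemma aux_tower {F : Type*} [Field F] [CharP F 2] (r : ℕ) (w : F)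
    (hw : w ^ 2^r = w + 1) : ∀ t : ℕ, w ^ 2^(r*t) = w + if Even t then 0 else 1 := by
  have h2 : (2:F) = 0 := by
    have := CharP.cast_eq_zero F 2
    simpa using this
  intro t
  induction t with
  | zero => simp
  | succ t ih =>
    rw [show r*(t+1) = r*t + r by ring, pow_add, pow_mul, ih]
    by_cases h : Even t
    · rw [if_pos h, if_neg (by simp [Nat.even_add_one, h]), add_zero, hw]
    · rw [if_neg h, if_pos (by simp [Nat.even_add_one, h]),
        add_pow_char_pow w 1 2 r, one_pow, hw]
      linear_combination h2

private lemma aux_contra {F : Type*} [Field F] [CharP F 2] {k m : ℕ}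
    (hk : Odd k) (hm : Even m) (w : F)
    (hwk : w ^ 2^k = w + 1) (hwm : w ^ 2^m = w + 1) : False := by
  have t1 := aux_tower k w hwk m
  have t2 := aux_tower m w hwm k
  rw [if_pos hm] at t1
  rw [if_neg (Nat.not_even_iff_odd.mpr hk), Nat.mul_comm m k] at t2
  have h01 : (0:F) = 1 := add_left_cancel (t1.symm.trans t2)
  exact zero_ne_one h01

theorem stmt_16 (m k : ℕ) (hm : 0 < m) (hme : Even m) (hk : 0 < k) (hko : Odd k)
    (hgcd : Nat.gcd (2 ^ k + 1) (2 ^ m + 1) = 1) :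
    (∀ x : GaloisField 2 (2 * m), x ^ (2 ^ m + 1) = 1 →
        ∑ j ∈ (Finset.Icc 1 (2 ^ k)).filter (fun j => j % 3 = 0 ∨ j % 3 = 2),
            x ^ (2 ^ k - j) ≠ 0) ∧
      Set.BijOn
        (fun x : GaloisField 2 (2 * m) =>
          (∑ i ∈ (Finset.Icc 1 (2 ^ k)).filter (fun i => i % 3 = 0 ∨ i % 3 = 1),
              x ^ (2 ^ k - i)) /
            (∑ j ∈ (Finset.Icc 1 (2 ^ k)).filter (fun j => j % 3 = 0 ∨ j % 3 = 2),
              x ^ (2 ^ k - j)))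
        {x : GaloisField 2 (2 * m) | x ^ (2 ^ m + 1) = 1}
        {x : GaloisField 2 (2 * m) | x ^ (2 ^ m + 1) = 1} := by
  set F := GaloisField 2 (2 * m) with hF
  have hm2 : 2 * m ≠ 0 := by omega
  haveI : Fintype F := Fintype.ofFinite F
  have hcard : Fintype.card F = 2 ^ (2 * m) := by
    rw [← Nat.card_eq_fintype_card]
    exact GaloisField.card 2 (2*m) hm2
  have h2 : (2 : F) = 0 := by
    have := CharP.cast_eq_zero F 2
    simpa using this
  -- 2^k = 3t + 2
  obtain ⟨t, ht⟩ : ∃ t, 2^k = 3*t + 2 := by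
    obtain ⟨j, hj⟩ := hko
    have h4 : 4^j % 3 = 1 := by
      rw [Nat.pow_mod]
      norm_num
    obtain ⟨s, hs⟩ : ∃ s, 4^j = 3*s + 1 := by
      refine ⟨4^j / 3, ?_⟩
      have h := Nat.div_add_mod (4^j) 3
      rw [h4] at h
      linarith
    refine ⟨2*s, ?_⟩
    have hpk : 2^k = 4^j * 2 := by
      rw [hj, pow_succ, pow_mul]
      norm_num
    rw [hpk, hs]
    ring
  -- gcd of 3 with 2^m+1
  have hgcd3 : Nat.gcd 3 (2^m + 1) = 1 := by
    obtain ⟨j, hj⟩ := hme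
    have h4 : 2^m % 3 = 1 := by
      rw [hj, ← two_mul, pow_mul, Nat.pow_mod]
      norm_num
    obtain ⟨s, hs⟩ : ∃ s, 2^m = 3*s + 1 := by
      refine ⟨2^m / 3, ?_⟩
      have h := Nat.div_add_mod (2^m) 3
      rw [h4] at h
      linarith
    have hmod : (2^m + 1) % 3 = 2 := by
      rw [hs]
      omega
    rw [Nat.gcd_rec, hmod]
    rfl
  -- order argument
  have horder : ∀ (x : F) (a : ℕ), x^(2^m+1) = 1 → x^a = 1 → Nat.gcd a (2^m+1) = 1 → x = 1 := by
    intro x a hU hA hg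
    have d1 := orderOf_dvd_of_pow_eq_one hA
    have d2 := orderOf_dvd_of_pow_eq_one hU
    have hd := Nat.dvd_gcd d1 d2
    rw [hg, Nat.dvd_one] at hd
    exact orderOf_eq_one_iff.mp hd
  -- no nontrivial cube roots of unity in U
  have hcube : ∀ x : F, x^(2^m+1) = 1 → x^2 + x + 1 ≠ 0 := by
    intro x hU hr
    have h3 : x^3 = 1 := by linear_combination (x - 1) * hr
    have hx1 : x = 1 := horder x 3 hU h3 hgcd3
    rw [hx1] at hr
    have : (1:F) = 0 := by linear_combination hr - h2
    exact one_ne_zero this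
  have hgcdK : ∀ x : F, x^(2^m+1) = 1 → x^(2^k)*x = 1 → x = 1 := by
    intro x hU hKx
    have hKx' : x^(2^k+1) = 1 := by rw [pow_succ]; exact hKx
    exact horder x (2^k+1) hU hKx' hgcd
  -- Frobenius expansion of the denominator polynomial
  have hG : ∀ x : F, (x^(2^k) + x + 1)^(2^m) = (x^(2^m))^(2^k) + x^(2^m) + 1 := by
    intro x
    rw [add_pow_char_pow (x^(2^k) + x) 1 2 m, add_pow_char_pow (x^(2^k)) x 2 m, one_pow,
      pow_right_comm]
  -- the denominator polynomial does not vanish on U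
  have hDpne : ∀ x : F, x^(2^m+1) = 1 → x^(2^k) + x + 1 ≠ 0 := by
    intro x hU hD
    have hxq : x^(2^m) * x = 1 := by rw [← pow_succ]; exact hU
    have hq0 : (x^(2^k) + x + 1)^(2^m) = 0 := by
      rw [hD]
      exact zero_pow (by positivity)
    rw [hG x] at hq0
    have e1 : (x^(2^m))^(2^k) * x^(2^k) = 1 := by rw [← mul_pow, hxq, one_pow]
    have hNp : x^(2^k)*x + x^(2^k) + x = 0 := by
      linear_combination (x^(2^k)*x) * hq0 - x * e1 - x^(2^k) * hxq
    have hK1 : x^(2^k) * x = 1 := by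
      linear_combination hNp + hD + (-(x^(2^k)) - x - 1) * h2
    have hx1 := hgcdK x hU hK1
    rw [hx1] at hD
    have : (1:F) = 0 := by linear_combination hD - h2
    exact one_ne_zero this
  -- polynomial forms of the two sums, for x ≠ 1
  have hDS : ∀ x : F, x ≠ 1 →
      (x^2+x+1) * (∑ e ∈ Finset.range (2^k), (if e % 3 = 1 then 0 else x^e))
        = x^(2^k) + x + 1 := by
    intro x hx1
    have hgeo := aux_sumD h2 x t
    rw [← ht] at hgeo
    have hx1' : x + 1 ≠ 0 := fun h => hx1 (by linear_combination h - h2)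
    apply mul_left_cancel₀ hx1'
    linear_combination hgeo +
      ((x^2+x) * (∑ e ∈ Finset.range (2^k), (if e % 3 = 1 then 0 else x^e)) - x) * h2
  have hNS : ∀ x : F, x ≠ 1 →
      (x^2+x+1) * (∑ e ∈ Finset.range (2^k), (if e % 3 = 0 then 0 else x^e))
        = x^(2^k)*x + x^(2^k) + x := by
    intro x hx1
    have hgeo := aux_sumN h2 x t
    rw [← ht] at hgeo
    have hx1' : x + 1 ≠ 0 := fun h => hx1 (by linear_combination h - h2)
    apply mul_left_cancel₀ hx1'
    linear_combination hgeo +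
      ((x^2+x) * (∑ e ∈ Finset.range (2^k), (if e % 3 = 0 then 0 else x^e)) - x^(2^k)*x) * h2
  -- nonvanishing of the denominator sum
  have hDSne : ∀ x : F, x^(2^m+1) = 1 →
      (∑ e ∈ Finset.range (2^k), (if e % 3 = 1 then 0 else x^e)) ≠ 0 := by
    intro x hU
    by_cases hx1 : x = 1
    · rw [hx1]
      simp only [one_pow]
      rw [ht, aux_oneD h2 t]
      exact one_ne_zero
    · intro h0
      apply hDpne x hU
      rw [← hDS x hx1, h0, mul_zero]
  -- the rational map in polynomial form
  have hfeq : ∀ x : F, x^(2^m+1) = 1 →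
      (∑ e ∈ Finset.range (2^k), (if e % 3 = 0 then 0 else x^e)) /
        (∑ e ∈ Finset.range (2^k), (if e % 3 = 1 then 0 else x^e))
        = (x^(2^k)*x + x^(2^k) + x) / (x^(2^k) + x + 1) := by
    intro x hU
    by_cases hx1 : x = 1
    · rw [hx1]
      simp only [one_pow]
      rw [ht, aux_oneN h2 t, aux_oneD h2 t,
        show (1:F)*1 + 1 + 1 = 1 by linear_combination h2,
        show (1:F) + 1 + 1 = 1 by linear_combination h2]
    · rw [← mul_div_mul_left _ _ (hcube x hU), hNS x hx1, hDS x hx1]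
  -- the polynomial map sends U to U
  have hMaps : ∀ x : F, x^(2^m+1) = 1 →
      ((x^(2^k)*x + x^(2^k) + x) / (x^(2^k) + x + 1))^(2^m+1) = 1 := by
    intro x hU
    have hDne := hDpne x hU
    have hxq : x^(2^m) * x = 1 := by rw [← pow_succ]; exact hU
    have e1 : (x^(2^m))^(2^k) * x^(2^k) = 1 := by rw [← mul_pow, hxq, one_pow]
    have hNp : x^(2^k)*x + x^(2^k) + x = (x^(2^k)*x) * (x^(2^k)+x+1)^(2^m) := by
      rw [hG x]
      linear_combination -x * e1 - x^(2^k) * hxq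
    have hx1p : (x^(2^k)*x)^(2^m+1) = 1 := by
      rw [mul_pow, pow_right_comm, hU, one_pow, one_mul]
    have hcardF : (x^(2^k)+x+1)^(2^m * 2^m) = x^(2^k)+x+1 := by
      have hpc := FiniteField.pow_card (x^(2^k)+x+1)
      rw [hcard] at hpc
      have h2m : 2^m * 2^m = 2^(2*m) := by rw [← pow_add, two_mul]
      rw [h2m]
      exact hpc
    have hnum : ((x^(2^k)+x+1)^(2^m))^(2^m+1) = (x^(2^k)+x+1)^(2^m+1) := by
      rw [← pow_mul, show 2^m * (2^m+1) = 2^m*2^m + 2^m by ring, pow_add, hcardF]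
      ring
    rw [div_pow, hNp, mul_pow, hx1p, one_mul, hnum]
    exact div_self (pow_ne_zero _ hDne)
  -- injectivity of the polynomial map on U
  have hInj : ∀ x : F, x^(2^m+1) = 1 → ∀ y : F, y^(2^m+1) = 1 →
      (x^(2^k)*x + x^(2^k) + x) / (x^(2^k) + x + 1)
        = (y^(2^k)*y + y^(2^k) + y) / (y^(2^k) + y + 1) → x = y := by
    intro x hx y hy hxy
    by_contra hne
    have hp : x + y ≠ 0 := fun h => hne (by linear_combination h - y*h2)
    have hE : (x^(2^k)*x + x^(2^k) + x) * (y^(2^k)+y+1)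
        = (y^(2^k)*y + y^(2^k) + y) * (x^(2^k)+x+1) :=
      (div_eq_div_iff (hDpne x hx) (hDpne y hy)).mp hxy
    have hxq : x^(2^m) * x = 1 := by rw [← pow_succ]; exact hx
    have hyq : y^(2^m) * y = 1 := by rw [← pow_succ]; exact hy
    have hwK : ((x*y + x + 1)/(x+y)) ^ 2^k = (x*y + x + 1)/(x+y) + 1 := by
      rw [div_pow, div_add_one hp, div_eq_div_iff (pow_ne_zero _ hp) hp,
        add_pow_char_pow (x*y + x) 1 2 k, add_pow_char_pow (x*y) x 2 k, mul_pow, one_pow,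
        add_pow_char_pow x y 2 k]
      linear_combination hE +
        (-(x^(2^k)) + y + y*(x^(2^k))*(y^(2^k)) - x*(y^(2^k)) - x*(x^(2^k))
          - x*y*(x^(2^k))) * h2
    have hwq : ((x*y + x + 1)/(x+y)) ^ 2^m = (x*y + x + 1)/(x+y) + 1 := by
      rw [div_pow, div_add_one hp, div_eq_div_iff (pow_ne_zero _ hp) hp,
        add_pow_char_pow (x*y + x) 1 2 m, add_pow_char_pow (x*y) x 2 m, mul_pow, one_pow,
        add_pow_char_pow x y 2 m]
      linear_combination (y^(2^m) - y - 1) * hxq + (x^(2^m) - x - 1) * hyq +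
        (-1 - x*(y^(2^m))) * h2
    exact aux_contra hko hme ((x*y + x + 1)/(x+y)) hwK hwq
  -- assemble
  constructor
  · intro x hx
    rw [aux_convD x (2^k) t ht]
    exact hDSne x hx
  · set U : Set F := {x : F | x ^ (2 ^ m + 1) = 1} with hU
    set g : F → F := fun x => (x^(2^k)*x + x^(2^k) + x) / (x^(2^k) + x + 1) with hg
    have hEq : Set.EqOn
        (fun x : F =>
          (∑ i ∈ (Finset.Icc 1 (2 ^ k)).filter (fun i => i % 3 = 0 ∨ i % 3 = 1),
              x ^ (2 ^ k - i)) /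
            (∑ j ∈ (Finset.Icc 1 (2 ^ k)).filter (fun j => j % 3 = 0 ∨ j % 3 = 2),
              x ^ (2 ^ k - j))) g U := by
      intro x hx
      simp only [hg]
      rw [aux_convN x (2^k) t ht, aux_convD x (2^k) t ht]
      exact hfeq x hx
    have hMapsTo : Set.MapsTo g U U := fun x hx => hMaps x hx
    have hInjOn : Set.InjOn g U := fun x hx y hy hxy => hInj x hx y hy hxy
    have hBij : Set.BijOn g U U :=
      (Set.Finite.injOn_iff_bijOn_of_mapsTo (Set.toFinite U) hMapsTo).mp hInjOn
    exact hBij.congr hEq.symm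
end
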